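/- arXiv:0909.0615 — 14 statements merged into one kernel-verified Lean document; each statement's English description precedes it below -/
import Mathlib

section
/- Let D be a division ring, a ∈ ℤ, and x, y units of D such that 1 + y^a ≠ 0. Define x' = x y x⁻¹ and y' = (1 + y^a) x⁻¹ (both units of D). Then x' y' (x')⁻¹ (y')⁻¹ = x y x⁻¹ y⁻¹; that is, the Kontsevich mutation T_a : (x,y) ↦ (x y x⁻¹, (1+y^a)x⁻¹) preserves the commutator C = x y x⁻¹ y⁻¹. -/
/-- The Kontsevich mutation `T_a : (x,y) ↦ (x y x⁻¹, (1+yᵃ) x⁻¹)` preserves the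
commutator `C = x y x⁻¹ y⁻¹`. -/
theorem kontsevich_mutation_preserves_commutator {D : Type*} [DivisionRing D]
    (a : ℤ) (x y : Dˣ) (h : (1 : D) + ((y ^ a : Dˣ) : D) ≠ 0) :
    ((x * y * x⁻¹ : Dˣ) : D) * ((1 + ((y ^ a : Dˣ) : D)) * ((x⁻¹ : Dˣ) : D)) *
      ((x * y * x⁻¹ : Dˣ) : D)⁻¹ * ((1 + ((y ^ a : Dˣ) : D)) * ((x⁻¹ : Dˣ) : D))⁻¹ =
    (x : D) * (y : D) * ((x⁻¹ : Dˣ) : D) * ((y⁻¹ : Dˣ) : D) := by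
  set U : Dˣ := Units.mk0 _ h with hU
  have hc : Commute U y := by
    have : Commute ((y ^ a : Dˣ) : D) (y : D) := by
      exact_mod_cast (((Commute.refl y).zpow_left a)).units_val
    ext
    simpa [hU, add_mul, mul_add] using this.eq
  have h2 : U * y⁻¹ * U⁻¹ = y⁻¹ := by rw [hc.inv_right.eq]; group
  have key : (x * y * x⁻¹) * (U * x⁻¹) * (x * y * x⁻¹)⁻¹ * (U * x⁻¹)⁻¹
      = x * y * x⁻¹ * y⁻¹ := by
    have e : (x * y * x⁻¹) * (U * x⁻¹) * (x * y * x⁻¹)⁻¹ * (U * x⁻¹)⁻¹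
        = x * y * x⁻¹ * (U * y⁻¹ * U⁻¹) := by group
    rw [e, h2]
  have := congrArg (Units.val) key
  simpa [hU, mul_assoc] using this
end

section
/- Let D be a division ring and R : ℤ → Dˣ a sequence of units such that for every n ∈ ℤ the element R_{n+1} R_n⁻¹ R_{n-1} commutes with R_n. Then the quantity C_n := R_{n+1}⁻¹ R_n R_{n+1} R_n⁻¹ is independent of n, i.e. C_n = C_m for all n, m ∈ ℤ. In particular, the commutator C is a conserved quantity of every discrete evolution of the form R_{n+1} R_n⁻¹ R_{n-1} = f_n(R_n) with f_n(R_n) commuting with R_n. -/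
/-!
`C_n` is the group commutator `⁅R_{n+1}⁻¹, R_n⁆` in `Dˣ`. Write `x = R_{n+1} R_n⁻¹ R_{n-1}`,
so that `R_{n+1} = x R_{n-1}⁻¹ R_n`. Substituting, the conjugation of `R_n` by `R_{n+1}` becomes
conjugation of `R_n` by `x` — which is trivial since `x` commutes with `R_n` — followed by
conjugation by `R_{n-1}`. Hence `C_n = C_{n-1}`, so `C` is `1`-periodic on `ℤ` and therefore
constant.
-/

open scoped commutatorElement

section Group

variable {G : Type*} [Group G]

theorem commutatorElement_inv_eq_of_commute {a b c : G} (h : Commute (c * b⁻¹ * a) b) :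
    ⁅c⁻¹, b⁆ = ⁅b⁻¹, a⁆ := by
  set x := c * b⁻¹ * a
  have hc : c = x * a⁻¹ * b := by simp only [x]; group
  have hxb : x⁻¹ * b * x = b := by rw [h.inv_left.eq, inv_mul_cancel_right]
  calc ⁅c⁻¹, b⁆ = b⁻¹ * a * (x⁻¹ * b * x) * a⁻¹ := by rw [commutatorElement_def, hc]; group
    _ = ⁅b⁻¹, a⁆ := by rw [hxb, commutatorElement_def, inv_inv]

theorem commutatorElement_seq_periodic {R : ℤ → G}
    (h : ∀ n, Commute (R (n + 1) * (R n)⁻¹ * R (n - 1)) (R n)) :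
    Function.Periodic (fun n => ⁅(R (n + 1))⁻¹, R n⁆) 1 := fun n => by
  simpa using commutatorElement_inv_eq_of_commute (h (n + 1))

theorem commutatorElement_seq_eq {R : ℤ → G}
    (h : ∀ n, Commute (R (n + 1) * (R n)⁻¹ * R (n - 1)) (R n)) (n m : ℤ) :
    ⁅(R (n + 1))⁻¹, R n⁆ = ⁅(R (m + 1))⁻¹, R m⁆ := by
  have hC := commutatorElement_seq_periodic h
  simpa using (hC.int_mul_eq n).trans (hC.int_mul_eq m).symm

end Group

/-- If for every `n` the element `R_{n+1} R_n⁻¹ R_{n-1}` commutes with `R_n`, then the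
commutator `C_n = R_{n+1}⁻¹ R_n R_{n+1} R_n⁻¹` is a conserved quantity (independent of `n`). -/
theorem commutator_conserved {D : Type*} [DivisionRing D] (R : ℤ → Dˣ)
    (h : ∀ n : ℤ,
      Commute ((R (n + 1) : D) * ((R n)⁻¹ : Dˣ) * (R (n - 1) : D)) ((R n : D))) :
    ∀ n m : ℤ,
      (((R (n + 1))⁻¹ : Dˣ) : D) * (R n : D) * (R (n + 1) : D) * (((R n)⁻¹ : Dˣ) : D) =
      (((R (m + 1))⁻¹ : Dˣ) : D) * (R m : D) * (R (m + 1) : D) * (((R m)⁻¹ : Dˣ) : D) := by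
  have hR : ∀ n, Commute (R (n + 1) * (R n)⁻¹ * R (n - 1)) (R n) := fun n =>
    Commute.units_val_iff.mp (by simpa only [Units.val_mul] using h n)
  intro n m
  simpa only [commutatorElement_def, inv_inv, Units.val_mul] using
    congrArg Units.val (commutatorElement_seq_eq hR n m)
end

section
/- Let D be a division ring, b, c positive integers, and (R, C) a solution in D of the non-commutative (b,c)-system with commutator C. Let op : D → Dᵐᵒᵖ be the canonical anti-isomorphism onto the multiplicative opposite ring. Then the sequence S : ℤ → (Dᵐᵒᵖ)ˣ defined by S_n := op(R_{1-n}) is a solution in Dᵐᵒᵖ of the non-commutative (c,b)-system with commutator op(C), and its initial values are S₀ = op(R₁) and S₁ = op(R₀). (This is the precise form of the symmetry f_{-n}^{(c,b)}(x,y) = (f_{n+1}^{(b,c)}(x,y))^* relating solutions at negative and positive indices.) -/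
/-- A solution of the non-commutative `(b,c)`-system with commutator `C`. -/
def IsBCSolution {D : Type*} [DivisionRing D] (b c : ℕ) (R : ℤ → Dˣ) (C : Dˣ) : Prop :=
  (∀ n : ℤ, (C : D) =
      (((R (n + 1))⁻¹ : Dˣ) : D) * (R n : D) * (R (n + 1) : D) * (((R n)⁻¹ : Dˣ) : D)) ∧
  (∀ n : ℤ, Odd n → (R (n + 1) : D) * (C : D) * (R (n - 1) : D) = 1 + (R n : D) ^ b) ∧
  (∀ n : ℤ, Even n → (R (n + 1) : D) * (C : D) * (R (n - 1) : D) = 1 + (R n : D) ^ c)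

/-- The unit of the multiplicative opposite ring corresponding to a unit `u`. -/
def opUnit {D : Type*} [Monoid D] (u : Dˣ) : (Dᵐᵒᵖ)ˣ where
  val := MulOpposite.op (u : D)
  inv := MulOpposite.op ((u⁻¹ : Dˣ) : D)
  val_inv := by rw [← MulOpposite.op_mul, ← MulOpposite.op_one]; simp
  inv_val := by rw [← MulOpposite.op_mul, ← MulOpposite.op_one]; simp

lemma opUnit_val {D : Type*} [Monoid D] (u : Dˣ) :
    ((opUnit u : (Dᵐᵒᵖ)ˣ) : Dᵐᵒᵖ) = MulOpposite.op (u : D) := rfl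

lemma opUnit_inv_val {D : Type*} [Monoid D] (u : Dˣ) :
    (((opUnit u)⁻¹ : (Dᵐᵒᵖ)ˣ) : Dᵐᵒᵖ) = MulOpposite.op ((u⁻¹ : Dˣ) : D) := rfl

/-- The anti-automorphism symmetry: if `R` solves the `(b,c)`-system in `D` with commutator
`C`, then `S_n := op (R_{1-n})` solves the `(c,b)`-system in the opposite ring `Dᵐᵒᵖ`
with commutator `op C`, with initial values `S₀ = op R₁` and `S₁ = op R₀`. -/
theorem op_reverse_is_cb_solution {D : Type*} [DivisionRing D] (b c : ℕ)
    (hb : 0 < b) (hc : 0 < c) (R : ℤ → Dˣ) (C : Dˣ)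
    (h : IsBCSolution b c R C) :
    IsBCSolution c b (fun n => opUnit (R (1 - n))) (opUnit C) ∧
      (fun n : ℤ => opUnit (R (1 - n))) 0 = opUnit (R 1) ∧
      (fun n : ℤ => opUnit (R (1 - n))) 1 = opUnit (R 0) := by
  obtain ⟨h1, h2, h3⟩ := h
  refine ⟨⟨fun n => ?_, fun n hn => ?_, fun n hn => ?_⟩, rfl, rfl⟩
  · -- commutator condition
    have key := h1 (-n)
    have e1 : (1 : ℤ) - (n + 1) = -n := by ring
    have e2 : (-n : ℤ) + 1 = 1 - n := by ring
    rw [e2] at key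
    simp only [opUnit_val, opUnit_inv_val, ← MulOpposite.op_mul, e1,
      MulOpposite.op_inj]
    rw [key]
    simp [mul_assoc]
  · -- odd n : use the even rule of the original system
    have hm : Even (1 - n) := by
      obtain ⟨k, hk⟩ := hn; exact ⟨-k, by omega⟩
    have key := h3 (1 - n) hm
    have e1 : (1 : ℤ) - (n + 1) = -n := by ring
    have e2 : (1 : ℤ) - (n - 1) = 2 - n := by ring
    have e3 : (1 : ℤ) - n + 1 = 2 - n := by ring
    have e4 : (1 : ℤ) - n - 1 = -n := by ring
    rw [e3, e4] at key
    simp only [opUnit_val, e1, e2, ← MulOpposite.op_mul, ← MulOpposite.op_pow,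
      ← MulOpposite.op_one, ← MulOpposite.op_add, MulOpposite.op_inj]
    rw [← key]; rw [mul_assoc]
  · -- even n : use the odd rule of the original system
    have hm : Odd (1 - n) := by
      obtain ⟨k, hk⟩ := hn; exact ⟨-k, by omega⟩
    have key := h2 (1 - n) hm
    have e1 : (1 : ℤ) - (n + 1) = -n := by ring
    have e2 : (1 : ℤ) - (n - 1) = 2 - n := by ring
    have e3 : (1 : ℤ) - n + 1 = 2 - n := by ring
    have e4 : (1 : ℤ) - n - 1 = -n := by ring
    rw [e3, e4] at key
    simp only [opUnit_val, e1, e2, ← MulOpposite.op_mul, ← MulOpposite.op_pow,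
      ← MulOpposite.op_one, ← MulOpposite.op_add, MulOpposite.op_inj]
    rw [← key]; rw [mul_assoc]
end

section
/- Let D be a division ring and (R, C) a solution of the non-commutative (2,2)-system with commutator C, i.e. R : ℤ → Dˣ, C ∈ Dˣ, C = R_{n+1}⁻¹ R_n R_{n+1} R_n⁻¹ and R_{n+1} C R_{n-1} = R_n² + 1 for all n ∈ ℤ. Then the quantity K_n := R_{n+1} R_n⁻¹ + R_{n+1}⁻¹ R_n⁻¹ + R_{n+1}⁻¹ R_n is independent of n: K_n = K_m for all n, m ∈ ℤ. -/
/-! Once `C` is eliminated, the system says `R_{n+2} R_{n+1}⁻¹ R_n R_{n+1} = R_{n+1}² + 1`, i.e.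
`R_{n+2} R_{n+1}⁻¹ = (R_{n+1} + R_{n+1}⁻¹) R_n⁻¹`. This is exactly the first term of `K_{n+1}`
expressed through the first two terms of `K_n`, and multiplying it on the left by `R_{n+2}⁻¹`
turns the last two terms of `K_{n+1}` into the last term of `K_n`. -/

/-- A solution of the non-commutative `(2,2)`-system with commutator `C`:
`C = R_{n+1}⁻¹ R_n R_{n+1} R_n⁻¹` and `R_{n+1} C R_{n-1} = R_n² + 1` for all `n ∈ ℤ`. -/
def IsTwoTwoSolution {D : Type*} [DivisionRing D] (R : ℤ → Dˣ) (C : Dˣ) : Prop :=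
  (∀ n : ℤ, (C : D) =
      (((R (n + 1))⁻¹ : Dˣ) : D) * (R n : D) * (R (n + 1) : D) * (((R n)⁻¹ : Dˣ) : D)) ∧
  (∀ n : ℤ, (R (n + 1) : D) * (C : D) * (R (n - 1) : D) = (R n : D) ^ 2 + 1)

section Semiring

variable {M : Type*} [Semiring M]

/-- `K_n = twoTwoK (R n) (R (n + 1))`. -/
def twoTwoK (a b : Mˣ) : M :=
  b * ↑a⁻¹ + ↑b⁻¹ * ↑a⁻¹ + ↑b⁻¹ * a

theorem mul_inv_eq_of_mul_inv_mul_mul_eq_sq_add_one {a b e : Mˣ}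
    (h : (e : M) * ↑b⁻¹ * a * b = b ^ 2 + 1) :
    (e : M) * ↑b⁻¹ = (b + ↑b⁻¹) * ↑a⁻¹ := by
  calc (e : M) * ↑b⁻¹ = e * ↑b⁻¹ * a * b * ↑b⁻¹ * ↑a⁻¹ := by simp [mul_assoc]
    _ = (b + ↑b⁻¹) * ↑a⁻¹ := by rw [h, sq, add_mul, add_mul]; simp [mul_assoc, add_mul]

theorem twoTwoK_eq_of_mul_inv_mul_mul_eq_sq_add_one {a b e : Mˣ}
    (h : (e : M) * ↑b⁻¹ * a * b = b ^ 2 + 1) :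
    twoTwoK b e = twoTwoK a b := by
  have hfirst := mul_inv_eq_of_mul_inv_mul_mul_eq_sq_add_one h
  have hlast : (↑e⁻¹ : M) * (↑b⁻¹ + b) = ↑b⁻¹ * a := by
    calc (↑e⁻¹ : M) * (↑b⁻¹ + b) = ↑e⁻¹ * (e * ↑b⁻¹) * a := by
          rw [hfirst, add_comm, mul_assoc _ _ (a : M)]; simp
      _ = ↑b⁻¹ * a := by simp [← mul_assoc]
  rw [twoTwoK, twoTwoK, hfirst, add_assoc, ← mul_add, hlast, add_mul]

end Semiring

namespace IsTwoTwoSolution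

variable {D : Type*} [DivisionRing D] {R : ℤ → Dˣ} {C : Dˣ}

theorem mul_inv_mul_mul_eq_sq_add_one (h : IsTwoTwoSolution R C) (n : ℤ) :
    (R (n + 1 + 1) : D) * ↑(R (n + 1))⁻¹ * R n * R (n + 1) = R (n + 1) ^ 2 + 1 := by
  have hrec := h.2 (n + 1)
  rw [add_sub_cancel_right, h.1 n] at hrec
  rw [← hrec]
  simp [mul_assoc]

theorem twoTwoK_succ (h : IsTwoTwoSolution R C) (n : ℤ) :
    twoTwoK (R (n + 1)) (R (n + 1 + 1)) = twoTwoK (R n) (R (n + 1)) :=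
  twoTwoK_eq_of_mul_inv_mul_mul_eq_sq_add_one (h.mul_inv_mul_mul_eq_sq_add_one n)

end IsTwoTwoSolution

/-- For the `(2,2)`-system, `K_n = R_{n+1} R_n⁻¹ + R_{n+1}⁻¹ R_n⁻¹ + R_{n+1}⁻¹ R_n`
is a conserved quantity. -/
theorem twotwo_K_conserved {D : Type*} [DivisionRing D] (R : ℤ → Dˣ) (C : Dˣ)
    (h : IsTwoTwoSolution R C) :
    ∀ n m : ℤ,
      (R (n + 1) : D) * (((R n)⁻¹ : Dˣ) : D) +
        (((R (n + 1))⁻¹ : Dˣ) : D) * (((R n)⁻¹ : Dˣ) : D) +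
        (((R (n + 1))⁻¹ : Dˣ) : D) * (R n : D) =
      (R (m + 1) : D) * (((R m)⁻¹ : Dˣ) : D) +
        (((R (m + 1))⁻¹ : Dˣ) : D) * (((R m)⁻¹ : Dˣ) : D) +
        (((R (m + 1))⁻¹ : Dˣ) : D) * (R m : D) := by
  have hperiodic : Function.Periodic (fun n => twoTwoK (R n) (R (n + 1))) 1 :=
    fun n => h.twoTwoK_succ n
  intro n m
  have hn := hperiodic.int_mul_eq n
  have hm := hperiodic.int_mul_eq m
  simp only [mul_one] at hn hm
  exact hn.trans hm.symm
end

section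
/- Let D be a division ring, x, y ∈ Dˣ, and (R, C) a solution of the non-commutative (2,2)-system with commutator C and initial data C = x y x⁻¹ y⁻¹, R₀ = y x y⁻¹, R₁ = y. Define the weights y₁ = y² x⁻¹ y⁻¹, y₂ = x⁻¹ y⁻¹, y₃ = x y⁻¹, and let T be the 4×4 matrix over D (rows and columns indexed by 0,1,2,3) with entries T_{0,1} = T_{1,2} = T_{2,3} = 1, T_{1,0} = y₁, T_{2,1} = y₂, T_{3,2} = y₃, and all other entries 0. Then for all n ≥ 0, R_n = (T^{2n})_{0,0} · R₀. Equivalently, R_n R₀⁻¹ is the partition function of paths of length 2n from vertex 0 to itself on the segment [0,3], with weight 1 per ascending step i → i+1, weight y_i per descending step i → i−1, and total weight the left-to-right ordered product of step weights. -/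
/-!
Both sides satisfy the left-linear recurrence `u (n + 2) = (y₁ + y₂ + y₃) u (n + 1) - C u n`
and agree for `n = 0, 1`. For the path model this is a Cayley–Hamilton identity for row `0` of
`T²`, together with `y₃ y₁ = C`. For the solution, `Q n = (R (n + 1) + C R (n - 1)) R n⁻¹` is
conserved by the system, and the initial data give `Q 1 = y₁ + y₂ + y₃`.
-/

open Matrix

section PathMatrix

variable {A : Type*} [Ring A] (a b c : A)

def pathMatrix : Matrix (Fin 4) (Fin 4) A :=
  !![0, 1, 0, 0;
     a, 0, 1, 0;
     0, b, 0, 1;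
     0, 0, c, 0]

lemma pathMatrix_sq :
    pathMatrix a b c ^ 2 =
      !![a, 0, 1, 0;
         0, a + b, 0, 1;
         b * a, 0, b + c, 0;
         0, c * b, 0, c] := by
  ext i j
  fin_cases i <;> fin_cases j <;> simp [sq, pathMatrix, mul_apply, Fin.sum_univ_four]

lemma pathMatrix_pow_four_sub_apply_zero (k : Fin 4) :
    (pathMatrix a b c ^ 4 - (a + b + c) • pathMatrix a b c ^ 2 + (c * a) • 1 :
      Matrix (Fin 4) (Fin 4) A) 0 k = 0 := by
  rw [show pathMatrix a b c ^ 4 = pathMatrix a b c ^ 2 * pathMatrix a b c ^ 2 by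
    rw [← pow_add], pathMatrix_sq]
  fin_cases k <;> simp [add_mul, add_assoc]

lemma pathMatrix_pow_two_mul_add_two_apply_zero_zero (n : ℕ) :
    (pathMatrix a b c ^ (2 * (n + 2))) 0 0 =
      (a + b + c) * (pathMatrix a b c ^ (2 * (n + 1))) 0 0
        - c * a * (pathMatrix a b c ^ (2 * n)) 0 0 := by
  set T := pathMatrix a b c
  have hprod : (T ^ 4 - (a + b + c) • T ^ 2 + (c * a) • 1) * T ^ (2 * n) =
      T ^ (2 * (n + 2)) - (a + b + c) • T ^ (2 * (n + 1)) + (c * a) • T ^ (2 * n) := by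
    simp only [add_mul, sub_mul, smul_mul, one_mul, ← pow_add]
    ring_nf
  have hzero : ((T ^ 4 - (a + b + c) • T ^ 2 + (c * a) • 1) * T ^ (2 * n) :
      Matrix (Fin 4) (Fin 4) A) 0 0 = 0 := by
    rw [mul_apply]
    exact Finset.sum_eq_zero fun k _ => by rw [pathMatrix_pow_four_sub_apply_zero, zero_mul]
  rw [hprod] at hzero
  simp only [Matrix.add_apply, Matrix.sub_apply, Matrix.smul_apply, smul_eq_mul] at hzero
  rw [← sub_eq_zero, ← hzero]
  abel

end PathMatrix

def twoTwoConservedQuantity {D : Type*} [DivisionRing D] (R : ℤ → Dˣ) (C : Dˣ) (n : ℤ) : D :=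
  ((R (n + 1) : D) + C * R (n - 1)) * ((R n)⁻¹ : Dˣ)

namespace IsTwoTwoSolution

variable {D : Type*} [DivisionRing D] {R : ℤ → Dˣ} {C : Dˣ}

lemma mul_eq_inv_mul_mul (h : IsTwoTwoSolution R C) (n : ℤ) :
    (C : D) * R n = ((R (n + 1))⁻¹ : Dˣ) * R n * R (n + 1) := by
  rw [h.1 n]
  simp

lemma conservedQuantity_succ (h : IsTwoTwoSolution R C) (n : ℤ) :
    twoTwoConservedQuantity R C (n + 1) = twoTwoConservedQuantity R C n := by
  have hcomm := h.mul_eq_inv_mul_mul n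
  have hnext := h.2 (n + 1)
  have hcur := h.2 n
  rw [add_sub_cancel_right, add_assoc, one_add_one_eq_two] at hnext
  unfold twoTwoConservedQuantity
  rw [add_sub_cancel_right, add_assoc, one_add_one_eq_two]
  set r := R (n - 1)
  set a := R n
  set b := R (n + 1)
  set c := R (n + 2)
  have hleft : (c : D) * ↑b⁻¹ * a = b + ↑b⁻¹ :=
    calc (c : D) * ↑b⁻¹ * a = c * (↑b⁻¹ * a * b) * ↑b⁻¹ := by simp [mul_assoc]
      _ = (b ^ 2 + 1) * ↑b⁻¹ := by rw [← hcomm, ← mul_assoc, hnext]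
      _ = b + ↑b⁻¹ := by simp [sq, add_mul]
  have hright : (C : D) * a * ↑b⁻¹ * a = ↑b⁻¹ * a ^ 2 := by
    rw [hcomm]
    simp [sq, mul_assoc]
  have key : ((c : D) + C * a) * ↑b⁻¹ * a = b + C * r :=
    calc ((c : D) + C * a) * ↑b⁻¹ * a = c * ↑b⁻¹ * a + C * a * ↑b⁻¹ * a := by noncomm_ring
      _ = b + ↑b⁻¹ * (a ^ 2 + 1) := by rw [hleft, hright]; noncomm_ring
      _ = b + C * r := by rw [← hcur]; simp [mul_assoc]
  rw [← key]
  simp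

lemma conservedQuantity_eq (h : IsTwoTwoSolution R C) (m n : ℤ) :
    twoTwoConservedQuantity R C n = twoTwoConservedQuantity R C m := by
  suffices ∀ n, twoTwoConservedQuantity R C n = twoTwoConservedQuantity R C 0 by
    rw [this n, this m]
  intro n
  induction n using Int.induction_on with
  | zero => rfl
  | succ i ih => rw [h.conservedQuantity_succ, ih]
  | pred i ih => rw [← ih, ← h.conservedQuantity_succ, sub_add_cancel]

lemma add_mul_eq_conservedQuantity_mul (h : IsTwoTwoSolution R C) (m n : ℤ) :
    (R (n + 1) : D) + C * R (n - 1) = twoTwoConservedQuantity R C m * R n := by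
  rw [← h.conservedQuantity_eq m n, twoTwoConservedQuantity]
  simp

lemma conservedQuantity_one_eq (h : IsTwoTwoSolution R C) {x y : Dˣ}
    (hC : C = x * y * x⁻¹ * y⁻¹) (hR0 : R 0 = y * x * y⁻¹) (hR1 : R 1 = y) :
    twoTwoConservedQuantity R C 1 =
      (y : D) ^ 2 * ((x⁻¹ : Dˣ) : D) * ((y⁻¹ : Dˣ) : D) + ((x⁻¹ : Dˣ) : D) * ((y⁻¹ : Dˣ) : D)
        + (x : D) * ((y⁻¹ : Dˣ) : D) := by
  have hCR0 : (C : D) * R 0 = x := by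
    rw [← Units.val_mul, hC, hR0]
    congr 1
    group
  have hR2 : (R 2 : D) = ((y : D) ^ 2 + 1) * ((x⁻¹ : Dˣ) : D) := by
    have h21 := h.2 1
    norm_num at h21
    rw [← hR1, ← h21, mul_assoc (R 2 : D), hCR0, Units.mul_inv_cancel_right]
  rw [twoTwoConservedQuantity, sub_self, hR1, show (1 + 1 : ℤ) = 2 from rfl, hR2, hCR0]
  noncomm_ring

end IsTwoTwoSolution

/-- Path model for the `(2,2)`-system: with initial data `C = x y x⁻¹ y⁻¹`, `R₀ = y x y⁻¹`,
`R₁ = y`, and transfer matrix `T` on the segment `[0,3]` with weight `1` per ascending step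
and weights `y₁ = y² x⁻¹ y⁻¹`, `y₂ = x⁻¹ y⁻¹`, `y₃ = x y⁻¹` per descending step,
one has `R_n = (T^{2n})_{0,0} · R₀` for all `n ≥ 0`. -/
theorem twotwo_path_model {D : Type*} [DivisionRing D] (x y : Dˣ) (R : ℤ → Dˣ) (C : Dˣ)
    (h : IsTwoTwoSolution R C)
    (hC : C = x * y * x⁻¹ * y⁻¹) (hR0 : R 0 = y * x * y⁻¹) (hR1 : R 1 = y) :
    ∀ n : ℕ,
      (R (n : ℤ) : D) =
        ((!![0, 1, 0, 0;
             (y : D) ^ 2 * ((x⁻¹ : Dˣ) : D) * ((y⁻¹ : Dˣ) : D), 0, 1, 0;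
             0, ((x⁻¹ : Dˣ) : D) * ((y⁻¹ : Dˣ) : D), 0, 1;
             0, 0, (x : D) * ((y⁻¹ : Dˣ) : D), 0] : Matrix (Fin 4) (Fin 4) D) ^ (2 * n)) 0 0 *
          (R 0 : D) := by
  set w₁ : D := (y : D) ^ 2 * ((x⁻¹ : Dˣ) : D) * ((y⁻¹ : Dˣ) : D)
  set w₂ : D := ((x⁻¹ : Dˣ) : D) * ((y⁻¹ : Dˣ) : D)
  set w₃ : D := (x : D) * ((y⁻¹ : Dˣ) : D)
  have hQ : twoTwoConservedQuantity R C 1 = w₁ + w₂ + w₃ := h.conservedQuantity_one_eq hC hR0 hR1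
  have hC' : w₃ * w₁ = C := by
    simp only [w₁, w₃, hC, ← Units.val_pow_eq_pow_val, ← Units.val_mul]
    congr 1
    group
  have hR1' : w₁ * R 0 = R 1 := by
    simp only [w₁, hR0, hR1, ← Units.val_pow_eq_pow_val, ← Units.val_mul]
    congr 1
    group
  change ∀ n : ℕ, (R n : D) = (pathMatrix w₁ w₂ w₃ ^ (2 * n)) 0 0 * R 0
  intro n
  induction n using Nat.twoStepInduction with
  | zero => simp
  | one => simp [pathMatrix_sq, hR1']
  | more n ih₀ ih₁ =>
    have hR := h.add_mul_eq_conservedQuantity_mul 1 (n + 1)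
    push_cast at ih₁ ⊢
    rw [hQ, add_sub_cancel_right, add_assoc, one_add_one_eq_two] at hR
    rw [pathMatrix_pow_two_mul_add_two_apply_zero_zero, hC', sub_mul, mul_assoc, mul_assoc,
      ← ih₀, ← ih₁, ← hR, add_sub_cancel_right]
end

section
/- Let D be a division ring, x, y ∈ Dˣ, and (R, C) a solution of the non-commutative (2,2)-system with commutator C and initial data C = x y x⁻¹ y⁻¹, R₀ = y x y⁻¹, R₁ = y. Then for all n ≥ 0, R_n belongs to the subsemiring of D generated by {x, x⁻¹, y, y⁻¹}; that is, R_n is a non-commutative Laurent polynomial in x and y with non-negative integer coefficients. -/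
/-- Positivity for the `(2,2)`-system, non-negative indices: with initial data
`C = x y x⁻¹ y⁻¹`, `R₀ = y x y⁻¹`, `R₁ = y`, every `R_n` with `n ≥ 0` is a non-commutative
Laurent polynomial in `x, y` with non-negative integer coefficients, i.e. it lies in the
subsemiring of `D` generated by `{x, x⁻¹, y, y⁻¹}`. -/
theorem twotwo_positivity_nonneg {D : Type*} [DivisionRing D] (x y : Dˣ) (R : ℤ → Dˣ)
    (C : Dˣ) (h : IsTwoTwoSolution R C)
    (hC : C = x * y * x⁻¹ * y⁻¹) (hR0 : R 0 = y * x * y⁻¹) (hR1 : R 1 = y) :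
    ∀ n : ℤ, 0 ≤ n →
      (R n : D) ∈ Subsemiring.closure
        ({(x : D), ((x⁻¹ : Dˣ) : D), (y : D), ((y⁻¹ : Dˣ) : D)} : Set D) := by
  obtain ⟨h1, h2⟩ := h
  -- the commutator relation at the level of units
  have hCu : ∀ n : ℤ, C = (R (n+1))⁻¹ * R n * R (n+1) * (R n)⁻¹ := fun n =>
    Units.ext (by simpa using h1 n)
  have e1 : ∀ n : ℤ, R (n+1) * C = R n * R (n+1) * (R n)⁻¹ := fun n => by
    rw [hCu n]; group
  have e2u : ∀ n : ℤ, (R (n+1))⁻¹ * (R n)⁻¹ * R (n+1) = (R n)⁻¹ * C⁻¹ := fun n => by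
    rw [hCu n]; group
  have e3u : ∀ n : ℤ, R (n+1) * (R n)⁻¹ = (R n)⁻¹ * R (n+1) * C := fun n => by
    rw [hCu n]; group
  have d2 : ∀ n : ℤ, (((R (n+1))⁻¹ : Dˣ) : D) * (((R n)⁻¹ : Dˣ) : D) * (R (n+1) : D)
      = (((R n)⁻¹ : Dˣ) : D) * ((C⁻¹ : Dˣ) : D) := fun n => by
    exact_mod_cast congrArg Units.val (e2u n)
  have d3 : ∀ n : ℤ, (R (n+1) : D) * (((R n)⁻¹ : Dˣ) : D)
      = (((R n)⁻¹ : Dˣ) : D) * (R (n+1) : D) * (C : D) := fun n => by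
    exact_mod_cast congrArg Units.val (e3u n)
  -- the recurrence in `D`
  have hrec : ∀ n : ℤ, (R (n+2) : D)
      = ((R (n+1) : D) + (((R (n+1))⁻¹ : Dˣ) : D)) * (((R n)⁻¹ : Dˣ) : D) * (R (n+1) : D) := by
    intro n
    have h2' := h2 (n+1)
    have i1 : n+1+1 = n+2 := by ring
    have i2 : n+1-1 = n := by ring
    rw [i1, i2] at h2'
    have eD : (R (n+2) : D) * (C : D)
        = (R (n+1) : D) * (R (n+2) : D) * (((R (n+1))⁻¹ : Dˣ) : D) := by
      have h' := e1 (n+1)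
      rw [i1] at h'
      exact_mod_cast congrArg Units.val h'
    rw [eD] at h2'
    have expand : (R (n+2) : D) = (((R (n+1))⁻¹ : Dˣ) : D) *
        ((R (n+1) : D) * (R (n+2) : D) * (((R (n+1))⁻¹ : Dˣ) : D) * (R n : D)) *
        (((R n)⁻¹ : Dˣ) : D) * (R (n+1) : D) := by
      simp [mul_assoc, Units.inv_mul_cancel_left, Units.mul_inv_cancel_left,
        Units.mul_inv, Units.inv_mul]
    rw [h2'] at expand
    rw [expand]
    simp [sq, mul_add, add_mul, mul_assoc, Units.inv_mul_cancel_left,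
      Units.mul_inv_cancel_left, Units.mul_inv, Units.inv_mul]
  -- coerced constants
  have hCD : (C : D) = (x : D) * (y : D) * ((x⁻¹ : Dˣ) : D) * ((y⁻¹ : Dˣ) : D) := by
    exact_mod_cast congrArg Units.val hC
  have cBD : ((C⁻¹ : Dˣ) : D)
      = (y : D) * ((x : D) * ((y⁻¹ : Dˣ) : D) * ((x⁻¹ : Dˣ) : D)) := by
    have : C⁻¹ = y * (x * y⁻¹ * x⁻¹) := by rw [hC]; group
    exact_mod_cast congrArg Units.val this
  have cAC : (((y : D) + ((y⁻¹ : Dˣ) : D)) * ((x⁻¹ : Dˣ) : D)) * (C : D)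
      = ((y : D) * (y : D) + 1) * (((x⁻¹ : Dˣ) : D) * ((y⁻¹ : Dˣ) : D)) := by
    rw [hCD]
    simp only [mul_add, add_mul, mul_assoc, Units.inv_mul_cancel_left,
      Units.mul_inv_cancel_left, Units.mul_inv, Units.inv_mul, one_mul, mul_one]
  have cBC : ((x : D) * ((y⁻¹ : Dˣ) : D) * ((x⁻¹ : Dˣ) : D)) * (C : D)
      = ((y⁻¹ : Dˣ) : D) := by
    have : (x * y⁻¹ * x⁻¹ : Dˣ) * C = (y⁻¹ : Dˣ) := by rw [hC]; group
    exact_mod_cast congrArg Units.val this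
  -- membership of the generators
  have hxm : (x : D) ∈ Subsemiring.closure
      ({(x : D), ((x⁻¹ : Dˣ) : D), (y : D), ((y⁻¹ : Dˣ) : D)} : Set D) :=
    Subsemiring.subset_closure (by simp)
  have hxim : ((x⁻¹ : Dˣ) : D) ∈ Subsemiring.closure
      ({(x : D), ((x⁻¹ : Dˣ) : D), (y : D), ((y⁻¹ : Dˣ) : D)} : Set D) :=
    Subsemiring.subset_closure (by simp)
  have hym : (y : D) ∈ Subsemiring.closure
      ({(x : D), ((x⁻¹ : Dˣ) : D), (y : D), ((y⁻¹ : Dˣ) : D)} : Set D) :=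
    Subsemiring.subset_closure (by simp)
  have hyim : ((y⁻¹ : Dˣ) : D) ∈ Subsemiring.closure
      ({(x : D), ((x⁻¹ : Dˣ) : D), (y : D), ((y⁻¹ : Dˣ) : D)} : Set D) :=
    Subsemiring.subset_closure (by simp)
  -- main induction
  have key : ∀ n : ℤ, 1 ≤ n →
      ((R n : D) ∈ Subsemiring.closure
          ({(x : D), ((x⁻¹ : Dˣ) : D), (y : D), ((y⁻¹ : Dˣ) : D)} : Set D) ∧
        ∃ T : D, T ∈ Subsemiring.closure
            ({(x : D), ((x⁻¹ : Dˣ) : D), (y : D), ((y⁻¹ : Dˣ) : D)} : Set D) ∧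
          (R (n+1) : D) = (R n : D) * (((y : D) + ((y⁻¹ : Dˣ) : D)) * ((x⁻¹ : Dˣ) : D))
              + T * ((x : D) * ((y⁻¹ : Dˣ) : D) * ((x⁻¹ : Dˣ) : D)) ∧
          (R (n+1) : D) * (((R n)⁻¹ : Dˣ) : D) * T
            = (R n : D) * ((y⁻¹ : Dˣ) : D) - (((R n)⁻¹ : Dˣ) : D) * (y : D)
              + T * ((x : D) * ((y⁻¹ : Dˣ) : D))) := by
    refine Int.le_induction ?_ ?_
    · -- base case n = 1
      refine ⟨by rw [hR1]; exact hym, 0, zero_mem _, ?_, ?_⟩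
      · have h0 := hrec 0
        norm_num at h0 ⊢
        rw [h0, hR0, hR1]
        simp [mul_inv_rev, mul_add, add_mul, mul_assoc, Units.inv_mul_cancel_left,
          Units.mul_inv_cancel_left, Units.mul_inv, Units.inv_mul]
      · rw [hR1]
        simp [Units.mul_inv, Units.inv_mul]
    · -- inductive step
      intro n hn ih
      obtain ⟨hR, T, hT, hTeq, hstar⟩ := ih
      have i1 : n+1+1 = n+2 := by ring
      refine ⟨?_, (R n : D) * ((y⁻¹ : Dˣ) : D) + T * ((x : D) * ((y⁻¹ : Dˣ) : D)),
        add_mem (mul_mem hR hyim) (mul_mem hT (mul_mem hxm hyim)), ?_, ?_⟩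
      · rw [hTeq]
        exact add_mem (mul_mem hR (mul_mem (add_mem hym hyim) hxim))
          (mul_mem hT (mul_mem (mul_mem hxm hyim) hxim))
      · -- the Laurent expression for R (n+2)
        rw [i1]
        have t1 : (R (n+1) : D) * (((R n)⁻¹ : Dˣ) : D) * (R (n+1) : D)
            = (R (n+1) : D) * (((y : D) + ((y⁻¹ : Dˣ) : D)) * ((x⁻¹ : Dˣ) : D))
              + ((R (n+1) : D) * (((R n)⁻¹ : Dˣ) : D) * T)
                * ((x : D) * ((y⁻¹ : Dˣ) : D) * ((x⁻¹ : Dˣ) : D)) := by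
          nth_rewrite 2 [hTeq]
          simp only [mul_add, mul_assoc, Units.inv_mul_cancel_left]
        calc (R (n+2) : D)
            = ((R (n+1) : D) + (((R (n+1))⁻¹ : Dˣ) : D)) * (((R n)⁻¹ : Dˣ) : D)
                * (R (n+1) : D) := hrec n
          _ = (R (n+1) : D) * (((R n)⁻¹ : Dˣ) : D) * (R (n+1) : D)
                + (((R (n+1))⁻¹ : Dˣ) : D) * (((R n)⁻¹ : Dˣ) : D) * (R (n+1) : D) := by
              noncomm_ring
          _ = ((R (n+1) : D) * (((y : D) + ((y⁻¹ : Dˣ) : D)) * ((x⁻¹ : Dˣ) : D))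
              + ((R n : D) * ((y⁻¹ : Dˣ) : D) - (((R n)⁻¹ : Dˣ) : D) * (y : D)
                  + T * ((x : D) * ((y⁻¹ : Dˣ) : D)))
                * ((x : D) * ((y⁻¹ : Dˣ) : D) * ((x⁻¹ : Dˣ) : D)))
              + (((R n)⁻¹ : Dˣ) : D)
                * ((y : D) * ((x : D) * ((y⁻¹ : Dˣ) : D) * ((x⁻¹ : Dˣ) : D))) := by
              rw [t1, hstar, d2 n, cBD]
          _ = (R (n+1) : D) * (((y : D) + ((y⁻¹ : Dˣ) : D)) * ((x⁻¹ : Dˣ) : D))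
              + ((R n : D) * ((y⁻¹ : Dˣ) : D) + T * ((x : D) * ((y⁻¹ : Dˣ) : D)))
                * ((x : D) * ((y⁻¹ : Dˣ) : D) * ((x⁻¹ : Dˣ) : D)) := by
              noncomm_ring
      · -- the star identity at n+1
        rw [i1]
        have aux : (R (n+1) : D) * (((R n)⁻¹ : Dˣ) : D)
            = ((y : D) * (y : D) + 1) * (((x⁻¹ : Dˣ) : D) * ((y⁻¹ : Dˣ) : D))
              + (((R n)⁻¹ : Dˣ) : D) * T * ((y⁻¹ : Dˣ) : D) := by
          have h' := d3 n
          nth_rewrite 2 [hTeq] at h'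
          rw [h']
          calc (((R n)⁻¹ : Dˣ) : D)
              * ((R n : D) * (((y : D) + ((y⁻¹ : Dˣ) : D)) * ((x⁻¹ : Dˣ) : D))
                + T * ((x : D) * ((y⁻¹ : Dˣ) : D) * ((x⁻¹ : Dˣ) : D))) * (C : D)
              = (((y : D) + ((y⁻¹ : Dˣ) : D)) * ((x⁻¹ : Dˣ) : D)) * (C : D)
                + (((R n)⁻¹ : Dˣ) : D) * T
                  * (((x : D) * ((y⁻¹ : Dˣ) : D) * ((x⁻¹ : Dˣ) : D)) * (C : D)) := by
                simp only [mul_add, add_mul, mul_assoc, Units.inv_mul_cancel_left]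
            _ = ((y : D) * (y : D) + 1) * (((x⁻¹ : Dˣ) : D) * ((y⁻¹ : Dˣ) : D))
                + (((R n)⁻¹ : Dˣ) : D) * T * ((y⁻¹ : Dˣ) : D) := by
                rw [cAC, cBC]
        have p1 : (((R n)⁻¹ : Dˣ) : D)
            * ((R n : D) * ((y⁻¹ : Dˣ) : D) + T * ((x : D) * ((y⁻¹ : Dˣ) : D)))
            = ((y⁻¹ : Dˣ) : D)
              + (((R n)⁻¹ : Dˣ) : D) * (T * ((x : D) * ((y⁻¹ : Dˣ) : D))) := by
          simp only [mul_add, mul_assoc, Units.inv_mul_cancel_left]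
        have p2 : (R (n+1) : D) * (((y⁻¹ : Dˣ) : D)
              + (((R n)⁻¹ : Dˣ) : D) * (T * ((x : D) * ((y⁻¹ : Dˣ) : D))))
            = (R (n+1) : D) * ((y⁻¹ : Dˣ) : D)
              + ((R n : D) * ((y⁻¹ : Dˣ) : D) - (((R n)⁻¹ : Dˣ) : D) * (y : D)
                  + T * ((x : D) * ((y⁻¹ : Dˣ) : D))) * ((x : D) * ((y⁻¹ : Dˣ) : D)) := by
          rw [mul_add]
          congr 1
          calc (R (n+1) : D)
              * ((((R n)⁻¹ : Dˣ) : D) * (T * ((x : D) * ((y⁻¹ : Dˣ) : D))))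
              = ((R (n+1) : D) * (((R n)⁻¹ : Dˣ) : D) * T)
                  * ((x : D) * ((y⁻¹ : Dˣ) : D)) := by
                simp only [mul_assoc]
            _ = _ := by rw [hstar]
        have p3 : (((R (n+1))⁻¹ : Dˣ) : D) * (((y⁻¹ : Dˣ) : D)
              + (((R n)⁻¹ : Dˣ) : D) * (T * ((x : D) * ((y⁻¹ : Dˣ) : D))))
            = (((R n)⁻¹ : Dˣ) : D) * ((y : D) * ((x : D) * ((y⁻¹ : Dˣ) : D)))
              - (((R (n+1))⁻¹ : Dˣ) : D) * (y : D) := by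
          have q : ((y⁻¹ : Dˣ) : D)
              + (((R n)⁻¹ : Dˣ) : D) * (T * ((x : D) * ((y⁻¹ : Dˣ) : D)))
              = (R (n+1) : D)
                  * ((((R n)⁻¹ : Dˣ) : D) * ((y : D) * ((x : D) * ((y⁻¹ : Dˣ) : D))))
                - (y : D) := by
            have q2 : (R (n+1) : D)
                * ((((R n)⁻¹ : Dˣ) : D) * ((y : D) * ((x : D) * ((y⁻¹ : Dˣ) : D))))
                = ((R (n+1) : D) * (((R n)⁻¹ : Dˣ) : D))
                  * ((y : D) * ((x : D) * ((y⁻¹ : Dˣ) : D))) := by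
              rw [mul_assoc]
            rw [q2, aux]
            simp only [add_mul, mul_add, mul_assoc, Units.inv_mul_cancel_left,
              Units.mul_inv_cancel_left, Units.mul_inv, Units.inv_mul, mul_one, one_mul]
            abel
          rw [q, mul_sub]
          simp only [Units.inv_mul_cancel_left]
        calc (R (n+2) : D) * (((R (n+1))⁻¹ : Dˣ) : D)
              * ((R n : D) * ((y⁻¹ : Dˣ) : D) + T * ((x : D) * ((y⁻¹ : Dˣ) : D)))
            = ((R (n+1) : D) + (((R (n+1))⁻¹ : Dˣ) : D))
                * ((((R n)⁻¹ : Dˣ) : D)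
                  * ((R n : D) * ((y⁻¹ : Dˣ) : D) + T * ((x : D) * ((y⁻¹ : Dˣ) : D)))) := by
              rw [hrec n]
              simp only [mul_assoc, Units.mul_inv_cancel_left]
          _ = (R (n+1) : D) * (((y⁻¹ : Dˣ) : D)
                + (((R n)⁻¹ : Dˣ) : D) * (T * ((x : D) * ((y⁻¹ : Dˣ) : D))))
              + (((R (n+1))⁻¹ : Dˣ) : D) * (((y⁻¹ : Dˣ) : D)
                + (((R n)⁻¹ : Dˣ) : D) * (T * ((x : D) * ((y⁻¹ : Dˣ) : D)))) := by
              rw [p1, add_mul]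
          _ = ((R (n+1) : D) * ((y⁻¹ : Dˣ) : D)
                + ((R n : D) * ((y⁻¹ : Dˣ) : D) - (((R n)⁻¹ : Dˣ) : D) * (y : D)
                    + T * ((x : D) * ((y⁻¹ : Dˣ) : D))) * ((x : D) * ((y⁻¹ : Dˣ) : D)))
              + ((((R n)⁻¹ : Dˣ) : D) * ((y : D) * ((x : D) * ((y⁻¹ : Dˣ) : D)))
                - (((R (n+1))⁻¹ : Dˣ) : D) * (y : D)) := by
              rw [p2, p3]
          _ = (R (n+1) : D) * ((y⁻¹ : Dˣ) : D) - (((R (n+1))⁻¹ : Dˣ) : D) * (y : D)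
              + ((R n : D) * ((y⁻¹ : Dˣ) : D) + T * ((x : D) * ((y⁻¹ : Dˣ) : D)))
                * ((x : D) * ((y⁻¹ : Dˣ) : D)) := by
              noncomm_ring
  intro n hn
  rcases eq_or_lt_of_le hn with heq | hlt
  · rw [← heq, hR0]
    have : ((y * x * y⁻¹ : Dˣ) : D) = (y : D) * (x : D) * ((y⁻¹ : Dˣ) : D) := by
      simp [Units.val_mul]
    rw [this]
    exact mul_mem (mul_mem hym hxm) hyim
  · exact (key n (by omega)).1
end

section
/- Let D be a division ring, x, y ∈ Dˣ, and (R, C) a solution of the non-commutative (2,2)-system with commutator C and initial data C = x y x⁻¹ y⁻¹, R₀ = y x y⁻¹, R₁ = y. Then for every n ∈ ℤ (including all negative n), R_n belongs to the subsemiring of D generated by {x, x⁻¹, y, y⁻¹}; that is, every R_n is a non-commutative Laurent polynomial in x and y with non-negative integer coefficients. -/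
/-!
Eliminating `C` turns the system into `R (n+1) * (R n)⁻¹ * R (n-1) = R n + (R n)⁻¹`. Since `R n`
commutes with `R n + (R n)⁻¹`, this recurrence conserves both `C` and
`K = R (n+1) * (R n)⁻¹ + (R n)⁻¹ * R (n-1)`, so `R (n+1) = K * R n - C * R (n-1)` is linear.
With `a = R 0`, `b = R 1` one has `K = M + P` for `M = b⁻¹ a`, `P = b a⁻¹ + b⁻¹ a⁻¹`, and
`M P - C = b⁻¹ a b⁻¹ a⁻¹`; hence the pair `(R (n+1), M * R (n+1) - C * R n)` evolves by a matrix
with entries in the semiring generated by `a^±1, b^±1`, and starts at `(b, 0)`. This gives all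
`n ≥ 0`. The sequence `n ↦ op (R (1 - n))` in the opposite ring satisfies the same recurrence with
`a` and `b` exchanged, which gives `n ≤ 0`. Finally `R 0 = y x y⁻¹` and `R 1 = y`.
-/

section

variable {A : Type*} [Ring A]

theorem succ_mem_of_linear_recurrence {S : Subsemiring A} {M P C : A} {r : ℕ → A}
    (hM : M ∈ S) (hP : P ∈ S) (hMPC : M * P - C ∈ S)
    (hr : ∀ k, r (k + 2) = (M + P) * r (k + 1) - C * r k)
    (h1 : r 1 ∈ S) (hs0 : M * r 1 - C * r 0 ∈ S) (k : ℕ) : r (k + 1) ∈ S := by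
  suffices ∀ k, r (k + 1) ∈ S ∧ M * r (k + 1) - C * r k ∈ S from (this k).1
  intro k
  induction k with
  | zero => exact ⟨h1, hs0⟩
  | succ k ih =>
    have hnext : r (k + 2) = P * r (k + 1) + (M * r (k + 1) - C * r k) := by
      rw [hr]; noncomm_ring
    have hdiff : M * r (k + 2) - C * r (k + 1)
        = (M * P - C) * r (k + 1) + M * (M * r (k + 1) - C * r k) := by
      rw [hr]; noncomm_ring
    exact ⟨hnext ▸ add_mem (mul_mem hP ih.1) ih.2,
      hdiff ▸ add_mem (mul_mem hMPC ih.1) (mul_mem hM ih.2)⟩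

def IsTwoTwoRecurrence (R : ℤ → Aˣ) : Prop :=
  ∀ n : ℤ, (R (n + 1) : A) * ↑(R n)⁻¹ * R (n - 1) = R n + ↑(R n)⁻¹

theorem IsTwoTwoSolution.isTwoTwoRecurrence {D : Type*} [DivisionRing D] {R : ℤ → Dˣ} {C : Dˣ}
    (h : IsTwoTwoSolution R C) : IsTwoTwoRecurrence R := by
  intro n
  have hC : (R (n + 1) : D) * C = R n * R (n + 1) * ↑(R n)⁻¹ := by
    rw [h.1 n]; simp [mul_assoc]
  apply (Units.mul_right_inj (R n)).1
  calc (R n : D) * (R (n + 1) * ↑(R n)⁻¹ * R (n - 1)) = R (n + 1) * C * R (n - 1) := by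
        rw [hC]; simp only [mul_assoc]
    _ = R n * (R n + ↑(R n)⁻¹) := by rw [h.2 n, mul_add, Units.mul_inv, sq]

namespace TwoTwo

def commutator (R : ℤ → Aˣ) (n : ℤ) : Aˣ := (R (n + 1))⁻¹ * R n * R (n + 1) * (R n)⁻¹

def hamiltonian (R : ℤ → Aˣ) (n : ℤ) : A := R (n + 1) * ↑(R n)⁻¹ + ↑(R n)⁻¹ * R (n - 1)

theorem hamiltonian_mul_sub_commutator_mul (R : ℤ → Aˣ) (n : ℤ) :
    hamiltonian R n * R n - (commutator R (n - 1) : A) * R (n - 1) = R (n + 1) := by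
  simp only [hamiltonian, commutator, sub_add_cancel, Units.val_mul, add_mul, mul_assoc,
    Units.inv_mul, mul_one, add_sub_cancel_right]

end TwoTwo

namespace IsTwoTwoRecurrence

variable {R : ℤ → Aˣ}

theorem reverse_op (hR : IsTwoTwoRecurrence R) :
    IsTwoTwoRecurrence fun n ↦ Units.opEquiv.symm (MulOpposite.op (R (1 - n))) := by
  intro n
  simp only [Units.coe_opEquiv_symm, ← map_inv, MulOpposite.unop_inv, MulOpposite.unop_op,
    ← MulOpposite.op_mul, ← MulOpposite.op_add]
  rw [← hR (1 - n), sub_add, sub_sub, mul_assoc]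

theorem commutator_periodic (hR : IsTwoTwoRecurrence R) :
    Function.Periodic (TwoTwo.commutator R) 1 := by
  intro n
  have hrec := hR (n + 1)
  rw [add_sub_cancel_right] at hrec
  simp only [TwoTwo.commutator]
  set u := R (n + 1)
  set v := R (n + 1 + 1)
  set w := R n
  -- `u` commutes with `u + u⁻¹`
  have hcomm : u * (v * u⁻¹ * w) = v * u⁻¹ * w * u := Units.ext <| by
    push_cast; rw [hrec, mul_add, add_mul, Units.mul_inv, Units.inv_mul]
  calc v⁻¹ * u * v * u⁻¹ = v⁻¹ * (u * (v * u⁻¹ * w)) * w⁻¹ := by group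
    _ = u⁻¹ * w * u * w⁻¹ := by rw [hcomm]; group

theorem hamiltonian_periodic (hR : IsTwoTwoRecurrence R) :
    Function.Periodic (TwoTwo.hamiltonian R) 1 := by
  intro n
  have hrec := hR (n + 1)
  rw [add_sub_cancel_right] at hrec
  simp only [TwoTwo.hamiltonian, add_sub_cancel_right]
  calc (R (n + 1 + 1) : A) * ↑(R (n + 1))⁻¹ + ↑(R (n + 1))⁻¹ * R n
      = (R (n + 1) + ↑(R (n + 1))⁻¹) * ↑(R n)⁻¹ + ↑(R (n + 1))⁻¹ * R n := by
        rw [← hrec]; simp [mul_assoc]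
    _ = R (n + 1) * ↑(R n)⁻¹ + ↑(R (n + 1))⁻¹ * (R n + ↑(R n)⁻¹) := by noncomm_ring
    _ = R (n + 1) * ↑(R n)⁻¹ + ↑(R n)⁻¹ * R (n - 1) := by
        rw [← hR n]; simp [← mul_assoc]

theorem succ_eq_hamiltonian_mul_sub (hR : IsTwoTwoRecurrence R) (n : ℤ) :
    (R (n + 1) : A) = TwoTwo.hamiltonian R 1 * R n - (TwoTwo.commutator R 0 : A) * R (n - 1) := by
  have hK : TwoTwo.hamiltonian R n = TwoTwo.hamiltonian R 1 := by
    simpa only [Int.cast_id, mul_one] using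
      (hR.hamiltonian_periodic.int_mul_eq n).trans hR.hamiltonian_periodic.eq.symm
  have hC : TwoTwo.commutator R (n - 1) = TwoTwo.commutator R 0 := by
    simpa only [Int.cast_id, mul_one] using hR.commutator_periodic.int_mul_eq (n - 1)
  rw [← hK, ← hC, TwoTwo.hamiltonian_mul_sub_commutator_mul]

theorem hamiltonian_one (hR : IsTwoTwoRecurrence R) :
    TwoTwo.hamiltonian R 1 = ↑(R 1)⁻¹ * R 0 + (R 1 * ↑(R 0)⁻¹ + ↑(R 1)⁻¹ * ↑(R 0)⁻¹) := by
  have hR2 : (R (1 + 1) : A) * ↑(R 1)⁻¹ = (R 1 + ↑(R 1)⁻¹) * ↑(R 0)⁻¹ := by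
    rw [← sub_self (1 : ℤ), ← hR 1]; simp [mul_assoc]
  rw [TwoTwo.hamiltonian, sub_self, hR2]; noncomm_ring

theorem natCast_mem (hR : IsTwoTwoRecurrence R) {S : Subsemiring A}
    (h0 : (R 0 : A) ∈ S) (h0' : (↑(R 0)⁻¹ : A) ∈ S) (h1 : (R 1 : A) ∈ S)
    (h1' : (↑(R 1)⁻¹ : A) ∈ S) : ∀ k : ℕ, (R k : A) ∈ S
  | 0 => h0
  | k + 1 => by
    have hC : (TwoTwo.commutator R 0 : A) = ↑(R 1)⁻¹ * R 0 * R 1 * ↑(R 0)⁻¹ := by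
      simp [TwoTwo.commutator]
    refine succ_mem_of_linear_recurrence (r := fun k : ℕ ↦ (R k : A))
      (M := ↑(R 1)⁻¹ * (R 0 : A)) (P := R 1 * ↑(R 0)⁻¹ + ↑(R 1)⁻¹ * (↑(R 0)⁻¹ : A))
      (C := (TwoTwo.commutator R 0 : A)) ?_ ?_ ?_ ?_ h1 ?_ k
    · exact mul_mem h1' h0
    · exact add_mem (mul_mem h1 h0') (mul_mem h1' h0')
    · have : ↑(R 1)⁻¹ * R 0 * (R 1 * ↑(R 0)⁻¹ + ↑(R 1)⁻¹ * ↑(R 0)⁻¹)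
          - (TwoTwo.commutator R 0 : A) = ↑(R 1)⁻¹ * R 0 * ↑(R 1)⁻¹ * ↑(R 0)⁻¹ := by
        rw [hC]; noncomm_ring
      exact this ▸ mul_mem (mul_mem (mul_mem h1' h0) h1') h0'
    · intro k
      simp only [Nat.cast_add, Nat.cast_ofNat, Nat.cast_one]
      rw [← hR.hamiltonian_one, show (k : ℤ) + 2 = k + 1 + 1 by ring,
        hR.succ_eq_hamiltonian_mul_sub, add_sub_cancel_right]
    · have : ↑(R 1)⁻¹ * R 0 * (R 1 : A) - (TwoTwo.commutator R 0 : A) * R 0 = 0 := by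
        simp [hC, mul_assoc]
      exact this ▸ zero_mem S

theorem mem (hR : IsTwoTwoRecurrence R) {S : Subsemiring A}
    (h0 : (R 0 : A) ∈ S) (h0' : (↑(R 0)⁻¹ : A) ∈ S) (h1 : (R 1 : A) ∈ S)
    (h1' : (↑(R 1)⁻¹ : A) ∈ S) (n : ℤ) : (R n : A) ∈ S := by
  obtain ⟨k, rfl | rfl⟩ := Int.eq_nat_or_neg n
  · exact hR.natCast_mem h0 h0' h1 h1' k
  · simpa using hR.reverse_op.natCast_mem (S := S.op)
      (by simpa) (by simpa) (by simpa) (by simpa) (k + 1)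

end IsTwoTwoRecurrence

end

theorem twotwo_positivity_all_general {D : Type*} [DivisionRing D] (x y : Dˣ) (R : ℤ → Dˣ)
    (C : Dˣ) (h : IsTwoTwoSolution R C)
    (hR0 : R 0 = y * x * y⁻¹) (hR1 : R 1 = y) :
    ∀ n : ℤ,
      (R n : D) ∈ Subsemiring.closure
        ({(x : D), ((x⁻¹ : Dˣ) : D), (y : D), ((y⁻¹ : Dˣ) : D)} : Set D) := by
  set S := Subsemiring.closure ({(x : D), ↑x⁻¹, ↑y, ↑y⁻¹} : Set D)
  have hx : (x : D) ∈ S := Subsemiring.subset_closure (by simp)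
  have hx' : (↑x⁻¹ : D) ∈ S := Subsemiring.subset_closure (by simp)
  have hy : (y : D) ∈ S := Subsemiring.subset_closure (by simp)
  have hy' : (↑y⁻¹ : D) ∈ S := Subsemiring.subset_closure (by simp)
  refine h.isTwoTwoRecurrence.mem ?_ ?_ (hR1 ▸ hy) (hR1 ▸ hy')
  · rw [hR0, Units.val_mul, Units.val_mul]
    exact mul_mem (mul_mem hy hx) hy'
  · rw [hR0, mul_inv_rev, mul_inv_rev, inv_inv, Units.val_mul, Units.val_mul]
    exact mul_mem hy (mul_mem hx' hy')

/-- Positivity for the `(2,2)`-system, all indices: with initial data `C = x y x⁻¹ y⁻¹`,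
`R₀ = y x y⁻¹`, `R₁ = y`, every `R_n` (`n ∈ ℤ`, including negative `n`) is a non-commutative
Laurent polynomial in `x, y` with non-negative integer coefficients, i.e. it lies in the
subsemiring of `D` generated by `{x, x⁻¹, y, y⁻¹}`. -/
theorem twotwo_positivity_all {D : Type*} [DivisionRing D] (x y : Dˣ) (R : ℤ → Dˣ)
    (C : Dˣ) (h : IsTwoTwoSolution R C)
    (hC : C = x * y * x⁻¹ * y⁻¹) (hR0 : R 0 = y * x * y⁻¹) (hR1 : R 1 = y) :
    ∀ n : ℤ,
      (R n : D) ∈ Subsemiring.closure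
        ({(x : D), ((x⁻¹ : Dˣ) : D), (y : D), ((y⁻¹ : Dˣ) : D)} : Set D) :=
  twotwo_positivity_all_general x y R C h hR0 hR1
end

section
/- Let F be the free group on two generators X and Y, and work in the monoid algebra ℕ[F] (MonoidAlgebra ℕ (FreeGroup (Fin 2))), identifying each group element with the corresponding monomial. Define the group elements y₁ = Y² X⁻¹ Y⁻¹, y₂ = X⁻¹ Y⁻¹, y₃ = X Y⁻¹, r₀ = Y X Y⁻¹, and let T be the 4×4 matrix over ℕ[F] with entries T_{0,1} = T_{1,2} = T_{2,3} = 1, T_{1,0} = y₁, T_{2,1} = y₂, T_{3,2} = y₃, and all other entries 0. Then for every n ≥ 0, every coefficient of the element (T^{2n})_{0,0} · r₀ of ℕ[F] lies in {0, 1}; i.e., each Laurent monomial occurs at most once, corresponding to the weight of a single path on the segment [0,3]. -/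
/-!
Expanding `T ^ m` over walks on `{0, 1, 2, 3}`, the weight of a walk is the product of the
weights `y₁, y₂, y₃` of its down-steps, in order. These weights generate a free monoid: conjugated
by `Y` they become `Y X⁻¹`, `Y⁻¹ X⁻¹`, `Y⁻¹ X`, and words in these never cancel. Hence the weight
determines the first step of a walk from `i`: after an up-step the first down-step starts at height
`> i`, after a down-step it starts at `i`. By induction on `m`, every monomial of `(T ^ m) i j`
has coefficient at most `1` and is a product of down-weights whose first down-step starts at
height `≥ i`.
-/

open Matrix

/-- The generator `X` of the free group on two generators. -/
def genX : FreeGroup (Fin 2) := FreeGroup.of 0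

/-- The generator `Y` of the free group on two generators. -/
def genY : FreeGroup (Fin 2) := FreeGroup.of 1

/-- The monomial of `ℕ[F]` associated to a group element `g`. -/
noncomputable def mono (g : FreeGroup (Fin 2)) : MonoidAlgebra ℕ (FreeGroup (Fin 2)) :=
  MonoidAlgebra.of ℕ (FreeGroup (Fin 2)) g

/-- The transfer matrix of the `(2,2)` path model, with formal weights
`y₁ = Y² X⁻¹ Y⁻¹`, `y₂ = X⁻¹ Y⁻¹`, `y₃ = X Y⁻¹` in the monoid algebra `ℕ[F]`
over the free group `F` on `X, Y`. -/
noncomputable def transferT :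
    Matrix (Fin 4) (Fin 4) (MonoidAlgebra ℕ (FreeGroup (Fin 2))) :=
  !![0, 1, 0, 0;
     mono (genY ^ 2 * genX⁻¹ * genY⁻¹), 0, 1, 0;
     0, mono (genX⁻¹ * genY⁻¹), 0, 1;
     0, 0, mono (genX * genY⁻¹), 0]

theorem Finset.sum_le_one_of_ne_zero_unique {ι : Type*} {s : Finset ι} {f : ι → ℕ}
    (hle : ∀ i ∈ s, f i ≤ 1) (heq : ∀ i ∈ s, ∀ j ∈ s, f i ≠ 0 → f j ≠ 0 → i = j) :
    ∑ i ∈ s, f i ≤ 1 := by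
  by_cases h : ∃ i ∈ s, f i ≠ 0
  · obtain ⟨i, hi, hfi⟩ := h
    rw [Finset.sum_eq_single_of_mem i hi fun j hj hji =>
      by_contra fun hfj => hji (heq j hj i hi hfj hfi)]
    exact hle i hi
  · rw [Finset.sum_eq_zero fun i hi => by_contra fun hfi => h ⟨i, hi, hfi⟩]
    exact zero_le_one

namespace FreeGroup

variable {α : Type*}

def pairWord (a b : α) (s : List (Bool × Bool)) : FreeGroup α :=
  (s.map fun e => mk [(a, e.1), (b, e.2)]).prod

theorem pairWord_eq_mk (a b : α) (s : List (Bool × Bool)) :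
    pairWord a b s = mk (s.flatMap fun e => [(a, e.1), (b, e.2)]) := by
  induction s with
  | nil => rfl
  | cons e s ih => rw [pairWord, List.map_cons, List.prod_cons, ← pairWord, ih, mul_mk,
      List.flatMap_cons]

theorem isReduced_flatMap_pair {a b : α} (hab : a ≠ b) (s : List (Bool × Bool)) :
    IsReduced (s.flatMap fun e => [(a, e.1), (b, e.2)]) := by
  induction s with
  | nil => exact IsReduced.nil
  | cons e s ih =>
    rcases s with _ | ⟨e', s⟩
    · simp [IsReduced, hab]
    · simp only [List.flatMap_cons, List.cons_append, List.nil_append] at ih ⊢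
      simp_all [isReduced_cons_cons, Ne.symm hab]

theorem pairWord_injective [DecidableEq α] {a b : α} (hab : a ≠ b) :
    Function.Injective (pairWord a b) := by
  intro s t hst
  have hwords := congrArg toWord hst
  rw [pairWord_eq_mk, pairWord_eq_mk, toWord_mk, toWord_mk,
    (isReduced_flatMap_pair hab s).reduce_eq, (isReduced_flatMap_pair hab t).reduce_eq] at hwords
  clear hst
  induction s generalizing t with
  | nil => cases t <;> simp_all
  | cons e s ih =>
    rcases t with _ | ⟨e', t⟩
    · simp at hwords
    · simp only [List.flatMap_cons, List.cons_append, List.nil_append, List.cons.injEq,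
        Prod.mk.injEq, true_and] at hwords
      rw [Prod.ext hwords.1 hwords.2.1, ih hwords.2.2]

end FreeGroup

section SegmentWalks

variable {G : Type*} [Group G] {n : ℕ}

/-- Transfer matrix of walks on `{0, …, n}`: a step up has weight `1`, a step down from `j + 1`
to `j` has weight `w j`. -/
noncomputable def segmentMatrix (w : Fin n → G) :
    Matrix (Fin (n + 1)) (Fin (n + 1)) (MonoidAlgebra ℕ G) :=
  Matrix.of fun i j =>
    if j.val = i.val + 1 then 1
    else if h : j.val + 1 = i.val then MonoidAlgebra.of ℕ G (w ⟨j, by omega⟩) else 0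

theorem coeff_segmentMatrix_mul (w : Fin n → G) (i j : Fin (n + 1)) (x : MonoidAlgebra ℕ G)
    (g : G) :
    (segmentMatrix w i j * x).coeff g =
      if j.val = i.val + 1 then x.coeff g
      else if h : j.val + 1 = i.val then x.coeff ((w ⟨j, by omega⟩)⁻¹ * g) else 0 := by
  simp only [segmentMatrix, Matrix.of_apply]
  split_ifs <;> simp [MonoidAlgebra.of_apply]

theorem coeff_segmentMatrix_mul_ne_zero {w : Fin n → G} {i k : Fin (n + 1)}
    {x : Fin (n + 1) → MonoidAlgebra ℕ G} {g : G}
    (hx : ∀ k g, (x k).coeff g ≠ 0 →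
      ∃ s : List (Fin n), (∀ d ∈ s.head?, k.val ≤ d.val + 1) ∧ (s.map w).prod = g)
    (h : (segmentMatrix w i k * x k).coeff g ≠ 0) :
    (k.val = i.val + 1 ∧
        ∃ s : List (Fin n), (∀ d ∈ s.head?, i.val ≤ d.val) ∧ (s.map w).prod = g) ∨
      (k.val + 1 = i.val ∧
        ∃ s : List (Fin n), (∃ d ∈ s.head?, d.val + 1 = i.val) ∧ (s.map w).prod = g) := by
  rw [coeff_segmentMatrix_mul] at h
  split_ifs at h with hup hdown
  · obtain ⟨s, hs, rfl⟩ := hx k g h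
    exact Or.inl ⟨hup, s, fun d hd => by have := hs d hd; omega, rfl⟩
  · obtain ⟨s, -, hs⟩ := hx k _ h
    refine Or.inr ⟨hdown, ⟨k, by omega⟩ :: s, ⟨_, rfl, by simp; omega⟩, ?_⟩
    rw [List.map_cons, List.prod_cons, hs, mul_inv_cancel_left]
  · exact absurd rfl h

theorem exists_prod_of_coeff_pow_segmentMatrix_ne_zero (w : Fin n → G) (m : ℕ)
    (i j : Fin (n + 1)) (g : G) (h : ((segmentMatrix w ^ m) i j).coeff g ≠ 0) :
    ∃ s : List (Fin n), (∀ d ∈ s.head?, i.val ≤ d.val + 1) ∧ (s.map w).prod = g := by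
  induction m generalizing i g with
  | zero =>
    refine ⟨[], by simp, ?_⟩
    rw [pow_zero, Matrix.one_apply] at h
    split_ifs at h
    · rw [MonoidAlgebra.one_def, MonoidAlgebra.coeff_single] at h
      exact (Finsupp.single_apply_ne_zero.mp h).1.symm
    · exact absurd rfl h
  | succ m ih =>
    rw [pow_succ', Matrix.mul_apply, MonoidAlgebra.coeff_sum, Finset.sum_apply'] at h
    obtain ⟨k, -, hk⟩ := Finset.exists_ne_zero_of_sum_ne_zero h
    rcases coeff_segmentMatrix_mul_ne_zero ih hk with
      ⟨-, s, hs, rfl⟩ | ⟨-, s, ⟨d, hd, hdi⟩, rfl⟩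
    · exact ⟨s, fun d hd => by have := hs d hd; omega, rfl⟩
    · exact ⟨s, fun d' hd' => by obtain rfl := Option.mem_unique hd' hd; omega, rfl⟩

theorem coeff_pow_segmentMatrix_le_one {w : Fin n → G}
    (hw : Function.Injective fun s : List (Fin n) => (s.map w).prod) (m : ℕ) (i j : Fin (n + 1))
    (g : G) : ((segmentMatrix w ^ m) i j).coeff g ≤ 1 := by
  induction m generalizing i g with
  | zero =>
    rw [pow_zero, Matrix.one_apply]
    split_ifs
    · classical
      rw [MonoidAlgebra.one_def, MonoidAlgebra.coeff_single, Finsupp.single_apply]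
      exact ite_le_one le_rfl zero_le_one
    · exact zero_le_one
  | succ m ih =>
    rw [pow_succ', Matrix.mul_apply, MonoidAlgebra.coeff_sum, Finset.sum_apply']
    have hsupp := exists_prod_of_coeff_pow_segmentMatrix_ne_zero w m (j := j)
    refine Finset.sum_le_one_of_ne_zero_unique (fun k _ => ?_) fun k _ k' _ hk hk' => ?_
    · rw [coeff_segmentMatrix_mul]
      split_ifs
      exacts [ih k g, ih k _, zero_le_one]
    rcases coeff_segmentMatrix_mul_ne_zero hsupp hk with
      ⟨hki, s, hs, hsg⟩ | ⟨hki, s, ⟨d, hd, hdi⟩, hsg⟩ <;>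
    rcases coeff_segmentMatrix_mul_ne_zero hsupp hk' with
      ⟨hki', s', hs', hsg'⟩ | ⟨hki', s', ⟨d', hd', hdi'⟩, hsg'⟩
    · exact Fin.ext (by omega)
    · obtain rfl : s = s' := hw (hsg.trans hsg'.symm)
      have := hs d' hd'
      omega
    · obtain rfl : s = s' := hw (hsg.trans hsg'.symm)
      have := hs' d hd
      omega
    · exact Fin.ext (by omega)

end SegmentWalks

def downWeight : Fin 3 → FreeGroup (Fin 2) :=
  ![genY ^ 2 * genX⁻¹ * genY⁻¹, genX⁻¹ * genY⁻¹, genX * genY⁻¹]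

def downWeightSigns : Fin 3 → Bool × Bool := ![(true, false), (false, false), (false, true)]

theorem downWeight_eq_conj (d : Fin 3) :
    downWeight d = MulAut.conj genY (FreeGroup.pairWord 1 0 [downWeightSigns d]) := by
  fin_cases d <;> decide

theorem downWeight_prod_injective :
    Function.Injective fun s : List (Fin 3) => (s.map downWeight).prod := by
  have hprod (s : List (Fin 3)) :
      (s.map downWeight).prod =
        MulAut.conj genY (FreeGroup.pairWord 1 0 (s.map downWeightSigns)) := by
    simp only [FreeGroup.pairWord, map_list_prod, List.map_map]
    congr 1
    exact List.map_congr_left fun d _ =>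
      (downWeight_eq_conj d).trans (by simp [FreeGroup.pairWord])
  intro s t hst
  simp only [hprod] at hst
  exact List.map_injective_iff.mpr (by decide) <|
    FreeGroup.pairWord_injective (by decide) ((MulAut.conj genY).injective hst)

theorem transferT_eq_segmentMatrix : transferT = segmentMatrix downWeight := by
  ext i j
  fin_cases i <;> fin_cases j <;> rfl

/-- Every coefficient of `(T^{2n})_{0,0} · r₀`, with `r₀ = Y X Y⁻¹`, lies in `{0,1}`:
each Laurent monomial occurs at most once, corresponding to the weight of a single
path on the segment `[0,3]`. -/
theorem twotwo_coefficients_zero_one :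
    ∀ n : ℕ, ∀ g : FreeGroup (Fin 2),
      (((transferT ^ (2 * n)) 0 0 * mono (genY * genX * genY⁻¹)).coeff g : ℕ) ∈
        ({0, 1} : Set ℕ) := by
  intro n g
  have hle : ((transferT ^ (2 * n)) 0 0 * mono (genY * genX * genY⁻¹)).coeff g ≤ 1 := by
    rw [mono, MonoidAlgebra.of_apply, MonoidAlgebra.coeff_mul_single_apply, mul_one,
      transferT_eq_segmentMatrix]
    exact coeff_pow_segmentMatrix_le_one downWeight_prod_injective _ _ _ _
  rcases Nat.le_one_iff_eq_zero_or_eq_one.mp hle with h | h <;> simp [h]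
end

section
/- Let D be a division ring and (R, C) a solution of the non-commutative (1,4)-system with commutator C, and set u_n := R_{2n}. Then for all n ∈ ℤ: (a) u_{n+2} C (u_{n+1} C u_n − 1) = u_{n+1}³ + C u_n, and (b) the quasi-commutation relation u_{n+1} C u_n = u_n u_{n+1} + 1 − C⁻¹ holds. -/
/-- A solution of the non-commutative `(1,4)`-system with commutator `C`:
`C = R_{n+1}⁻¹ R_n R_{n+1} R_n⁻¹`, `R_{2n} C R_{2n-2} = 1 + R_{2n-1}` and
`R_{2n+1} C R_{2n-1} = 1 + R_{2n}⁴` for all `n ∈ ℤ`. -/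
def IsOneFourSolution {D : Type*} [DivisionRing D] (R : ℤ → Dˣ) (C : Dˣ) : Prop :=
  (∀ n : ℤ, (C : D) =
      (((R (n + 1))⁻¹ : Dˣ) : D) * (R n : D) * (R (n + 1) : D) * (((R n)⁻¹ : Dˣ) : D)) ∧
  (∀ n : ℤ, (R (2 * n) : D) * (C : D) * (R (2 * n - 2) : D) = 1 + (R (2 * n - 1) : D)) ∧
  (∀ n : ℤ, (R (2 * n + 1) : D) * (C : D) * (R (2 * n - 1) : D) = 1 + (R (2 * n) : D) ^ 4)

private lemma onefour_star {D : Type*} [DivisionRing D] (R : ℤ → Dˣ) (C : Dˣ)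
    (h : IsOneFourSolution R C) (m : ℤ) :
    (R (m + 1) : D) * (C : D) * (R m : D) = (R m : D) * (R (m + 1) : D) := by
  have h1 := h.1 m
  rw [h1]
  simp [mul_assoc, Units.mul_inv_cancel_left, Units.inv_mul_cancel_left]

/-- For the `(1,4)`-system, with `u_n := R_{2n}`:
(a) `u_{n+2} C (u_{n+1} C u_n − 1) = u_{n+1}³ + C u_n`, and
(b) the quasi-commutation relation `u_{n+1} C u_n = u_n u_{n+1} + 1 − C⁻¹`. -/
theorem onefour_u_relations {D : Type*} [DivisionRing D] (R : ℤ → Dˣ) (C : Dˣ)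
    (h : IsOneFourSolution R C) :
    ∀ n : ℤ,
      (R (2 * (n + 2)) : D) * (C : D) *
          ((R (2 * (n + 1)) : D) * (C : D) * (R (2 * n) : D) - 1) =
        (R (2 * (n + 1)) : D) ^ 3 + (C : D) * (R (2 * n) : D) ∧
      (R (2 * (n + 1)) : D) * (C : D) * (R (2 * n) : D) =
        (R (2 * n) : D) * (R (2 * (n + 1)) : D) + 1 - ((C⁻¹ : Dˣ) : D) := by
  intro n
  have i1 : 2 * (n + 1) = 2 * n + 2 := by ring
  have i2 : 2 * (n + 2) = 2 * n + 4 := by ring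
  rw [i1, i2]
  -- notation
  set a : D := (R (2 * n) : D) with ha
  set b : D := (R (2 * n + 1) : D) with hb
  set c : D := (R (2 * n + 2) : D) with hc
  set d : D := (R (2 * n + 3) : D) with hd
  set e : D := (R (2 * n + 4) : D) with he
  set Cc : D := (C : D) with hC
  -- h2 at n+1 : c * C * a = 1 + b
  have h2b : c * Cc * a = 1 + b := by
    have := h.2.1 (n + 1)
    have e1 : 2 * (n + 1) - 2 = 2 * n := by ring
    have e2 : 2 * (n + 1) - 1 = 2 * n + 1 := by ring
    rw [e1, e2, i1] at this
    exact this
  -- h2 at n+2 : e * C * c = 1 + d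
  have h2a : e * Cc * c = 1 + d := by
    have := h.2.1 (n + 2)
    have e1 : 2 * (n + 2) - 2 = 2 * n + 2 := by ring
    have e2 : 2 * (n + 2) - 1 = 2 * n + 3 := by ring
    rw [e1, e2, i2] at this
    exact this
  -- h3 at n+1 : d * C * b = 1 + c ^ 4
  have h3a : d * Cc * b = 1 + c ^ 4 := by
    have := h.2.2 (n + 1)
    have e1 : 2 * (n + 1) + 1 = 2 * n + 3 := by ring
    have e2 : 2 * (n + 1) - 1 = 2 * n + 1 := by ring
    rw [e1, e2, i1] at this
    exact this
  -- commutation relations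
  have star_a : b * Cc * a = a * b := onefour_star R C h (2 * n)
  have star_c : d * Cc * c = c * d := by
    have := onefour_star R C h (2 * n + 2)
    have e1 : 2 * n + 2 + 1 = 2 * n + 3 := by ring
    rw [e1] at this
    exact this
  -- inverses
  set ai : D := (((R (2 * n))⁻¹ : Dˣ) : D) with hai
  set ci : D := (((R (2 * n + 2))⁻¹ : Dˣ) : D) with hci
  set Ci : D := ((C⁻¹ : Dˣ) : D) with hCi
  have hcci : c * ci = 1 := Units.mul_inv _
  have hcic : ci * c = 1 := Units.inv_mul _
  have haai : a * ai = 1 := Units.mul_inv _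
  have hCCi : Cc * Ci = 1 := Units.mul_inv _
  have hCiC : Ci * Cc = 1 := Units.inv_mul _
  constructor
  · -- part (a) : e * C * (c * C * a - 1) = c ^ 3 + C * a
    rw [h2b]
    have hsub : (1 : D) + b - 1 = b := by noncomm_ring
    rw [hsub]
    have hdci : d * ci = ci * (d * Cc) := by
      have h1 : d * Cc = c * (d * ci) := by
        calc d * Cc = d * Cc * (c * ci) := by rw [hcci, mul_one]
          _ = (d * Cc * c) * ci := by noncomm_ring
          _ = c * d * ci := by rw [star_c]
          _ = c * (d * ci) := by noncomm_ring
      calc d * ci = ci * (c * (d * ci)) := by rw [← mul_assoc, hcic, one_mul]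
        _ = ci * (d * Cc) := by rw [← h1]
    calc e * Cc * b = e * Cc * c * (ci * b) := by
          rw [mul_assoc (e * Cc), ← mul_assoc c, hcci, one_mul]
      _ = (1 + d) * (ci * b) := by rw [h2a]
      _ = ci * b + (d * ci) * b := by noncomm_ring
      _ = ci * b + ci * (d * Cc) * b := by rw [hdci]
      _ = ci * b + ci * (d * Cc * b) := by noncomm_ring
      _ = ci * b + ci * (1 + c ^ 4) := by rw [h3a]
      _ = ci * (1 + b) + (ci * c) * c ^ 3 := by noncomm_ring
      _ = ci * (c * Cc * a) + c ^ 3 := by rw [h2b, hcic, one_mul]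
      _ = (ci * c) * (Cc * a) + c ^ 3 := by noncomm_ring
      _ = c ^ 3 + Cc * a := by rw [hcic, one_mul, add_comm]
  · -- part (b) : c * C * a = a * c + 1 - C⁻¹
    have hc_eq : c = (1 + b) * (ai * Ci) := by
      calc c = c * (Cc * ((a * ai) * Ci)) := by rw [haai, one_mul, hCCi, mul_one]
        _ = (c * Cc * a) * (ai * Ci) := by noncomm_ring
        _ = (1 + b) * (ai * Ci) := by rw [h2b]
    have hab : a * b * ai = b * Cc := by
      calc a * b * ai = (b * Cc * a) * ai := by rw [star_a]
        _ = b * Cc * (a * ai) := by noncomm_ring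
        _ = b * Cc := by rw [haai, mul_one]
    have hac : a * c = Ci + b := by
      calc a * c = a * ((1 + b) * (ai * Ci)) := by rw [← hc_eq]
        _ = (a * ai) * Ci + (a * b * ai) * Ci := by noncomm_ring
        _ = Ci + (b * Cc) * Ci := by rw [haai, one_mul, hab]
        _ = Ci + b * (Cc * Ci) := by noncomm_ring
        _ = Ci + b := by rw [hCCi, mul_one]
    rw [h2b, hac]
    noncomm_ring
end

section
/- Let D be a division ring and (R, C) a solution of the non-commutative (1,4)-system with commutator C, and set u_n := R_{2n} (so that u_{n+1} C u_n − 1 = R_{2n+1} is a unit). Then the quantity K_n := ((C u_n)² + (u_{n+1})²) · (u_{n+1} C u_n − 1)⁻¹ is independent of n: K_n = K_m for all n, m ∈ ℤ. -/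
/-! Write `u, q, a, p, b` for `R_{2n}, …, R_{2n+4}` and `c` for `C`, so that
`K_n = ((cu)² + a²) q⁻¹` and `K_{n+1} = ((ca)² + b²) p⁻¹`. Relation (i) reads
`R_{k+1} c R_k = R_k R_{k+1}`; conjugating by `p` it turns `(ca)² + b²` into `a² + (bc)²`, so
`K_{n+1} = K_n` becomes the identity `p((cu)² + a²) = (a² + (bc)²) q`. That identity follows by
substituting `cu = a⁻¹(1 + q)` and `bc = (1 + p)a⁻¹` from (ii), then using `pcq = 1 + a⁴` from (iii)
and `a⁻¹q = cqa⁻¹` from (i). -/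

section TwistedCommutation

variable {M : Type*} [Monoid M] {c x y : M}

theorem mul_mul_sq_eq_sq_mul_of_mul_mul_eq (h : y * c * x = x * y) :
    y * (c * x) ^ 2 = x ^ 2 * y :=
  calc y * (c * x) ^ 2 = (y * c * x) * c * x := by simp only [sq, mul_assoc]
    _ = x * y * c * x := by rw [h]
    _ = x * (y * c * x) := by simp only [mul_assoc]
    _ = x ^ 2 * y := by rw [h, sq, mul_assoc]

theorem mul_sq_eq_sq_mul_of_mul_mul_eq (h : y * c * x = x * y) :
    x * y ^ 2 = (y * c) ^ 2 * x :=
  calc x * y ^ 2 = (x * y) * y := by rw [sq, mul_assoc]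
    _ = (y * c * x) * y := by rw [h]
    _ = y * c * (x * y) := by simp only [mul_assoc]
    _ = y * c * (y * c * x) := by rw [h]
    _ = (y * c) ^ 2 * x := by rw [sq]; simp only [mul_assoc]

end TwistedCommutation

theorem Units.val_pow_succ_mul_inv {A : Type*} [Monoid A] (a : Aˣ) (n : ℕ) :
    (a : A) ^ (n + 1) * ↑a⁻¹ = (a : A) ^ n := by
  rw [pow_succ, Units.mul_inv_cancel_right]

theorem sq_add_sq_mul_inv_eq_of_oneFour_relations {A : Type*} [Ring A] {a p q : Aˣ} {b c u : A}
    (hpa : p * c * a = a * p) (hbp : b * c * p = p * b) (hpq : p * c * q = 1 + a ^ 4)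
    (haq : a * c * q = q * a) (hau : a * c * u = 1 + q) (hba : b * c * a = 1 + p) :
    ((c * u) ^ 2 + a ^ 2) * ↑q⁻¹ = ((c * a) ^ 2 + b ^ 2) * ↑p⁻¹ := by
  have hbc : b * c = (1 + p) * ↑a⁻¹ := by rw [← hba, Units.mul_inv_cancel_right]
  have hcu : c * u = ↑a⁻¹ * (1 + q) := by rw [← hau, mul_assoc, Units.inv_mul_cancel_left]
  have hqa : ↑a⁻¹ * q = c * q * ↑a⁻¹ := by
    rw [Units.eq_mul_inv_iff_mul_eq, mul_assoc, ← haq, mul_assoc, Units.inv_mul_cancel_left]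
  have hpcu : p * (c * u) = b * c + a ^ 3 :=
    calc p * (c * u) = p * ↑a⁻¹ + p * (↑a⁻¹ * q) := by rw [hcu]; noncomm_ring
      _ = (1 + p) * ↑a⁻¹ + a ^ 4 * ↑a⁻¹ := by rw [hqa, ← mul_assoc, ← mul_assoc, hpq]; noncomm_ring
      _ = b * c + a ^ 3 := by rw [hbc, Units.val_pow_succ_mul_inv]
  have hbcq : b * c * q = ↑a⁻¹ * q + ↑a⁻¹ + a ^ 3 :=
    calc b * c * q = (c * q + p * c * q) * ↑a⁻¹ := by rw [hbc, mul_assoc, hqa]; noncomm_ring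
      _ = c * q * ↑a⁻¹ + ↑a⁻¹ + a ^ 4 * ↑a⁻¹ := by rw [hpq]; noncomm_ring
      _ = ↑a⁻¹ * q + ↑a⁻¹ + a ^ 3 := by rw [hqa, Units.val_pow_succ_mul_inv]
  have hnum : p * ((c * u) ^ 2 + a ^ 2) = (a ^ 2 + (b * c) ^ 2) * q :=
    calc p * ((c * u) ^ 2 + a ^ 2) = p * (c * u) * (↑a⁻¹ * (1 + q)) + p * a ^ 2 := by
          rw [sq, ← hcu]; noncomm_ring
      _ = b * c * ↑a⁻¹ * (1 + q) + a ^ 3 * ↑a⁻¹ * (1 + q) + p * a ^ 2 := by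
          rw [hpcu]; noncomm_ring
      _ = a ^ 2 * q + b * c * (↑a⁻¹ * q + ↑a⁻¹) + (b * c * a) * a ^ 2 := by
          rw [hba, Units.val_pow_succ_mul_inv]; noncomm_ring
      _ = (a ^ 2 + (b * c) ^ 2) * q := by
          rw [add_mul, sq (b * c), mul_assoc (b * c) (b * c), hbcq]; noncomm_ring
  have hden : p * ((c * a) ^ 2 + b ^ 2) = (a ^ 2 + (b * c) ^ 2) * p := by
    rw [mul_add, add_mul, mul_mul_sq_eq_sq_mul_of_mul_mul_eq hpa,
      mul_sq_eq_sq_mul_of_mul_mul_eq hbp]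
  rw [Units.mul_inv_eq_iff_eq_mul, ← Units.mul_right_inj p, hnum, ← mul_assoc, ← mul_assoc, hden,
    Units.mul_inv_cancel_right]

def oneFourInvariant {D : Type*} [DivisionRing D] (R : ℤ → Dˣ) (C : Dˣ) (n : ℤ) : D :=
  (((C : D) * R (2 * n)) ^ 2 + (R (2 * (n + 1)) : D) ^ 2) *
    ((R (2 * (n + 1)) : D) * C * R (2 * n) - 1)⁻¹

namespace IsOneFourSolution

variable {D : Type*} [DivisionRing D] {R : ℤ → Dˣ} {C : Dˣ}

theorem twisted_comm (h : IsOneFourSolution R C) {i j : ℤ} (hij : j = i + 1) :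
    (R j : D) * C * R i = R i * R j := by
  subst hij
  rw [h.1 i]
  simp only [mul_assoc, Units.mul_inv_cancel_left, Units.inv_mul, mul_one]

theorem mul_mul_eq_one_add_odd (h : IsOneFourSolution R C) (n : ℤ) :
    (R (2 * (n + 1)) : D) * C * R (2 * n) = 1 + R (2 * n + 1) := by
  have := h.2.1 (n + 1)
  rwa [show 2 * (n + 1) - 2 = 2 * n by ring, show 2 * (n + 1) - 1 = 2 * n + 1 by ring] at this

theorem mul_mul_eq_one_add_pow_four (h : IsOneFourSolution R C) (n : ℤ) :
    (R (2 * (n + 1) + 1) : D) * C * R (2 * n + 1) = 1 + (R (2 * (n + 1)) : D) ^ 4 := by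
  have := h.2.2 (n + 1)
  rwa [show 2 * (n + 1) - 1 = 2 * n + 1 by ring] at this

theorem oneFourInvariant_succ (h : IsOneFourSolution R C) (n : ℤ) :
    oneFourInvariant R C (n + 1) = oneFourInvariant R C n := by
  have hden (k : ℤ) :
      ((R (2 * (k + 1)) : D) * C * R (2 * k) - 1)⁻¹ = ((R (2 * k + 1))⁻¹ : Dˣ) := by
    rw [h.mul_mul_eq_one_add_odd, add_sub_cancel_left, Units.val_inv_eq_inv_val]
  simp only [oneFourInvariant, hden]
  exact (sq_add_sq_mul_inv_eq_of_oneFour_relations (h.twisted_comm (by ring))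
    (h.twisted_comm (by ring)) (h.mul_mul_eq_one_add_pow_four n) (h.twisted_comm (by ring))
    (h.mul_mul_eq_one_add_odd n) (h.mul_mul_eq_one_add_odd (n + 1))).symm

end IsOneFourSolution

/-- For the `(1,4)`-system, with `u_n := R_{2n}`, the quantity
`K_n = ((C u_n)² + u_{n+1}²) (u_{n+1} C u_n − 1)⁻¹` is a conserved quantity. -/
theorem onefour_K_conserved {D : Type*} [DivisionRing D] (R : ℤ → Dˣ) (C : Dˣ)
    (h : IsOneFourSolution R C) :
    ∀ n m : ℤ,
      (((C : D) * (R (2 * n) : D)) ^ 2 + (R (2 * (n + 1)) : D) ^ 2) *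
          ((R (2 * (n + 1)) : D) * (C : D) * (R (2 * n) : D) - 1)⁻¹ =
      (((C : D) * (R (2 * m) : D)) ^ 2 + (R (2 * (m + 1)) : D) ^ 2) *
          ((R (2 * (m + 1)) : D) * (C : D) * (R (2 * m) : D) - 1)⁻¹ := by
  have hper : Function.Periodic (oneFourInvariant R C) 1 := h.oneFourInvariant_succ
  have hconst (k : ℤ) : oneFourInvariant R C k = oneFourInvariant R C 0 := by
    simpa using hper.int_mul_eq k
  intro n m
  exact (hconst n).trans (hconst m).symm
end

section
/- Let D be a division ring and (R, C) a solution of the non-commutative (1,4)-system with commutator C; set u_n := R_{2n} and K := ((C u₀)² + (u₁)²)(u₁ C u₀ − 1)⁻¹. Then for all n ∈ ℤ the linear recursion relations with constant coefficients hold: u_{n+2} C − u_{n+1} K + u_n = 0 and u_{n+2} − K u_{n+1} + C u_n = 0. Moreover: if the initial data are x = C R₀, y = R₁ (i.e. C = x y x⁻¹ y⁻¹, R₀ = y x y⁻¹, R₁ = y, hence u₀ = y x y⁻¹ and u₁ = (1+y) x⁻¹), then K = (x² + ((1+y) x⁻¹)²) y⁻¹; and if the initial data are X = C R₁, Y = R₂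 (i.e. C = X Y X⁻¹ Y⁻¹, R₁ = Y X Y⁻¹, R₂ = Y), then K = (Y² + ((1+X) Y⁻¹)²) Y X⁻¹ Y⁻¹. -/
/-! Write `a, b, c` for `u_n, u_{n+1}, u_{n+2}` and `d, e` for `R_{2n+1}, R_{2n+3}`.
Relation (i) is the twisted commutation `R_{k+1} C R_k = R_k R_{k+1}`, which together with (ii),
`d = b C a - 1`, gives `a b = d + C⁻¹`. With these identities, (iii) turns into the
noncommutative polynomial identity `(c C + a) d = b X` for `X = (C a)² + b²`; moreover `d`
conjugates `X` into `a² + (b C)²`, which yields the mirror identity `K_n b = c + C a` for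
`K_n = X d⁻¹`. The same computation shifted by one step gives `b K_{n+1} = c C + a = b K_n`,
so `K_n` does not depend on `n`, and `K = K_0`. -/

namespace OneFour

section Step

variable {D : Type*} [DivisionRing D] {C a b c d e : D}

theorem mul_eq_add_inv (hC : C ≠ 0) (ha : a ≠ 0) (hda : d * C * a = a * d)
    (hbCa : b * C * a = 1 + d) : a * b = d + C⁻¹ := by
  refine mul_right_cancel₀ (mul_ne_zero hC ha) ?_
  linear_combination (norm := noncomm_ring) a * hbCa - hda - inv_mul_cancel₀ hC * a

theorem mul_mul_mul_mul_eq (hbd : b * C * d = d * b) (hcCb : c * C * b = 1 + e)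
    (heCd : e * C * d = 1 + b ^ 4) : c * C * d * b = 1 + b ^ 4 + C * d := by
  linear_combination (norm := noncomm_ring) -(c * C * hbd) + hcCb * (C * d) + heCd

theorem mul_sq_add_sq_comm (hda : d * C * a = a * d) (hbd : b * C * d = d * b) :
    d * ((C * a) ^ 2 + b ^ 2) = (a ^ 2 + (b * C) ^ 2) * d := by
  linear_combination (norm := noncomm_ring) hda * C * a + a * hda - hbd * b - b * C * hbd

theorem left_recursion_mul (hC : C ≠ 0) (hb : b ≠ 0) (hda : d * C * a = a * d)
    (hbCa : b * C * a = 1 + d) (hab : a * b = d + C⁻¹)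
    (hcCdb : c * C * d * b = 1 + b ^ 4 + C * d) :
    (c * C + a) * d = b * ((C * a) ^ 2 + b ^ 2) := by
  refine mul_right_cancel₀ hb ?_
  linear_combination (norm := noncomm_ring)
    hcCdb - hda * b - hbCa * (C * a * b) - C * hab - mul_inv_cancel₀ hC

theorem mul_right_recursion (hC : C ≠ 0) (hd : d ≠ 0) (hb : b ≠ 0) (hbd : b * C * d = d * b)
    (hab : a * b = d + C⁻¹) (hcCdb : c * C * d * b = 1 + b ^ 4 + C * d)
    (hconj : d * ((C * a) ^ 2 + b ^ 2) = (a ^ 2 + (b * C) ^ 2) * d) :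
    d * (c + C * a) = (a ^ 2 + (b * C) ^ 2) * b := by
  have hCd : (c + C * a) * (C * d) = ((C * a) ^ 2 + b ^ 2) * b := by
    refine mul_right_cancel₀ hb ?_
    linear_combination (norm := noncomm_ring) hcCdb - C * a * C * hab * b - C * hab
      - mul_inv_cancel₀ hC - C * a * mul_inv_cancel₀ hC * b
  refine mul_right_cancel₀ (mul_ne_zero hC hd) ?_
  linear_combination (norm := noncomm_ring) d * hCd + hconj * b - (a ^ 2 + (b * C) ^ 2) * hbd

theorem sq_add_sq_mul_inv_mul (hd : d ≠ 0)
    (hconj : d * ((C * a) ^ 2 + b ^ 2) = (a ^ 2 + (b * C) ^ 2) * d)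
    (hrec : d * (c + C * a) = (a ^ 2 + (b * C) ^ 2) * b) :
    ((C * a) ^ 2 + b ^ 2) * d⁻¹ * b = c + C * a := by
  calc _ = d⁻¹ * (d * ((C * a) ^ 2 + b ^ 2)) * d⁻¹ * b := by rw [inv_mul_cancel_left₀ hd]
    _ = d⁻¹ * (d * (c + C * a)) := by rw [hconj, hrec]; simp [mul_assoc, hd]
    _ = c + C * a := inv_mul_cancel_left₀ hd _

theorem left_recursion_succ_mul (hda : d * C * a = a * d) (hce : c * C * e = e * c)
    (hab : a * b = d + C⁻¹) (hbc : b * c = e + C⁻¹)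
    (hrec : d * (c + C * a) = (a ^ 2 + (b * C) ^ 2) * b) :
    (c * C + a) * e = b * ((C * b) ^ 2 + c ^ 2) := by
  linear_combination (norm := noncomm_ring)
    hce - hbc * c - a * hbc + hab * c + hrec - hda + a * hab

end Step

theorem coeff_eq_of_R₀_R₁ {D : Type*} [DivisionRing D] {r₂ : D} {C r₀ r₁ x y : Dˣ}
    (hC : C = x * y * x⁻¹ * y⁻¹) (h₀ : r₀ = y * x * y⁻¹) (h₁ : r₁ = y)
    (h₂₁ : r₂ * C * r₀ = 1 + r₁) :
    ((C * r₀ : D) ^ 2 + r₂ ^ 2) * (r₂ * C * r₀ - 1)⁻¹ =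
      ((x : D) ^ 2 + ((1 + (y : D)) * ((x⁻¹ : Dˣ) : D)) ^ 2) * ((y⁻¹ : Dˣ) : D) := by
  have hx : (C * r₀ : D) = x := by rw [← Units.val_mul, hC, h₀]; group
  have hr₂ : r₂ = (1 + y) * ((x⁻¹ : Dˣ) : D) := by
    rw [Units.eq_mul_inv_iff_mul_eq, ← hx, ← mul_assoc, h₂₁, h₁]
  rw [hx, h₂₁, add_sub_cancel_left, hr₂, h₁, ← Units.val_inv_eq_inv_val]

theorem coeff_eq_of_R₁_R₂ {D : Type*} [DivisionRing D] {C r₀ : D} {r₁ r₂ X Y : Dˣ}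
    (h₁ : r₁ = Y * X * Y⁻¹) (h₂ : r₂ = Y) (h₂₁ : r₂ * C * r₀ = 1 + r₁) :
    ((C * r₀) ^ 2 + (r₂ : D) ^ 2) * (r₂ * C * r₀ - 1)⁻¹ =
      ((Y : D) ^ 2 + ((1 + (X : D)) * ((Y⁻¹ : Dˣ) : D)) ^ 2) *
        (Y : D) * ((X⁻¹ : Dˣ) : D) * ((Y⁻¹ : Dˣ) : D) := by
  subst r₁ r₂
  have hCr₀ : C * r₀ = (1 + X) * ((Y⁻¹ : Dˣ) : D) := by
    refine mul_left_cancel₀ Y.ne_zero ?_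
    rw [← mul_assoc, h₂₁]
    simp [mul_add, add_mul, mul_assoc]
  rw [hCr₀, h₂₁, add_sub_cancel_left, ← Units.val_inv_eq_inv_val]
  simp [add_comm, mul_assoc]

end OneFour

/-- The paper's `K`, computed from `u_n, u_{n+1}` instead of `u₀, u₁`. -/
noncomputable def oneFourCoeff {D : Type*} [DivisionRing D] (R : ℤ → Dˣ) (C : Dˣ) (n : ℤ) :
    D :=
  ((C * R (2 * n) : D) ^ 2 + (R (2 * (n + 1)) : D) ^ 2) *
    ((R (2 * (n + 1)) * C * R (2 * n) : D) - 1)⁻¹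

namespace IsOneFourSolution

variable {D : Type*} [DivisionRing D] {R : ℤ → Dˣ} {C : Dˣ}

theorem mul_mul_eq_mul (h : IsOneFourSolution R C) {j k : ℤ} (hk : k = j + 1) :
    (R k * C * R j : D) = R j * R k := by
  subst hk
  simp [h.1 j, mul_assoc]

theorem mul_mul_eq_one_add (h : IsOneFourSolution R C) {i j k : ℤ} (hi : Even i)
    (hj : j = i + 1) (hk : k = i + 2) : (R k * C * R i : D) = 1 + R j := by
  obtain ⟨m, rfl⟩ := hi
  have := h.2.1 (m + 1)
  rwa [show 2 * (m + 1) - 2 = m + m by ring, show 2 * (m + 1) - 1 = j by omega,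
    show 2 * (m + 1) = k by omega] at this

theorem mul_mul_eq_one_add_pow (h : IsOneFourSolution R C) {i j k : ℤ} (hi : Odd i)
    (hj : j = i + 1) (hk : k = i + 2) : (R k * C * R i : D) = 1 + R j ^ 4 := by
  obtain ⟨m, rfl⟩ := hi
  have := h.2.2 (m + 1)
  rwa [show 2 * (m + 1) + 1 = k by omega, show 2 * (m + 1) - 1 = 2 * m + 1 by ring,
    show 2 * (m + 1) = j by omega] at this

theorem mul_eq_add_inv (h : IsOneFourSolution R C) {i j k : ℤ} (hi : Even i)
    (hj : j = i + 1) (hk : k = i + 2) : (R i * R k : D) = R j + (C : D)⁻¹ :=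
  OneFour.mul_eq_add_inv C.ne_zero (R i).ne_zero (h.mul_mul_eq_mul hj)
    (h.mul_mul_eq_one_add hi hj hk)

theorem mul_mul_mul_mul_eq (h : IsOneFourSolution R C) (n : ℤ) :
    (R (2 * (n + 2)) * C * R (2 * n + 1) * R (2 * (n + 1)) : D) =
      1 + (R (2 * (n + 1)) : D) ^ 4 + C * R (2 * n + 1) :=
  OneFour.mul_mul_mul_mul_eq (h.mul_mul_eq_mul (by ring))
    (h.mul_mul_eq_one_add (even_two_mul (n + 1)) rfl (by ring))
    (h.mul_mul_eq_one_add_pow (odd_two_mul_add_one n) (by ring) (by ring))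

theorem mul_sq_add_sq_comm (h : IsOneFourSolution R C) (n : ℤ) :
    (R (2 * n + 1) : D) * ((C * R (2 * n)) ^ 2 + (R (2 * (n + 1)) : D) ^ 2) =
      ((R (2 * n) : D) ^ 2 + (R (2 * (n + 1)) * C) ^ 2) * R (2 * n + 1) :=
  OneFour.mul_sq_add_sq_comm (h.mul_mul_eq_mul rfl) (h.mul_mul_eq_mul (by ring))

theorem mul_right_recursion (h : IsOneFourSolution R C) (n : ℤ) :
    (R (2 * n + 1) * (R (2 * (n + 2)) + C * R (2 * n)) : D) =
      ((R (2 * n) : D) ^ 2 + (R (2 * (n + 1)) * C) ^ 2) * R (2 * (n + 1)) :=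
  OneFour.mul_right_recursion C.ne_zero (R _).ne_zero (R _).ne_zero (h.mul_mul_eq_mul (by ring))
    (h.mul_eq_add_inv (even_two_mul n) rfl (by ring)) (h.mul_mul_mul_mul_eq n)
    (h.mul_sq_add_sq_comm n)

theorem oneFourCoeff_eq (h : IsOneFourSolution R C) (n : ℤ) :
    oneFourCoeff R C n =
      ((C * R (2 * n) : D) ^ 2 + (R (2 * (n + 1)) : D) ^ 2) * (R (2 * n + 1) : D)⁻¹ := by
  rw [oneFourCoeff, h.mul_mul_eq_one_add (even_two_mul n) rfl (by ring), add_sub_cancel_left]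

theorem mul_oneFourCoeff (h : IsOneFourSolution R C) (n : ℤ) :
    (R (2 * (n + 1)) : D) * oneFourCoeff R C n = R (2 * (n + 2)) * C + R (2 * n) := by
  rw [h.oneFourCoeff_eq, ← mul_assoc, ← OneFour.left_recursion_mul C.ne_zero (R _).ne_zero
    (h.mul_mul_eq_mul rfl) (h.mul_mul_eq_one_add (even_two_mul n) rfl (by ring))
    (h.mul_eq_add_inv (even_two_mul n) rfl (by ring)) (h.mul_mul_mul_mul_eq n),
    mul_inv_cancel_right₀ (R _).ne_zero]

theorem oneFourCoeff_mul (h : IsOneFourSolution R C) (n : ℤ) :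
    oneFourCoeff R C n * R (2 * (n + 1)) = R (2 * (n + 2)) + C * R (2 * n) := by
  rw [h.oneFourCoeff_eq]
  exact OneFour.sq_add_sq_mul_inv_mul (R _).ne_zero (h.mul_sq_add_sq_comm n)
    (h.mul_right_recursion n)

theorem mul_oneFourCoeff_succ (h : IsOneFourSolution R C) (n : ℤ) :
    (R (2 * (n + 1)) : D) * oneFourCoeff R C (n + 1) = R (2 * (n + 2)) * C + R (2 * n) := by
  rw [h.oneFourCoeff_eq, show n + 1 + 1 = n + 2 by ring, ← mul_assoc,
    ← OneFour.left_recursion_succ_mul (h.mul_mul_eq_mul rfl) (h.mul_mul_eq_mul (by ring))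
      (h.mul_eq_add_inv (even_two_mul n) rfl (by ring))
      (h.mul_eq_add_inv (even_two_mul (n + 1)) rfl (by ring)) (h.mul_right_recursion n),
    mul_inv_cancel_right₀ (R _).ne_zero]

theorem oneFourCoeff_succ (h : IsOneFourSolution R C) (n : ℤ) :
    oneFourCoeff R C (n + 1) = oneFourCoeff R C n :=
  mul_left_cancel₀ (R _).ne_zero ((h.mul_oneFourCoeff_succ n).trans (h.mul_oneFourCoeff n).symm)

theorem oneFourCoeff_eq_oneFourCoeff_zero (h : IsOneFourSolution R C) (n : ℤ) :
    oneFourCoeff R C n = oneFourCoeff R C 0 := by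
  simpa using Function.Periodic.int_mul_eq h.oneFourCoeff_succ n

end IsOneFourSolution

/-- For the `(1,4)`-system, with `u_n := R_{2n}` and
`K := ((C u₀)² + u₁²)(u₁ C u₀ − 1)⁻¹`, the linear recursions
`u_{n+2} C − u_{n+1} K + u_n = 0` and `u_{n+2} − K u_{n+1} + C u_n = 0` hold; moreover
for initial data `x = C R₀`, `y = R₁` one has `K = (x² + ((1+y) x⁻¹)²) y⁻¹`, and for
initial data `X = C R₁`, `Y = R₂` one has `K = (Y² + ((1+X) Y⁻¹)²) Y X⁻¹ Y⁻¹`. -/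
theorem onefour_linear_recursions {D : Type*} [DivisionRing D] (R : ℤ → Dˣ) (C : Dˣ)
    (h : IsOneFourSolution R C) :
    let K : D := (((C : D) * (R 0 : D)) ^ 2 + (R 2 : D) ^ 2) *
      ((R 2 : D) * (C : D) * (R 0 : D) - 1)⁻¹
    (∀ n : ℤ, (R (2 * (n + 2)) : D) * (C : D) - (R (2 * (n + 1)) : D) * K +
        (R (2 * n) : D) = 0) ∧
    (∀ n : ℤ, (R (2 * (n + 2)) : D) - K * (R (2 * (n + 1)) : D) +
        (C : D) * (R (2 * n) : D) = 0) ∧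
    (∀ x y : Dˣ, C = x * y * x⁻¹ * y⁻¹ → R 0 = y * x * y⁻¹ → R 1 = y →
        K = ((x : D) ^ 2 + ((1 + (y : D)) * ((x⁻¹ : Dˣ) : D)) ^ 2) * ((y⁻¹ : Dˣ) : D)) ∧
    (∀ X Y : Dˣ, C = X * Y * X⁻¹ * Y⁻¹ → R 1 = Y * X * Y⁻¹ → R 2 = Y →
        K = ((Y : D) ^ 2 + ((1 + (X : D)) * ((Y⁻¹ : Dˣ) : D)) ^ 2) *
          (Y : D) * ((X⁻¹ : Dˣ) : D) * ((Y⁻¹ : Dˣ) : D)) := by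
  intro K
  have hK (n : ℤ) : K = oneFourCoeff R C n := by
    rw [h.oneFourCoeff_eq_oneFourCoeff_zero n]
    simp only [K, oneFourCoeff, mul_zero, zero_add, mul_one]
  have h₂₁ : (R 2 * C * R 0 : D) = 1 + R 1 :=
    h.mul_mul_eq_one_add Even.zero (by norm_num) (by norm_num)
  refine ⟨fun n => ?_, fun n => ?_, fun x y hC h₀ h₁ => ?_, fun X Y _ h₁ h₂ => ?_⟩
  · rw [hK n, h.mul_oneFourCoeff n]
    abel
  · rw [hK n, h.oneFourCoeff_mul n]
    abel
  · exact OneFour.coeff_eq_of_R₀_R₁ hC h₀ h₁ h₂₁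
  · exact OneFour.coeff_eq_of_R₁_R₂ h₁ h₂ h₂₁
end

section
/- Let D be a division ring, x, y ∈ Dˣ, and (R, C) a solution of the non-commutative (1,4)-system with commutator C and initial data C = x y x⁻¹ y⁻¹, R₀ = y x y⁻¹, R₁ = y; set u_n := R_{2n}, so u₀ = y x y⁻¹ and u₁ = (1+y) x⁻¹. Define the weights y₁ = (1+y) x⁻¹ y x⁻¹ y⁻¹, y₂ = (x² + (1+y) x⁻² (1+y)) y⁻¹ x⁻¹ y x⁻¹ y⁻¹, y₃ = (x³ + (1+y) x⁻¹) x⁻¹ y⁻¹, and let T be the 2×2 matrix over D with entries T_{0,0} = y₁, T_{0,1} = 1, T_{1,0} = y₂, T_{1,1} = y₃. Then for all n ≥ 0, u_n = (T^n)_{0,0} · u₀. Moreover y₁ = u₁ u₀⁻¹, y₃ = K − y₁ and y₂ = y₃ y₁ − C, where K = (x² + ((1+y) x⁻¹)²) y⁻¹ is the conserved quantity. -/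
open Matrix

section certs
variable {D : Type*} [Ring D]

private theorem of_sub_eq_zero' {A B : D} (h : A - B = 0) : A = B := sub_eq_zero.mp h

private theorem cert_rho (U0 U1 V0 U1i Cc : D)
    (hcm : V0 * U1 = U1 * Cc * V0) (he2 : U1 * Cc * U0 = 1 + V0) (hui : U1i * U1 = 1) :
    Cc * U0 * U1 + Cc = Cc * U1 * Cc * U0 + 1 := by
  have g1 : V0 * U1 - U1 * Cc * V0 = 0 := sub_eq_zero.mpr hcm
  have g2 : U1 * Cc * U0 - (1 + V0) = 0 := sub_eq_zero.mpr he2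
  have g3 : U1i * U1 - 1 = 0 := sub_eq_zero.mpr hui
  have cert : (Cc * U0 * U1 + Cc) - (Cc * U1 * Cc * U0 + 1)
      = U1i * ((U1 * Cc * U0 - (1 + V0)) * U1 - U1 * Cc * (U1 * Cc * U0 - (1 + V0))
          + (V0 * U1 - U1 * Cc * V0))
        - (U1i * U1 - 1) * ((Cc * U0 * U1 + Cc) - (Cc * U1 * Cc * U0 + 1)) := by
    noncomm_ring
  rw [g1, g2, g3] at cert
  simp only [zero_mul, mul_zero, sub_zero, add_zero, zero_add, zero_sub, neg_zero] at cert
  exact of_sub_eq_zero' cert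

private theorem cert_W (U0 U1 U2 V0 V1 K Cc : D)
    (hcm : V0 * U1 = U1 * Cc * V0)
    (he2 : U1 * Cc * U0 = 1 + V0)
    (he2p : U2 * Cc * U1 = 1 + V1)
    (he3p : V1 * Cc * V0 = 1 + U1 * U1 * U1 * U1)
    (hrho : Cc * U0 * U1 + Cc = Cc * U1 * Cc * U0 + 1)
    (hJJ : Cc * U0 * (Cc * U0) + U1 * U1 = K * V0) :
    (U2 + Cc * U0) * Cc * V0 * U1 = K * U1 * Cc * V0 * U1 := by
  have g1 : V0 * U1 - U1 * Cc * V0 = 0 := sub_eq_zero.mpr hcm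
  have g2 : U1 * Cc * U0 - (1 + V0) = 0 := sub_eq_zero.mpr he2
  have g3 : U2 * Cc * U1 - (1 + V1) = 0 := sub_eq_zero.mpr he2p
  have g4 : V1 * Cc * V0 - (1 + U1 * U1 * U1 * U1) = 0 := sub_eq_zero.mpr he3p
  have g5 : (Cc * U0 * U1 + Cc) - (Cc * U1 * Cc * U0 + 1) = 0 := sub_eq_zero.mpr hrho
  have g6 : Cc * U0 * (Cc * U0) + U1 * U1 - K * V0 = 0 := sub_eq_zero.mpr hJJ
  have cert : (U2 + Cc * U0) * Cc * V0 * U1 - K * U1 * Cc * V0 * U1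
      = (U2 * Cc + Cc * U0 * Cc) * (V0 * U1 - U1 * Cc * V0)
        + K * (V0 * U1 - U1 * Cc * V0) * U1
        + (U2 * Cc * U1 - (1 + V1)) * (Cc * V0)
        + (V1 * Cc * V0 - (1 + U1 * U1 * U1 * U1))
        - (1 + Cc * U0 * Cc * U1) * ((Cc * U0 * U1 + Cc) - (Cc * U1 * Cc * U0 + 1))
        - (Cc * U0) * ((Cc * U0 * U1 + Cc) - (Cc * U1 * Cc * U0 + 1)) * U1
        - (Cc + Cc * U0 * Cc * U1 * Cc) * (U1 * Cc * U0 - (1 + V0))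
        + (Cc * U0 * (Cc * U0) + U1 * U1 - K * V0) * (U1 * U1) := by
    noncomm_ring
  rw [g1, g2, g3, g4, g5, g6] at cert
  simp only [zero_mul, mul_zero, sub_zero, add_zero, zero_add, zero_sub, neg_zero] at cert
  exact of_sub_eq_zero' cert

private theorem cert_MR (U0 U1 U2 K Cc : D)
    (hPS : U1 * K + Cc * U0 * Cc = K * U1 * Cc + U0)
    (hM : U2 = K * U1 - Cc * U0) :
    U1 * K = U0 + U2 * Cc := by
  have g1 : (U1 * K + Cc * U0 * Cc) - (K * U1 * Cc + U0) = 0 := sub_eq_zero.mpr hPS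
  have g2 : U2 - (K * U1 - Cc * U0) = 0 := sub_eq_zero.mpr hM
  have cert : U1 * K - (U0 + U2 * Cc)
      = ((U1 * K + Cc * U0 * Cc) - (K * U1 * Cc + U0)) - (U2 - (K * U1 - Cc * U0)) * Cc := by
    noncomm_ring
  rw [g1, g2] at cert
  simp only [zero_mul, mul_zero, sub_zero, add_zero, zero_add, zero_sub, neg_zero] at cert
  exact of_sub_eq_zero' cert

private theorem cert_JJ' (U0 U1 U2 V1 K Cc Ci : D)
    (he2p : U2 * Cc * U1 = 1 + V1)
    (hrhop : Cc * U1 * U2 + Cc = Cc * U2 * Cc * U1 + 1)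
    (hM : U2 = K * U1 - Cc * U0)
    (hiA : U0 * K * U1 = Ci * K * Ci + U0 * Cc * U0 + U1 * Cc * U1)
    (hc1 : Cc * Ci = 1) (hc2 : Ci * Cc = 1) :
    Cc * U1 * (Cc * U1) + U2 * U2 = K * V1 := by
  have g1 : U2 * Cc * U1 - (1 + V1) = 0 := sub_eq_zero.mpr he2p
  have g2 : (Cc * U1 * U2 + Cc) - (Cc * U2 * Cc * U1 + 1) = 0 := sub_eq_zero.mpr hrhop
  have g3 : U2 - (K * U1 - Cc * U0) = 0 := sub_eq_zero.mpr hM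
  have g4 : U0 * K * U1 - (Ci * K * Ci + U0 * Cc * U0 + U1 * Cc * U1) = 0 := sub_eq_zero.mpr hiA
  have g5 : Cc * Ci - 1 = 0 := sub_eq_zero.mpr hc1
  have g6 : Ci * Cc - 1 = 0 := sub_eq_zero.mpr hc2
  have cert : Cc * U1 * (Cc * U1) + U2 * U2 - K * V1
      = -((Cc * Ci - 1) * (K * Ci)
          + Cc * (U0 * K * U1 - (Ci * K * Ci + U0 * Cc * U0 + U1 * Cc * U1))
          + Cc * U0 * (U2 - (K * U1 - Cc * U0))
          - (U2 - (K * U1 - Cc * U0)) * U2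
          + K * (Ci * Cc - 1) * (U1 * U2 + 1 - U2 * Cc * U1)
          - K * Ci * ((Cc * U1 * U2 + Cc) - (Cc * U2 * Cc * U1 + 1))
          - K * (U2 * Cc * U1 - (1 + V1))) := by
    noncomm_ring
  rw [g1, g2, g3, g4, g5, g6] at cert
  simp only [zero_mul, mul_zero, sub_zero, add_zero, zero_add, zero_sub, neg_zero, neg_neg,
    sub_self] at cert
  exact of_sub_eq_zero' cert

private theorem cert_iA' (U0 U1 U2 K Cc Ci : D)
    (hiA : U0 * K * U1 = Ci * K * Ci + U0 * Cc * U0 + U1 * Cc * U1)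
    (hM : U2 = K * U1 - Cc * U0)
    (hMR : U1 * K = U0 + U2 * Cc) :
    U1 * K * U2 = Ci * K * Ci + U1 * Cc * U1 + U2 * Cc * U2 := by
  have g1 : U0 * K * U1 - (Ci * K * Ci + U0 * Cc * U0 + U1 * Cc * U1) = 0 := sub_eq_zero.mpr hiA
  have g2 : U2 - (K * U1 - Cc * U0) = 0 := sub_eq_zero.mpr hM
  have g3 : U1 * K - (U0 + U2 * Cc) = 0 := sub_eq_zero.mpr hMR
  have cert : U1 * K * U2 - (Ci * K * Ci + U1 * Cc * U1 + U2 * Cc * U2)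
      = (U0 * K * U1 - (Ci * K * Ci + U0 * Cc * U0 + U1 * Cc * U1))
        + U0 * (U2 - (K * U1 - Cc * U0))
        + (U1 * K - (U0 + U2 * Cc)) * U2 := by
    noncomm_ring
  rw [g1, g2, g3] at cert
  simp only [zero_mul, mul_zero, sub_zero, add_zero, zero_add, zero_sub, neg_zero] at cert
  exact of_sub_eq_zero' cert

private theorem cert_PS' (U0 U1 U2 K Cc : D)
    (hPH : K * U0 + Cc * U1 * Cc = Cc * U0 * K + U1)
    (hPS : U1 * K + Cc * U0 * Cc = K * U1 * Cc + U0)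
    (hM : U2 = K * U1 - Cc * U0) :
    U2 * K + Cc * U1 * Cc = K * U2 * Cc + U1 := by
  have g1 : (K * U0 + Cc * U1 * Cc) - (Cc * U0 * K + U1) = 0 := sub_eq_zero.mpr hPH
  have g2 : (U1 * K + Cc * U0 * Cc) - (K * U1 * Cc + U0) = 0 := sub_eq_zero.mpr hPS
  have g3 : U2 - (K * U1 - Cc * U0) = 0 := sub_eq_zero.mpr hM
  have cert : (U2 * K + Cc * U1 * Cc) - (K * U2 * Cc + U1)
      = ((K * U0 + Cc * U1 * Cc) - (Cc * U0 * K + U1))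
        + K * ((U1 * K + Cc * U0 * Cc) - (K * U1 * Cc + U0))
        + (U2 - (K * U1 - Cc * U0)) * K
        - K * (U2 - (K * U1 - Cc * U0)) * Cc := by
    noncomm_ring
  rw [g1, g2, g3] at cert
  simp only [zero_mul, mul_zero, sub_zero, add_zero, zero_add, zero_sub, neg_zero] at cert
  exact of_sub_eq_zero' cert

private theorem cert_PH' (U0 U1 U2 K Cc : D)
    (hPS : U1 * K + Cc * U0 * Cc = K * U1 * Cc + U0)
    (hM : U2 = K * U1 - Cc * U0) :
    K * U1 + Cc * U2 * Cc = Cc * U1 * K + U2 := by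
  have g1 : (U1 * K + Cc * U0 * Cc) - (K * U1 * Cc + U0) = 0 := sub_eq_zero.mpr hPS
  have g2 : U2 - (K * U1 - Cc * U0) = 0 := sub_eq_zero.mpr hM
  have cert : (K * U1 + Cc * U2 * Cc) - (Cc * U1 * K + U2)
      = -(Cc * ((U1 * K + Cc * U0 * Cc) - (K * U1 * Cc + U0)))
        + Cc * (U2 - (K * U1 - Cc * U0)) * Cc
        - (U2 - (K * U1 - Cc * U0)) := by
    noncomm_ring
  rw [g1, g2] at cert
  simp only [zero_mul, mul_zero, sub_zero, add_zero, zero_add, zero_sub, neg_zero, neg_neg] at cert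
  exact of_sub_eq_zero' cert

private theorem cert_SA (a0 a1 a2 b0 b1 y1 y2 y3 K Cc : D)
    (hA1 : a2 = y1 * a1 + b1) (hB : b1 = y2 * a0 + y3 * b0) (hA0 : a1 = y1 * a0 + b0)
    (hK : K = y1 + y3) (hC : Cc = y3 * y1 - y2) :
    a2 = K * a1 - Cc * a0 := by
  have g1 : a2 - (y1 * a1 + b1) = 0 := sub_eq_zero.mpr hA1
  have g2 : b1 - (y2 * a0 + y3 * b0) = 0 := sub_eq_zero.mpr hB
  have g3 : a1 - (y1 * a0 + b0) = 0 := sub_eq_zero.mpr hA0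
  have g4 : K - (y1 + y3) = 0 := sub_eq_zero.mpr hK
  have g5 : Cc - (y3 * y1 - y2) = 0 := sub_eq_zero.mpr hC
  have cert : a2 - (K * a1 - Cc * a0)
      = (a2 - (y1 * a1 + b1)) + (b1 - (y2 * a0 + y3 * b0)) - y3 * (a1 - (y1 * a0 + b0))
        - (K - (y1 + y3)) * a1 + (Cc - (y3 * y1 - y2)) * a0 := by
    noncomm_ring
  rw [g1, g2, g3, g4, g5] at cert
  simp only [zero_mul, mul_zero, sub_zero, add_zero, zero_add, zero_sub, neg_zero] at cert
  exact of_sub_eq_zero' cert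

end certs

section sys
variable {D : Type*} [DivisionRing D]

private def JJp (R : ℤ → Dˣ) (C : Dˣ) (K : D) (m : ℤ) : Prop :=
  (C : D) * R (2*m) * ((C : D) * R (2*m)) + (R (2*m+2) : D) * R (2*m+2) = K * R (2*m+1)

private def iAp (R : ℤ → Dˣ) (C : Dˣ) (K : D) (m : ℤ) : Prop :=
  (R (2*m) : D) * K * R (2*m+2)
    = (↑C⁻¹ : D) * K * ↑C⁻¹ + (R (2*m) : D) * C * R (2*m) + (R (2*m+2) : D) * C * R (2*m+2)

private def PSp (R : ℤ → Dˣ) (C : Dˣ) (K : D) (m : ℤ) : Prop :=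
  (R (2*m+2) : D) * K + (C : D) * R (2*m) * C = K * R (2*m+2) * C + R (2*m)

private def PHp (R : ℤ → Dˣ) (C : Dˣ) (K : D) (m : ℤ) : Prop :=
  K * (R (2*m) : D) + (C : D) * R (2*m+2) * C = (C : D) * R (2*m) * K + R (2*m+2)

private def Sp (R : ℤ → Dˣ) (C : Dˣ) (K : D) (m : ℤ) : Prop :=
  JJp R C K m ∧ iAp R C K m ∧ PSp R C K m ∧ PHp R C K m

variable (R : ℤ → Dˣ) (C : Dˣ)

private theorem lem_e2 (hs : IsOneFourSolution R C) (m : ℤ) :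
    (R (2*m+2) : D) * C * R (2*m) = 1 + R (2*m+1) := by
  have H := hs.2.1 (m+1)
  rw [show (2*(m+1)-2 : ℤ) = 2*m by ring, show (2*(m+1)-1 : ℤ) = 2*m+1 by ring,
    show (2*(m+1) : ℤ) = 2*m+2 by ring] at H
  exact H

private theorem lem_e3 (hs : IsOneFourSolution R C) (m : ℤ) :
    (R (2*m+3) : D) * C * R (2*m+1)
      = 1 + (R (2*m+2) : D) * R (2*m+2) * R (2*m+2) * R (2*m+2) := by
  have H := hs.2.2 (m+1)
  rw [show (2*(m+1)-1 : ℤ) = 2*m+1 by ring, show (2*(m+1)+1 : ℤ) = 2*m+3 by ring,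
    show (2*(m+1) : ℤ) = 2*m+2 by ring] at H
  rw [show ((R (2*m+2) : D)) ^ 4
      = (R (2*m+2) : D) * R (2*m+2) * R (2*m+2) * R (2*m+2) by
    rw [pow_succ, pow_succ, pow_succ, pow_one]] at H
  exact H

private theorem lem_comm (hs : IsOneFourSolution R C) (m : ℤ) :
    (R m : D) * R (m+1) = (R (m+1) : D) * C * R m := by
  rw [hs.1 m]
  simp [mul_assoc, Units.mul_inv_cancel_left, Units.inv_mul_cancel_left,
    Units.inv_mul_cancel_right, Units.mul_inv_cancel_right]

private theorem lem_cm (hs : IsOneFourSolution R C) (m : ℤ) :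
    (R (2*m+1) : D) * R (2*m+2) = (R (2*m+2) : D) * C * R (2*m+1) := by
  have H := lem_comm R C hs (2*m+1)
  rwa [show (2*m+1+1 : ℤ) = 2*m+2 by ring] at H

private theorem lem_rho (hs : IsOneFourSolution R C) (m : ℤ) :
    (C : D) * R (2*m) * R (2*m+2) + C = (C : D) * R (2*m+2) * C * R (2*m) + 1 :=
  cert_rho _ _ _ (↑(R (2*m+2))⁻¹ : D) _ (lem_cm R C hs m) (lem_e2 R C hs m)
    (Units.inv_mul _)

private theorem lem_M (hs : IsOneFourSolution R C) (K : D) (m : ℤ)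
    (hJJ : JJp R C K m) : (R (2*m+4) : D) = K * R (2*m+2) - (C : D) * R (2*m) := by
  have he2p := lem_e2 R C hs (m+1)
  rw [show (2*(m+1)+2 : ℤ) = 2*m+4 by ring, show (2*(m+1)+1 : ℤ) = 2*m+3 by ring,
    show (2*(m+1) : ℤ) = 2*m+2 by ring] at he2p
  have W := cert_W (↑(R (2*m)) : D) (↑(R (2*m+2))) (↑(R (2*m+4))) (↑(R (2*m+1)))
    (↑(R (2*m+3))) K (↑C) (lem_cm R C hs m) (lem_e2 R C hs m) he2p (lem_e3 R C hs m)
    (lem_rho R C hs m) hJJ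
  have c1 := mul_right_cancel₀ (Units.ne_zero (R (2*m+2))) W
  have c2 := mul_right_cancel₀ (Units.ne_zero (R (2*m+1))) c1
  have c3 := mul_right_cancel₀ (Units.ne_zero C) c2
  exact eq_sub_of_add_eq c3

private theorem lem_step (hs : IsOneFourSolution R C) (K : D) (m : ℤ)
    (hS : Sp R C K m) : Sp R C K (m+1) := by
  obtain ⟨hJJ, hiA, hPS, hPH⟩ := hS
  have hM := lem_M R C hs K m hJJ
  have hMR := cert_MR (↑(R (2*m)) : D) (↑(R (2*m+2))) (↑(R (2*m+4))) K (↑C) hPS hM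
  have he2p := lem_e2 R C hs (m+1)
  rw [show (2*(m+1)+2 : ℤ) = 2*m+4 by ring, show (2*(m+1)+1 : ℤ) = 2*m+3 by ring,
    show (2*(m+1) : ℤ) = 2*m+2 by ring] at he2p
  have hrhop := lem_rho R C hs (m+1)
  rw [show (2*(m+1)+2 : ℤ) = 2*m+4 by ring, show (2*(m+1) : ℤ) = 2*m+2 by ring] at hrhop
  have i1 : (2*(m+1) : ℤ) = 2*m+2 := by ring
  have i2 : (2*(m+1)+2 : ℤ) = 2*m+4 := by ring
  have i3 : (2*(m+1)+1 : ℤ) = 2*m+3 := by ring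
  refine ⟨?_, ?_, ?_, ?_⟩
  · show (C : D) * R (2*(m+1)) * ((C : D) * R (2*(m+1)))
        + (R (2*(m+1)+2) : D) * R (2*(m+1)+2) = K * R (2*(m+1)+1)
    rw [i2, i3, i1]
    exact cert_JJ' (↑(R (2*m)) : D) (↑(R (2*m+2))) (↑(R (2*m+4))) (↑(R (2*m+3))) K (↑C)
      (↑C⁻¹) he2p hrhop hM hiA (Units.mul_inv C) (Units.inv_mul C)
  · show (R (2*(m+1)) : D) * K * R (2*(m+1)+2)
        = (↑C⁻¹ : D) * K * ↑C⁻¹ + (R (2*(m+1)) : D) * C * R (2*(m+1))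
          + (R (2*(m+1)+2) : D) * C * R (2*(m+1)+2)
    rw [i2, i1]
    exact cert_iA' (↑(R (2*m)) : D) (↑(R (2*m+2))) (↑(R (2*m+4))) K (↑C) (↑C⁻¹) hiA hM hMR
  · show (R (2*(m+1)+2) : D) * K + (C : D) * R (2*(m+1)) * C
        = K * R (2*(m+1)+2) * C + R (2*(m+1))
    rw [i2, i1]
    exact cert_PS' (↑(R (2*m)) : D) (↑(R (2*m+2))) (↑(R (2*m+4))) K (↑C) hPH hPS hM
  · show K * (R (2*(m+1)) : D) + (C : D) * R (2*(m+1)+2) * C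
        = (C : D) * R (2*(m+1)) * K + R (2*(m+1)+2)
    rw [i2, i1]
    exact cert_PH' (↑(R (2*m)) : D) (↑(R (2*m+2))) (↑(R (2*m+4))) K (↑C) hPS hM

end sys

/-- Path model for the `(1,4)`-system in the `(x,y)` initial data: with transfer matrix
`T = !![y₁, 1; y₂, y₃]` on the barbell graph, `u_n = (T^n)_{0,0} · u₀`; moreover
`y₁ = u₁ u₀⁻¹`, `y₃ = K − y₁`, `y₂ = y₃ y₁ − C`. -/
theorem onefour_path_model_xy {D : Type*} [DivisionRing D] (x y : Dˣ) (R : ℤ → Dˣ)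
    (C : Dˣ) (h : IsOneFourSolution R C)
    (hC : C = x * y * x⁻¹ * y⁻¹) (hR0 : R 0 = y * x * y⁻¹) (hR1 : R 1 = y) :
    let y₁ : D := (1 + (y : D)) * ((x⁻¹ : Dˣ) : D) * (y : D) * ((x⁻¹ : Dˣ) : D) *
      ((y⁻¹ : Dˣ) : D)
    let y₂ : D := ((x : D) ^ 2 + (1 + (y : D)) * ((x⁻¹ : Dˣ) : D) ^ 2 * (1 + (y : D))) *
      ((y⁻¹ : Dˣ) : D) * ((x⁻¹ : Dˣ) : D) * (y : D) * ((x⁻¹ : Dˣ) : D) * ((y⁻¹ : Dˣ) : D)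
    let y₃ : D := ((x : D) ^ 3 + (1 + (y : D)) * ((x⁻¹ : Dˣ) : D)) * ((x⁻¹ : Dˣ) : D) *
      ((y⁻¹ : Dˣ) : D)
    let K : D := ((x : D) ^ 2 + ((1 + (y : D)) * ((x⁻¹ : Dˣ) : D)) ^ 2) * ((y⁻¹ : Dˣ) : D)
    (∀ n : ℕ,
      (R (2 * (n : ℤ)) : D) =
        ((!![y₁, 1; y₂, y₃] : Matrix (Fin 2) (Fin 2) D) ^ n) 0 0 * (R 0 : D)) ∧
    y₁ = (R 2 : D) * (((R 0)⁻¹ : Dˣ) : D) ∧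
    y₃ = K - y₁ ∧
    y₂ = y₃ * y₁ - (C : D) := by
  intro y₁ y₂ y₃ K
  -- basic coercion facts
  have hCD : (C : D) = ↑x * ↑y * ↑x⁻¹ * ↑y⁻¹ := by rw [hC]; simp only [Units.val_mul]
  have hR0D : (R 0 : D) = ↑y * ↑x * ↑y⁻¹ := by rw [hR0]; simp only [Units.val_mul]
  have hCiu : C⁻¹ = y * x * y⁻¹ * x⁻¹ := by rw [hC]; group
  have hCiD : (↑C⁻¹ : D) = ↑y * ↑x * ↑y⁻¹ * ↑x⁻¹ := by rw [hCiu]; simp only [Units.val_mul]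
  have hR0iu : (R 0)⁻¹ = y * x⁻¹ * y⁻¹ := by rw [hR0]; group
  have hR0iD : (↑(R 0)⁻¹ : D) = ↑y * ↑x⁻¹ * ↑y⁻¹ := by rw [hR0iu]; simp only [Units.val_mul]
  have hR1D : (R 1 : D) = ↑y := by rw [hR1]
  have hCR0 : (C : D) * R 0 = ↑x := by
    rw [hCD, hR0D]
    simp only [mul_assoc, Units.inv_mul_cancel_left, Units.mul_inv_cancel_left,
      Units.inv_mul, Units.mul_inv, mul_one, one_mul]
  have hu1 : (R 2 : D) = (1 + ↑y) * ↑x⁻¹ := by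
    have H := lem_e2 R C h 0
    norm_num at H
    rw [mul_assoc, hCR0, hR1D] at H
    calc (R 2 : D) = (R 2 : D) * ↑x * ↑x⁻¹ := (Units.mul_inv_cancel_right _ x).symm
    _ = (1 + ↑y) * ↑x⁻¹ := by rw [H]
  -- the three explicit identities
  have hy1 : y₁ = (R 2 : D) * ↑(R 0)⁻¹ := by
    rw [hu1, hR0iD]
    show (1 + (y : D)) * ↑x⁻¹ * ↑y * ↑x⁻¹ * ↑y⁻¹ = (1 + ↑y) * ↑x⁻¹ * (↑y * ↑x⁻¹ * ↑y⁻¹)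
    noncomm_ring
  have hy3 : y₃ = K - y₁ := by
    show ((x : D) ^ 3 + (1 + (y : D)) * ↑x⁻¹) * ↑x⁻¹ * ↑y⁻¹
      = ((x : D) ^ 2 + ((1 + (y : D)) * ↑x⁻¹) ^ 2) * ↑y⁻¹
        - (1 + (y : D)) * ↑x⁻¹ * ↑y * ↑x⁻¹ * ↑y⁻¹
    simp only [pow_succ, pow_zero, one_mul, mul_one, add_mul, mul_add, mul_assoc,
      Units.inv_mul_cancel_left, Units.mul_inv_cancel_left, Units.inv_mul, Units.mul_inv]
    try abel
  have hy2 : y₂ = y₃ * y₁ - (C : D) := by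
    rw [hCD]
    show ((x : D) ^ 2 + (1 + (y : D)) * ((x⁻¹ : Dˣ) : D) ^ 2 * (1 + (y : D))) *
      ↑y⁻¹ * ↑x⁻¹ * ↑y * ↑x⁻¹ * ↑y⁻¹
      = ((x : D) ^ 3 + (1 + (y : D)) * ↑x⁻¹) * ↑x⁻¹ * ↑y⁻¹
        * ((1 + (y : D)) * ↑x⁻¹ * ↑y * ↑x⁻¹ * ↑y⁻¹) - ↑x * ↑y * ↑x⁻¹ * ↑y⁻¹
    simp only [pow_succ, pow_zero, one_mul, mul_one, add_mul, mul_add, mul_assoc,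
      Units.inv_mul_cancel_left, Units.mul_inv_cancel_left, Units.inv_mul, Units.mul_inv]
    try abel
  -- base invariant
  have hS0 : Sp R C K 0 := by
    have e0 : (2*(0:ℤ)) = 0 := by norm_num
    have e2' : (2*(0:ℤ)+2) = 2 := by norm_num
    have e1 : (2*(0:ℤ)+1) = 1 := by norm_num
    refine ⟨?_, ?_, ?_, ?_⟩
    · show (C : D) * R (2*0) * ((C : D) * R (2*0)) + (R (2*0+2) : D) * R (2*0+2)
          = K * R (2*0+1)
      rw [e2', e1, e0, hCR0, hu1, hR1D]
      show ↑x * ↑x + (1 + (y:D)) * ↑x⁻¹ * ((1 + ↑y) * ↑x⁻¹)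
        = ((x : D) ^ 2 + ((1 + (y : D)) * ↑x⁻¹) ^ 2) * ↑y⁻¹ * ↑y
      simp only [pow_succ, pow_zero, one_mul, mul_one, add_mul, mul_add, mul_assoc,
        Units.inv_mul_cancel_left, Units.mul_inv_cancel_left, Units.inv_mul, Units.mul_inv]
      try abel
    · show (R (2*0) : D) * K * R (2*0+2)
          = (↑C⁻¹ : D) * K * ↑C⁻¹ + (R (2*0) : D) * C * R (2*0)
            + (R (2*0+2) : D) * C * R (2*0+2)
      rw [e2', e0, hu1, hR0D, hCD, hCiD]
      show (↑y * ↑x * ↑y⁻¹ : D) * (((x : D) ^ 2 + ((1 + (y : D)) * ↑x⁻¹) ^ 2) * ↑y⁻¹)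
          * ((1 + ↑y) * ↑x⁻¹)
        = (↑y * ↑x * ↑y⁻¹ * ↑x⁻¹ : D)
            * (((x : D) ^ 2 + ((1 + (y : D)) * ↑x⁻¹) ^ 2) * ↑y⁻¹)
            * (↑y * ↑x * ↑y⁻¹ * ↑x⁻¹)
          + (↑y * ↑x * ↑y⁻¹ : D) * (↑x * ↑y * ↑x⁻¹ * ↑y⁻¹) * (↑y * ↑x * ↑y⁻¹)
          + (1 + (y : D)) * ↑x⁻¹ * (↑x * ↑y * ↑x⁻¹ * ↑y⁻¹) * ((1 + ↑y) * ↑x⁻¹)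
      simp only [pow_succ, pow_zero, one_mul, mul_one, add_mul, mul_add, mul_assoc,
        Units.inv_mul_cancel_left, Units.mul_inv_cancel_left, Units.inv_mul, Units.mul_inv]
      try abel
    · show (R (2*0+2) : D) * K + (C : D) * R (2*0) * C = K * R (2*0+2) * C + R (2*0)
      rw [e2', e0, hu1, hR0D, hCD]
      show (1 + (y : D)) * ↑x⁻¹ * (((x : D) ^ 2 + ((1 + (y : D)) * ↑x⁻¹) ^ 2) * ↑y⁻¹)
          + (↑x * ↑y * ↑x⁻¹ * ↑y⁻¹ : D) * (↑y * ↑x * ↑y⁻¹) * (↑x * ↑y * ↑x⁻¹ * ↑y⁻¹)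
        = (((x : D) ^ 2 + ((1 + (y : D)) * ↑x⁻¹) ^ 2) * ↑y⁻¹) * ((1 + ↑y) * ↑x⁻¹)
            * (↑x * ↑y * ↑x⁻¹ * ↑y⁻¹)
          + ↑y * ↑x * ↑y⁻¹
      simp only [pow_succ, pow_zero, one_mul, mul_one, add_mul, mul_add, mul_assoc,
        Units.inv_mul_cancel_left, Units.mul_inv_cancel_left, Units.inv_mul, Units.mul_inv]
      try abel
    · show K * (R (2*0) : D) + (C : D) * R (2*0+2) * C = (C : D) * R (2*0) * K + R (2*0+2)
      rw [e2', e0, hu1, hR0D, hCD]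
      show (((x : D) ^ 2 + ((1 + (y : D)) * ↑x⁻¹) ^ 2) * ↑y⁻¹) * (↑y * ↑x * ↑y⁻¹)
          + (↑x * ↑y * ↑x⁻¹ * ↑y⁻¹ : D) * ((1 + ↑y) * ↑x⁻¹) * (↑x * ↑y * ↑x⁻¹ * ↑y⁻¹)
        = (↑x * ↑y * ↑x⁻¹ * ↑y⁻¹ : D) * (↑y * ↑x * ↑y⁻¹)
            * (((x : D) ^ 2 + ((1 + (y : D)) * ↑x⁻¹) ^ 2) * ↑y⁻¹)
          + (1 + ↑y) * ↑x⁻¹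
      simp only [pow_succ, pow_zero, one_mul, mul_one, add_mul, mul_add, mul_assoc,
        Units.inv_mul_cancel_left, Units.mul_inv_cancel_left, Units.inv_mul, Units.mul_inv]
      try abel
  -- invariant for all naturals
  have Sall : ∀ n : ℕ, Sp R C K (n : ℤ) := by
    intro n
    induction n with
    | zero => exact_mod_cast hS0
    | succ k ih =>
      have H := lem_step R C h K (k : ℤ) ih
      rwa [show ((k : ℤ) + 1) = ((k+1 : ℕ) : ℤ) by push_cast; ring] at H
  have Mall : ∀ n : ℕ, (R (2*(n:ℤ)+4) : D) = K * R (2*(n:ℤ)+2) - (C : D) * R (2*(n:ℤ)) :=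
    fun n => lem_M R C h K _ (Sall n).1
  -- matrix entry recursions
  have hA : ∀ n : ℕ, ((!![y₁, 1; y₂, y₃] : Matrix (Fin 2) (Fin 2) D) ^ (n+1)) 0 0
      = y₁ * ((!![y₁, 1; y₂, y₃] : Matrix (Fin 2) (Fin 2) D) ^ n) 0 0
        + ((!![y₁, 1; y₂, y₃] : Matrix (Fin 2) (Fin 2) D) ^ n) 1 0 := by
    intro n
    rw [pow_succ', Matrix.mul_apply, Fin.sum_univ_two]
    simp
  have hB : ∀ n : ℕ, ((!![y₁, 1; y₂, y₃] : Matrix (Fin 2) (Fin 2) D) ^ (n+1)) 1 0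
      = y₂ * ((!![y₁, 1; y₂, y₃] : Matrix (Fin 2) (Fin 2) D) ^ n) 0 0
        + y₃ * ((!![y₁, 1; y₂, y₃] : Matrix (Fin 2) (Fin 2) D) ^ n) 1 0 := by
    intro n
    rw [pow_succ', Matrix.mul_apply, Fin.sum_univ_two]
    simp
  have hKsum : K = y₁ + y₃ := by rw [hy3]; noncomm_ring
  have hCval : (C : D) = y₃ * y₁ - y₂ := by rw [hy2]; noncomm_ring
  have hSA : ∀ n : ℕ, ((!![y₁, 1; y₂, y₃] : Matrix (Fin 2) (Fin 2) D) ^ (n+2)) 0 0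
      = K * ((!![y₁, 1; y₂, y₃] : Matrix (Fin 2) (Fin 2) D) ^ (n+1)) 0 0
        - (C : D) * ((!![y₁, 1; y₂, y₃] : Matrix (Fin 2) (Fin 2) D) ^ n) 0 0 :=
    fun n => cert_SA _ _ _ _ _ _ _ _ _ _ (hA (n+1)) (hB n) (hA n) hKsum hCval
  -- main induction
  have main : ∀ n : ℕ,
      ((R (2*(n:ℤ)) : D)
        = ((!![y₁, 1; y₂, y₃] : Matrix (Fin 2) (Fin 2) D) ^ n) 0 0 * (R 0 : D)) ∧
      ((R (2*(n:ℤ)+2) : D)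
        = ((!![y₁, 1; y₂, y₃] : Matrix (Fin 2) (Fin 2) D) ^ (n+1)) 0 0 * (R 0 : D)) := by
    intro n
    induction n with
    | zero =>
      constructor
      · rw [show (2*((0:ℕ):ℤ)) = 0 by norm_num, pow_zero]
        simp
      · rw [show (2*((0:ℕ):ℤ)+2) = 2 by norm_num, pow_one]
        rw [show (!![y₁, 1; y₂, y₃] : Matrix (Fin 2) (Fin 2) D) 0 0 = y₁ from by simp]
        rw [hy1, Units.inv_mul_cancel_right]
    | succ k ih =>
      have i1 : (2*((k+1:ℕ):ℤ)) = 2*(k:ℤ)+2 := by push_cast; ring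
      have i2 : (2*((k+1:ℕ):ℤ)+2) = 2*(k:ℤ)+4 := by push_cast; ring
      constructor
      · rw [i1]; exact ih.2
      · rw [i2, Mall k, ih.1, ih.2, hSA k]
        noncomm_ring
  exact ⟨fun n => (main n).1, hy1, hy3, hy2⟩
end

section
/- Let D be a division ring, x, y ∈ Dˣ, and (R, C) a solution of the non-commutative (1,4)-system with commutator C and initial data C = x y x⁻¹ y⁻¹, R₀ = y x y⁻¹, R₁ = y. Then for all n ≥ 0, u_n := R_{2n} belongs to the subsemiring of D generated by {x, x⁻¹, y, y⁻¹}; that is, R_{2n} is a non-commutative Laurent polynomial in x and y with non-negative integer coefficients. -/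
set_option maxHeartbeats 1600000


/-- Positivity of the even variables of the `(1,4)`-system in the `(x,y)` initial data:
`u_n = R_{2n}` is, for all `n ≥ 0`, a non-commutative Laurent polynomial in `x, y` with
non-negative integer coefficients. -/
theorem onefour_even_positivity_xy {D : Type*} [DivisionRing D] (x y : Dˣ)
    (R : ℤ → Dˣ) (C : Dˣ) (h : IsOneFourSolution R C)
    (hC : C = x * y * x⁻¹ * y⁻¹) (hR0 : R 0 = y * x * y⁻¹) (hR1 : R 1 = y) :
    ∀ n : ℤ, 0 ≤ n →
      (R (2 * n) : D) ∈ Subsemiring.closure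
        ({(x : D), ((x⁻¹ : Dˣ) : D), (y : D), ((y⁻¹ : Dˣ) : D)} : Set D) := by
  obtain ⟨h1, h2, h3⟩ := h
  obtain ⟨X, hX⟩ : ∃ X : D, X = (x:D) := ⟨_, rfl⟩
  obtain ⟨X', hX'⟩ : ∃ X' : D, X' = ((x⁻¹:Dˣ):D) := ⟨_, rfl⟩
  obtain ⟨Y, hY⟩ : ∃ Y : D, Y = (y:D) := ⟨_, rfl⟩
  obtain ⟨Y', hY'⟩ : ∃ Y' : D, Y' = ((y⁻¹:Dˣ):D) := ⟨_, rfl⟩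
  obtain ⟨Cc, hCc⟩ : ∃ Cc : D, Cc = (C:D) := ⟨_, rfl⟩
  obtain ⟨Ci, hCi⟩ : ∃ Ci : D, Ci = ((C⁻¹:Dˣ):D) := ⟨_, rfl⟩
  simp only [← hCc] at h1 h2 h3
  rw [show ({(x : D), ((x⁻¹ : Dˣ) : D), (y : D), ((y⁻¹ : Dˣ) : D)} : Set D)
      = ({X, X', Y, Y'} : Set D) from by rw [hX, hX', hY, hY']]
  have hxx' : X * X' = 1 := by rw [hX, hX']; exact Units.mul_inv x
  have hx'x : X' * X = 1 := by rw [hX, hX']; exact Units.inv_mul x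
  have hyy' : Y * Y' = 1 := by rw [hY, hY']; exact Units.mul_inv y
  have hy'y : Y' * Y = 1 := by rw [hY, hY']; exact Units.inv_mul y
  have cxx' : ∀ z : D, X * (X' * z) = z := fun z => by rw [← mul_assoc, hxx', one_mul]
  have cx'x : ∀ z : D, X' * (X * z) = z := fun z => by rw [← mul_assoc, hx'x, one_mul]
  have cyy' : ∀ z : D, Y * (Y' * z) = z := fun z => by rw [← mul_assoc, hyy', one_mul]
  have cy'y : ∀ z : D, Y' * (Y * z) = z := fun z => by rw [← mul_assoc, hy'y, one_mul]
  have pow4 : ∀ z : D, z^4 = z*(z*(z*z)) := fun z => by norm_num [pow_succ, pow_zero, mul_assoc]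
  have hCCi : Cc * Ci = 1 := by rw [hCc, hCi]; exact Units.mul_inv C
  have hCiC : Ci * Cc = 1 := by rw [hCc, hCi]; exact Units.inv_mul C
  have hCe : Cc = X*(Y*(X'*Y')) := by
    rw [hCc, hC, hX, hX', hY, hY']; simp only [Units.val_mul]; rw [mul_assoc, mul_assoc]
  have hCinv : C⁻¹ = y*x*y⁻¹*x⁻¹ := by rw [hC]; group
  have hCie : Ci = Y*(X*(Y'*X')) := by
    rw [hCi, hCinv, hX, hX', hY, hY']; simp only [Units.val_mul]; rw [mul_assoc, mul_assoc]
  have hR0e : ((R 0 : Dˣ) : D) = Y*(X*Y') := by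
    rw [hR0, hX, hY, hY']; simp only [Units.val_mul]; rw [mul_assoc]
  have hR1e : ((R 1 : Dˣ) : D) = Y := by rw [hR1, hY]
  -- ## general consequences of the system
  have comm : ∀ k : ℤ, (R (k+1) : D) * Cc * (R k : D) = (R k : D) * (R (k+1) : D) := by
    intro k
    rw [h1 k]
    simp only [mul_assoc, Units.mul_inv_cancel_left, Units.inv_mul_cancel_left,
      Units.inv_mul_cancel_right, Units.mul_inv_cancel_right]
    simp only [← mul_assoc]
    rw [mul_assoc, Units.inv_mul, mul_one]
  have E1 : ∀ m : ℤ, (R (2*m+2) : D) * Cc * (R (2*m) : D) = 1 + (R (2*m+1) : D) := by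
    intro m
    have hh := h2 (m+1)
    rw [show 2*(m+1) = 2*m+2 by ring] at hh
    rw [show 2*m+2-2 = 2*m by ring, show 2*m+2-1 = 2*m+1 by ring] at hh
    exact hh
  have E2 : ∀ m : ℤ, (R (2*m+3) : D) * Cc * (R (2*m+1) : D) = 1 + (R (2*m+2) : D)^4 := by
    intro m
    have hh := h3 (m+1)
    rw [show 2*(m+1)+1 = 2*m+3 by ring, show 2*(m+1)-1 = 2*m+1 by ring,
      show 2*(m+1) = 2*m+2 by ring] at hh
    exact hh
  have vJ : ∀ m : ℤ, (R (2*m+1) : D) + Ci = (R (2*m) : D) * (R (2*m+2) : D) := by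
    intro m
    have hcomm := comm (2*m+1)
    rw [show 2*m+1+1 = 2*m+2 by ring] at hcomm
    have hE := E1 m
    have hg : ((R (2*m+2) * C : Dˣ) : D) ≠ 0 := Units.ne_zero _
    apply mul_left_cancel₀ hg
    rw [Units.val_mul, ← hCc]
    have z1 : (R (2*m+2) : D) * Cc * (R (2*m+1) : D) - (R (2*m+1) : D) * (R (2*m+2) : D) = 0 :=
      sub_eq_zero_of_eq hcomm
    have z2 : Cc * Ci - 1 = 0 := sub_eq_zero_of_eq hCCi
    have z3 : (R (2*m+2) : D) * Cc * (R (2*m) : D) - 1 - (R (2*m+1) : D) = 0 := by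
      rw [hE]; noncomm_ring
    have key : ((R (2*m+2) : D) * Cc) * ((R (2*m+1) : D) + Ci)
        - ((R (2*m+2) : D) * Cc) * ((R (2*m) : D) * (R (2*m+2) : D))
        = ((R (2*m+2) : D) * Cc * (R (2*m+1) : D) - (R (2*m+1) : D) * (R (2*m+2) : D))
          + (R (2*m+2) : D) * (Cc * Ci - 1)
          - ((R (2*m+2) : D) * Cc * (R (2*m) : D) - 1 - (R (2*m+1) : D)) * (R (2*m+2) : D) := by
      noncomm_ring
    rw [z1, z2, z3] at key
    simp only [mul_zero, zero_mul, add_zero, zero_add, sub_zero, zero_sub, neg_zero] at key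
    exact sub_eq_zero.mp key
  have Jl : ∀ m : ℤ, (R (2*m+2) : D) * Cc * (R (2*m) : D)
      = 1 + (R (2*m) : D) * (R (2*m+2) : D) - Ci := by
    intro m
    rw [E1 m, eq_sub_of_add_eq (vJ m)]
    noncomm_ring
  -- ## concrete constants
  obtain ⟨K1, hK1⟩ : ∃ K1 : D, K1 = (1+Y)*(X'*((1+Y)*(X'*Y'))) := ⟨_, rfl⟩
  obtain ⟨K2, hK2⟩ : ∃ K2 : D, K2 = X*(X*Y') := ⟨_, rfl⟩
  obtain ⟨M, hM⟩ : ∃ M : D, M = K1 + K2 := ⟨_, rfl⟩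
  obtain ⟨Bel, hBel⟩ : ∃ Bel : D,
    Bel = X*(X*(Y'*(X'*(X'*Y')))) + X*(X*(Y'*(X'*(Y*(X'*Y'))))) + Y' := ⟨_, rfl⟩
  have p3 : ∀ z : D, z^3 = z*(z*z) := fun z => by norm_num [pow_succ, pow_zero, mul_assoc]
  -- ## base data
  have hCR0 : C * R 0 = x := by rw [hC, hR0]; group
  have hCR0e : Cc * (R 0 : D) = X := by rw [hCc, hX, ← Units.val_mul, hCR0]
  have hR2X : (R 2 : D) * X = 1 + Y := by
    have hE := E1 0
    rw [show (2*(0:ℤ)+2) = 2 by ring, show (2*(0:ℤ)+1) = 1 by ring,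
      show (2*(0:ℤ)) = 0 by ring] at hE
    rw [← hCR0e, ← mul_assoc, hE, hR1e]
  have hR2e : (R 2 : D) = (1+Y)*X' := by
    have h' : (R 2:D) = (R 2:D) * X * X' := by rw [mul_assoc, hxx', mul_one]
    rw [h', hR2X]
  have hCR1 : C * R 1 = x*y*x⁻¹ := by rw [hC, hR1]; group
  have hCR1e : Cc * (R 1 : D) = X*(Y*X') := by
    rw [hCc, ← Units.val_mul, hCR1, hX, hY, hX']; simp only [Units.val_mul]; rw [mul_assoc]
  have hR3w : (R 3 : D) * (X*(Y*X')) = 1 + ((1+Y)*X')^4 := by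
    have hE := E2 0
    rw [show (2*(0:ℤ)+3) = 3 by ring, show (2*(0:ℤ)+1) = 1 by ring,
      show (2*(0:ℤ)+2) = 2 by ring] at hE
    rw [← hCR1e, ← mul_assoc, hE, hR2e]
  have winv1 : (X*(Y*X'))*(X*(Y'*X')) = 1 := by
    simp only [mul_assoc, cxx', cx'x, cyy', cy'y, hxx', hx'x, hyy', hy'y]
  have hR3e : (R 3 : D) = (1 + ((1+Y)*X')^4)*(X*(Y'*X')) := by
    have h' : (R 3:D) = (R 3:D)*((X*(Y*X'))*(X*(Y'*X'))) := by rw [winv1, mul_one]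
    rw [h', ← mul_assoc, hR3w]
  have hR4e : (R 4 : D) = (X + ((1+Y)*X')^3)*(X*(Y'*X')) := by
    have hE := E1 1
    rw [show (2*(1:ℤ)+2) = 4 by ring, show (2*(1:ℤ)+1) = 3 by ring,
      show (2*(1:ℤ)) = 2 by ring] at hE
    have hne : (Cc * (R 2:D)) ≠ 0 := by rw [hCc, ← Units.val_mul]; exact Units.ne_zero _
    apply mul_right_cancel₀ hne
    rw [← mul_assoc, hE]
    rw [hR2e, hR3e, hCe]
    simp only [p3, pow4, mul_add, add_mul, one_mul, mul_one, mul_assoc,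
      cxx', cx'x, cyy', cy'y, hxx', hx'x, hyy', hy'y]
    first | abel | noncomm_ring
  -- base invariant identities
  have baseR : (R 2 : D) * M = (R 4 : D) * Cc + (R 0 : D) := by
    rw [hR2e, hR4e, hR0e, hCe, hM, hK1, hK2]
    simp only [p3, pow4, mul_add, add_mul, one_mul, mul_one, mul_assoc,
      cxx', cx'x, cyy', cy'y, hxx', hx'x, hyy', hy'y]
    first | abel | noncomm_ring
  have baseH2 : (R 4 : D) * Cc * (R 0 : D) = M + (R 2 : D) * (R 2 : D) := by
    rw [hR2e, hR4e, hR0e, hCe, hM, hK1, hK2]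
    simp only [p3, pow4, mul_add, add_mul, one_mul, mul_one, mul_assoc,
      cxx', cx'x, cyy', cy'y, hxx', hx'x, hyy', hy'y]
    first | abel | noncomm_ring
  have baseH3 : (R 0 : D) * (R 4 : D) = (R 2 : D) * Cc * (R 2 : D) + Ci*(M*Ci) := by
    rw [hR2e, hR4e, hR0e, hCe, hCie, hM, hK1, hK2]
    simp only [p3, pow4, mul_add, add_mul, one_mul, mul_one, mul_assoc,
      cxx', cx'x, cyy', cy'y, hxx', hx'x, hyy', hy'y]
    first | abel | noncomm_ring
  have CB6 : K2 * K1 = Bel + Cc := by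
    rw [hK1, hK2, hBel, hCe]
    simp only [p3, pow4, mul_add, add_mul, one_mul, mul_one, mul_assoc,
      cxx', cx'x, cyy', cy'y, hxx', hx'x, hyy', hy'y]
    first | abel | noncomm_ring
  -- ## generic algebraic derivations
  have Lgen : ∀ a b c : D, (b*Cc*a = 1 + a*b - Ci) → (c*Cc*b = 1 + b*c - Ci) →
      (b*M = c*Cc + a) → (c*Cc*a = M + b*b) → (M*b = Cc*a + c) := by
    intro a b c hJ1 hJ2 hRr hH2
    have zR : b*M - c*Cc - a = 0 := by rw [hRr]; noncomm_ring
    have zH2 : c*Cc*a - M - b*b = 0 := by rw [hH2]; noncomm_ring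
    have zJ1 : b*Cc*a - 1 - a*b + Ci = 0 := by rw [hJ1]; noncomm_ring
    have zJ2 : c*Cc*b - 1 - b*c + Ci = 0 := by rw [hJ2]; noncomm_ring
    have zCCi : Cc*Ci - 1 = 0 := sub_eq_zero_of_eq hCCi
    have zCiC : Ci*Cc - 1 = 0 := sub_eq_zero_of_eq hCiC
    have key : M*b - (Cc*a + c)
        = (b*M - c*Cc - a) + b*(c*Cc*a - M - b*b) - (c*Cc*a - M - b*b)*b
          + (c*Cc*b - 1 - b*c + Ci)*(Cc*a) - (Ci*Cc - 1)*a + c*(Cc*Ci - 1)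
          - (c*Cc)*(b*Cc*a - 1 - a*b + Ci) := by noncomm_ring
    rw [zR, zH2, zJ1, zJ2, zCCi, zCiC] at key
    simp only [mul_zero, zero_mul, add_zero, zero_add, sub_zero, zero_sub, neg_zero] at key
    exact sub_eq_zero.mp key
  have stepgen : ∀ a b c d : D, c ≠ 0 → (Cc*(b*c - Ci) ≠ 0) →
      (b*Cc*a = 1 + a*b - Ci) → (c*Cc*b = 1 + b*c - Ci) →
      ((c*d - Ci)*(Cc*(b*c - Ci)) = 1 + c^4) →
      (b*M = c*Cc + a) → (c*Cc*a = M + b*b) → (a*c = b*Cc*b + Ci*(M*Ci)) →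
      (M*b = Cc*a + c) →
      (d*Cc = c*M - b) ∧ (d*Cc*b = M + c*c) ∧ (b*d = c*Cc*c + Ci*(M*Ci)) := by
    intro a b c d hcne hTne hJ1 hJ2 hE2'' hRr hH2 hH3 hL
    have zR : b*M - c*Cc - a = 0 := by rw [hRr]; noncomm_ring
    have zH2 : c*Cc*a - M - b*b = 0 := by rw [hH2]; noncomm_ring
    have zH3 : a*c - b*Cc*b - Ci*(M*Ci) = 0 := by rw [hH3]; noncomm_ring
    have zL : M*b - Cc*a - c = 0 := by rw [hL]; noncomm_ring
    have zJ1 : b*Cc*a - 1 - a*b + Ci = 0 := by rw [hJ1]; noncomm_ring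
    have zJ2 : c*Cc*b - 1 - b*c + Ci = 0 := by rw [hJ2]; noncomm_ring
    have zCCi : Cc*Ci - 1 = 0 := sub_eq_zero_of_eq hCCi
    have zCiC : Ci*Cc - 1 = 0 := sub_eq_zero_of_eq hCiC
    -- hstar
    have key3 : c*d*(Cc*(b*c - Ci)) - (1 + c^4 + (b*c - Ci))
        = ((c*d - Ci)*(Cc*(b*c - Ci)) - (1 + c^4)) + (Ci*Cc - 1)*(b*c - Ci) := by
      noncomm_ring
    rw [hE2'', zCiC] at key3
    simp only [mul_zero, zero_mul, add_zero, zero_add, sub_zero, sub_self] at key3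
    have hstar : c*d*(Cc*(b*c - Ci)) = 1 + c^4 + (b*c - Ci) := sub_eq_zero.mp key3
    -- candidate satisfies the same relation
    have key2 : c*((c*M - b)*Ci)*(Cc*(b*c - Ci)) - (1 + c^4 + (b*c - Ci))
        = (c*Cc*b - 1 - b*c + Ci)
          + (c*c)*((Cc*Ci - 1)*(M*Ci))
          + (c*c)*(Cc*(a*c - b*Cc*b - Ci*(M*Ci)))
          + (c*c)*((M*b - Cc*a - c)*c)
          - c*((Ci*Cc - 1)*b)
          + c*((c*Cc*b - 1 - b*c + Ci)*(Cc*b))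
          + c*(b*(c*Cc*b - 1 - b*c + Ci))
          + (c*(c*M) - c*b)*((Ci*Cc - 1)*(b*c - Ci)) := by noncomm_ring
    rw [zJ2, zH3, zL, zCCi, zCiC] at key2
    simp only [mul_zero, zero_mul, add_zero, zero_add, sub_zero, sub_self, neg_zero] at key2
    have hcand : c*((c*M - b)*Ci)*(Cc*(b*c - Ci)) = 1 + c^4 + (b*c - Ci) :=
      sub_eq_zero.mp key2
    have h5 : d*(Cc*(b*c - Ci)) = ((c*M - b)*Ci)*(Cc*(b*c - Ci)) := by
      apply mul_left_cancel₀ hcne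
      calc c*(d*(Cc*(b*c - Ci))) = c*d*(Cc*(b*c - Ci)) := by rw [mul_assoc]
      _ = 1 + c^4 + (b*c - Ci) := hstar
      _ = c*((c*M - b)*Ci)*(Cc*(b*c - Ci)) := hcand.symm
      _ = c*(((c*M - b)*Ci)*(Cc*(b*c - Ci))) := by rw [mul_assoc]
    have hd0 : d = (c*M - b)*Ci := mul_right_cancel₀ hTne h5
    have hdC : d*Cc = c*M - b := by rw [hd0, mul_assoc, hCiC, mul_one]
    refine ⟨hdC, ?_, ?_⟩
    · have zdR1 : d*Cc - c*M + b = 0 := by rw [hdC]; noncomm_ring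
      have key4 : d*Cc*b - (M + c*c)
          = (d*Cc - c*M + b)*b + c*(M*b - Cc*a - c) + (c*Cc*a - M - b*b) := by noncomm_ring
      rw [zdR1, zL, zH2] at key4
      simp only [mul_zero, zero_mul, add_zero, zero_add, sub_zero] at key4
      exact sub_eq_zero.mp key4
    · have zdR2 : d - (c*M - b)*Ci = 0 := by rw [hd0]; noncomm_ring
      have key5 : b*d - (c*Cc*c + Ci*(M*Ci))
          = c*Cc*c*(Cc*Ci - 1) + (c*Cc*a - M - b*b)*Ci + (c*Cc)*((b*M - c*Cc - a)*Ci)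
            - (c*Cc*b - 1 - b*c + Ci)*(M*Ci) + b*(d - (c*M - b)*Ci) := by noncomm_ring
      rw [zCCi, zH2, zR, zJ2, zdR2] at key5
      simp only [mul_zero, zero_mul, add_zero, zero_add, sub_zero, zero_sub, neg_zero] at key5
      exact sub_eq_zero.mp key5
  -- ## the invariant, by induction
  have PP : ∀ n : ℤ, 0 ≤ n →
      ((R (2*n+2) : D) * M = (R (2*n+4) : D) * Cc + (R (2*n) : D)) ∧
      ((R (2*n+4) : D) * Cc * (R (2*n) : D) = M + (R (2*n+2) : D) * (R (2*n+2) : D)) ∧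
      ((R (2*n) : D) * (R (2*n+4) : D) = (R (2*n+2) : D) * Cc * (R (2*n+2) : D) + Ci*(M*Ci)) ∧
      (M * (R (2*n+2) : D) = Cc * (R (2*n) : D) + (R (2*n+4) : D)) := by
    refine Int.le_induction ?_ ?_
    · rw [show (2*(0:ℤ)+2) = 2 by ring, show (2*(0:ℤ)+4) = 4 by ring,
        show (2*(0:ℤ)) = 0 by ring]
      have hJ1 := Jl 0
      rw [show (2*(0:ℤ)+2) = 2 by ring, show (2*(0:ℤ)) = 0 by ring] at hJ1
      have hJ2 := Jl 1
      rw [show (2*(1:ℤ)+2) = 4 by ring, show (2*(1:ℤ)) = 2 by ring] at hJ2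
      exact ⟨baseR, baseH2, baseH3, Lgen _ _ _ hJ1 hJ2 baseR baseH2⟩
    · intro n hn ih
      obtain ⟨ihR, ihH2, ihH3, ihL⟩ := ih
      have hJ1 := Jl n
      have hJ2 := Jl (n+1)
      rw [show 2*(n+1)+2 = 2*n+4 by ring, show 2*(n+1) = 2*n+2 by ring] at hJ2
      have hJ3 := Jl (n+2)
      rw [show 2*(n+2)+2 = 2*n+6 by ring, show 2*(n+2) = 2*n+4 by ring] at hJ3
      have hv2 : (R (2*n+3) : D) = (R (2*n+2) : D) * (R (2*n+4) : D) - Ci := by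
        have hv := vJ (n+1)
        rw [show 2*(n+1)+1 = 2*n+3 by ring, show 2*(n+1)+2 = 2*n+4 by ring,
          show 2*(n+1) = 2*n+2 by ring] at hv
        exact eq_sub_of_add_eq hv
      have hv3 : (R (2*n+5) : D) = (R (2*n+4) : D) * (R (2*n+6) : D) - Ci := by
        have hv := vJ (n+2)
        rw [show 2*(n+2)+1 = 2*n+5 by ring, show 2*(n+2)+2 = 2*n+6 by ring,
          show 2*(n+2) = 2*n+4 by ring] at hv
        exact eq_sub_of_add_eq hv
      have hE2' := E2 (n+1)
      rw [show 2*(n+1)+3 = 2*n+5 by ring, show 2*(n+1)+1 = 2*n+3 by ring,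
        show 2*(n+1)+2 = 2*n+4 by ring] at hE2'
      have hE2'' : ((R (2*n+4) : D)*(R (2*n+6) : D) - Ci)
          * (Cc*((R (2*n+2) : D)*(R (2*n+4) : D) - Ci)) = 1 + (R (2*n+4) : D)^4 := by
        rw [← hv3, ← hv2, ← mul_assoc]; exact hE2'
      have hcne : (R (2*n+4) : D) ≠ 0 := Units.ne_zero _
      have hTne : Cc*((R (2*n+2) : D)*(R (2*n+4) : D) - Ci) ≠ 0 := by
        rw [← hv2, hCc, ← Units.val_mul]; exact Units.ne_zero _
      obtain ⟨hdC, hH2new, hH3new⟩ := stepgen (R (2*n) : D) (R (2*n+2) : D) (R (2*n+4) : D)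
        (R (2*n+6) : D) hcne hTne hJ1 hJ2 hE2'' ihR ihH2 ihH3 ihL
      have hRnew : (R (2*n+4) : D) * M = (R (2*n+6) : D) * Cc + (R (2*n+2) : D) := by
        rw [hdC]; noncomm_ring
      have hLnew : M * (R (2*n+4) : D) = Cc * (R (2*n+2) : D) + (R (2*n+6) : D) :=
        Lgen _ _ _ hJ2 hJ3 hRnew hH2new
      rw [show 2*(n+1)+2 = 2*n+4 by ring, show 2*(n+1)+4 = 2*n+6 by ring,
        show 2*(n+1) = 2*n+2 by ring]
      exact ⟨hRnew, hH2new, hH3new, hLnew⟩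
  -- ## positivity
  have mX : X ∈ Subsemiring.closure ({X, X', Y, Y'} : Set D) :=
    Subsemiring.subset_closure (by simp)
  have mX' : X' ∈ Subsemiring.closure ({X, X', Y, Y'} : Set D) :=
    Subsemiring.subset_closure (by simp)
  have mY : Y ∈ Subsemiring.closure ({X, X', Y, Y'} : Set D) :=
    Subsemiring.subset_closure (by simp)
  have mY' : Y' ∈ Subsemiring.closure ({X, X', Y, Y'} : Set D) :=
    Subsemiring.subset_closure (by simp)
  set S := Subsemiring.closure ({X, X', Y, Y'} : Set D) with hSdef
  have mK1 : K1 ∈ S := by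
    rw [hK1]
    exact S.mul_mem (S.add_mem S.one_mem mY)
      (S.mul_mem mX' (S.mul_mem (S.add_mem S.one_mem mY) (S.mul_mem mX' mY')))
  have mK2 : K2 ∈ S := by
    rw [hK2]; exact S.mul_mem mX (S.mul_mem mX mY')
  have mBel : Bel ∈ S := by
    rw [hBel]
    refine S.add_mem (S.add_mem ?_ ?_) mY'
    · exact S.mul_mem mX (S.mul_mem mX (S.mul_mem mY' (S.mul_mem mX' (S.mul_mem mX' mY'))))
    · exact S.mul_mem mX (S.mul_mem mX (S.mul_mem mY' (S.mul_mem mX'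
        (S.mul_mem mY (S.mul_mem mX' mY')))))
  have QQ : ∀ n : ℤ, 0 ≤ n →
      ((R (2*n) : D) ∈ S ∧ (R (2*n+2) : D) ∈ S ∧
        ∃ w ∈ S, K2 * (R (2*n+2) : D) = Cc * (R (2*n) : D) + w) := by
    refine Int.le_induction ?_ ?_
    · rw [show (2*(0:ℤ)+2) = 2 by ring, show (2*(0:ℤ)) = 0 by ring]
      refine ⟨?_, ?_, X*(X*(Y'*X')), S.mul_mem mX (S.mul_mem mX (S.mul_mem mY' mX')), ?_⟩
      · rw [hR0e]; exact S.mul_mem mY (S.mul_mem mX mY')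
      · rw [hR2e]; exact S.mul_mem (S.add_mem S.one_mem mY) mX'
      · rw [hR2e, hK2, hCR0e]
        simp only [mul_add, add_mul, one_mul, mul_one, mul_assoc,
          cxx', cx'x, cyy', cy'y, hxx', hx'x, hyy', hy'y]
        first | abel | noncomm_ring
    · intro n hn ih
      obtain ⟨ihu, ihu2, w, hwS, hw⟩ := ih
      have hL := (PP n hn).2.2.2
      have hu4e : (R (2*n+4) : D) = K1 * (R (2*n+2) : D) + w := by
        have h' : (R (2*n+4) : D) = M * (R (2*n+2) : D) - Cc * (R (2*n) : D) := by
          rw [hL]; noncomm_ring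
        have h'' : M * (R (2*n+2) : D) - Cc * (R (2*n) : D)
            = K1 * (R (2*n+2) : D) + (K2 * (R (2*n+2) : D) - Cc * (R (2*n) : D)) := by
          rw [hM]; noncomm_ring
        rw [h', h'', hw]
        noncomm_ring
      have hu4S : (R (2*n+4) : D) ∈ S := by
        rw [hu4e]; exact S.add_mem (S.mul_mem mK1 ihu2) hwS
      have hwnew : K2 * (R (2*n+4) : D)
          = Cc * (R (2*n+2) : D) + (Bel * (R (2*n+2) : D) + K2 * w) := by
        calc K2 * (R (2*n+4) : D) = (K2*K1) * (R (2*n+2) : D) + K2 * w := by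
              rw [hu4e]; noncomm_ring
        _ = (Bel + Cc) * (R (2*n+2) : D) + K2 * w := by rw [CB6]
        _ = Cc * (R (2*n+2) : D) + (Bel * (R (2*n+2) : D) + K2 * w) := by noncomm_ring
      rw [show 2*(n+1)+2 = 2*n+4 by ring, show 2*(n+1) = 2*n+2 by ring]
      exact ⟨ihu2, hu4S, Bel * (R (2*n+2) : D) + K2 * w,
        S.add_mem (S.mul_mem mBel ihu2) (S.mul_mem mK2 hwS), hwnew⟩
  intro n hn
  exact (QQ n hn).1
end

section
/- Let D be a division ring, X, Y ∈ Dˣ, and (R, C) a solution of the non-commutative (1,4)-system with commutator C and initial data C = X Y X⁻¹ Y⁻¹, R₁ = Y X Y⁻¹, R₂ = Y; set u_n := R_{2n}, so u₁ = Y. Define the weights y₁' = (Y³ + (1+X) Y⁻¹) X⁻¹ Y⁻¹, y₂' = (Y + (1+X) Y⁻² (1+X) Y⁻¹) X⁻¹ Y⁻¹, y₃' = (1+X) Y⁻², and let T' be the 2×2 matrix over D with entries T'_{0,0} = y₁', T'_{0,1} = 1, T'_{1,0} = y₂', T'_{1,1} = y₃'. Then for all n ≥ 0, u_{n+1} = (T'^n)_{0,0}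 · Y. Moreover y₃' = C u₀ u₁⁻¹, y₁' = K − y₃' and y₂' = y₃' y₁' − C, where K = (Y² + ((1+X) Y⁻¹)²) Y X⁻¹ Y⁻¹ is the conserved quantity. -/
open Matrix

private theorem lemH {D : Type*} [DivisionRing D] (a b c e p q : D) (hb : b ≠ 0)
    (h1 : b*c*a = 1 + p) (h3 : e*c*b = 1 + q) (h4 : q*c*p = 1 + b^4)
    (h8 : p*b = b*c*p) (h7 : b*q = q*c*b) :
    e*c*a*b = b^3 + e + c*a := by
  have z1 : b*c*a - (1+p) = 0 := sub_eq_zero.mpr h1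
  have z3 : e*c*b - (1+q) = 0 := sub_eq_zero.mpr h3
  have z8 : p*b - b*c*p = 0 := sub_eq_zero.mpr h8
  have z7 : b*q - q*c*b = 0 := sub_eq_zero.mpr h7
  have hp : p = b*c*a - 1 := by rw [h1]; noncomm_ring
  have hq : q = e*c*b - 1 := by rw [h3]; noncomm_ring
  have Estar : c*a*b - 1 = c*b*c*a - c := by
    refine mul_left_cancel₀ hb ?_
    refine sub_eq_zero.mp ?_
    calc b*(c*a*b - 1) - b*(c*b*c*a - c)
        = (b*c*a - (1+p))*b - b*c*(b*c*a - (1+p)) + (p*b - b*c*p) := by noncomm_ring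
      _ = 0 := by rw [z1, z8]; noncomm_ring
  have Estst : e*c*b*c - c = b*e*c - 1 := by
    refine mul_right_cancel₀ hb ?_
    refine sub_eq_zero.mp ?_
    calc (e*c*b*c - c)*b - (b*e*c - 1)*b
        = (e*c*b - (1+q))*(c*b) - b*(e*c*b - (1+q)) - (b*q - q*c*b) := by noncomm_ring
      _ = 0 := by rw [z3, z7]; noncomm_ring
  have ED : (e*c*b - 1)*c*(b*c*a - 1) = 1 + b^4 := by
    rw [← hp, ← hq]; exact h4
  have zED : (e*c*b - 1)*c*(b*c*a - 1) - (1 + b^4) = 0 := sub_eq_zero.mpr ED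
  have zst : (e*c*b*c - c) - (b*e*c - 1) = 0 := sub_eq_zero.mpr Estst
  have F2 : e*c*b*c*a - c*a - e*c = b^3 := by
    refine mul_left_cancel₀ hb ?_
    refine sub_eq_zero.mp ?_
    calc b*(e*c*b*c*a - c*a - e*c) - b*b^3
        = ((e*c*b - 1)*c*(b*c*a - 1) - (1 + b^4))
          - ((e*c*b*c - c) - (b*e*c - 1))*(b*c*a) + ((e*c*b*c - c) - (b*e*c - 1)) := by
            noncomm_ring
      _ = 0 := by rw [zED, zst]; noncomm_ring
  have zF2 : (e*c*b*c*a - c*a - e*c) - b^3 = 0 := sub_eq_zero.mpr F2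
  have zstar : (c*a*b - 1) - (c*b*c*a - c) = 0 := sub_eq_zero.mpr Estar
  refine sub_eq_zero.mp ?_
  calc e*c*a*b - (b^3 + e + c*a)
      = ((e*c*b*c*a - c*a - e*c) - b^3) + e*((c*a*b - 1) - (c*b*c*a - c)) := by noncomm_ring
    _ = 0 := by rw [zF2, zstar]; noncomm_ring
set_option maxHeartbeats 3200000 in
private theorem lemA {D : Type*} [DivisionRing D] (m a b c e p q r pi : D)
    (ha : a ≠ 0) (hb : b ≠ 0) (hp0 : p ≠ 0)
    (hpi1 : p*pi = 1) (hpi2 : pi*p = 1)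
    (h1 : b*c*a = 1 + p) (h2 : a*c*m = 1 + r) (h3 : e*c*b = 1 + q)
    (h4 : q*c*p = 1 + b^4) (h5 : p*c*r = 1 + a^4)
    (h6 : a*p = p*c*a) (h8 : p*b = b*c*p) (h7 : b*q = q*c*b) (h9 : r*a = a*c*r) :
    e*c*a + a*a = b*c*m + b*b := by
  have hp : p = b*c*a - 1 := by rw [h1]; noncomm_ring
  have z0 : p - (b*c*a - 1) = 0 := sub_eq_zero.mpr hp
  have z2 : a*c*m - (1+r) = 0 := sub_eq_zero.mpr h2
  have z3 : e*c*b - (1+q) = 0 := sub_eq_zero.mpr h3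
  have z4 : q*c*p - (1+b^4) = 0 := sub_eq_zero.mpr h4
  have z5 : p*c*r - (1+a^4) = 0 := sub_eq_zero.mpr h5
  have z6 : a*p - p*c*a = 0 := sub_eq_zero.mpr h6
  have z8 : p*b - b*c*p = 0 := sub_eq_zero.mpr h8
  have z7 : b*q - q*c*b = 0 := sub_eq_zero.mpr h7
  have z9 : r*a - a*c*r = 0 := sub_eq_zero.mpr h9
  have zp1 : p*pi - 1 = 0 := sub_eq_zero.mpr hpi1
  have zp2 : pi*p - 1 = 0 := sub_eq_zero.mpr hpi2
  have S1 : b*(e*c) = 1 + q*c := by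
    refine mul_right_cancel₀ hb ?_
    refine sub_eq_zero.mp ?_
    calc (b*(e*c))*b - (1 + q*c)*b
        = b*(e*c*b - (1+q)) + (b*q - q*c*b) := by noncomm_ring
      _ = 0 := by rw [z3, z7]; noncomm_ring
  have S2 : c*m*a = 1 + c*r := by
    refine mul_left_cancel₀ ha ?_
    refine sub_eq_zero.mp ?_
    calc a*(c*m*a) - a*(1 + c*r)
        = (a*c*m - (1+r))*a + (r*a - a*c*r) := by noncomm_ring
      _ = 0 := by rw [z2, z9]; noncomm_ring
  have S3 : pi*a = c*a*pi := by
    refine sub_eq_zero.mp ?_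
    calc pi*a - c*a*pi
        = pi*(a*p - p*c*a)*pi - pi*a*(p*pi - 1) + (pi*p - 1)*(c*a*pi) := by noncomm_ring
      _ = 0 := by rw [z6, zp1, zp2]; noncomm_ring
  have S4 : b*pi = pi*(b*c) := by
    refine sub_eq_zero.mp ?_
    calc b*pi - pi*(b*c)
        = -((pi*p - 1)*(b*pi)) + pi*(p*b - b*c*p)*pi + pi*b*c*(p*pi - 1) := by noncomm_ring
      _ = 0 := by rw [z8, zp1, zp2]; noncomm_ring
  have S5 : q*c = pi + b^4*pi := by
    refine sub_eq_zero.mp ?_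
    calc q*c - (pi + b^4*pi)
        = (q*c*p - (1+b^4))*pi - q*c*(p*pi - 1) := by noncomm_ring
      _ = 0 := by rw [z4, zp1]; noncomm_ring
  have S6 : c*r = pi + pi*a^4 := by
    refine sub_eq_zero.mp ?_
    calc c*r - (pi + pi*a^4)
        = pi*(p*c*r - (1+a^4)) - (pi*p - 1)*(c*r) := by noncomm_ring
      _ = 0 := by rw [z5, zp2]; noncomm_ring
  have zS3 : pi*a - c*a*pi = 0 := sub_eq_zero.mpr S3
  have zS4 : b*pi - pi*(b*c) = 0 := sub_eq_zero.mpr S4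
  have S7 : pi*(a*a) = c*a*c*a*pi := by
    refine sub_eq_zero.mp ?_
    calc pi*(a*a) - c*a*c*a*pi
        = (pi*a - c*a*pi)*a + c*a*(pi*a - c*a*pi) := by noncomm_ring
      _ = 0 := by rw [zS3]; noncomm_ring
  have S8 : (b*b)*pi = pi*(b*c*b*c) := by
    refine sub_eq_zero.mp ?_
    calc (b*b)*pi - pi*(b*c*b*c)
        = b*(b*pi - pi*(b*c)) + (b*pi - pi*(b*c))*(b*c) := by noncomm_ring
      _ = 0 := by rw [zS4]; noncomm_ring
  have T4 : p*(a*a)*p + p*(1+b^4)*(c*a*c*a) + p*(b*(a*a*a))*p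
      = p*(b*b)*p + (b*c*b*c)*(1+a^4)*p + p*(b*b*b*a)*p := by
    refine sub_eq_zero.mp ?_
    calc p*(a*a)*p + p*(1+b^4)*(c*a*c*a) + p*(b*(a*a*a))*p
        - (p*(b*b)*p + (b*c*b*c)*(1+a^4)*p + p*(b*b*b*a)*p)
        =
      (p - (b*c*a - 1))*a*a*p
      + (p - (b*c*a - 1))*b*a*a*a*p
      - (p - (b*c*a - 1))*b*b
      - (p - (b*c*a - 1))*b*b*b*a*p
      + (p - (b*c*a - 1))*b*b*b*b*c*a*c*a
      - (p - (b*c*a - 1))*b*b*c*a*c*a*c*a*c*a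
      - (p - (b*c*a - 1))*b*b*p
      - (a*p - p*c*a)*c*a
      + (p*b - b*c*p)*b
      + (p*b - b*c*p)*b*c*a*c*a*c*a*c*a
      - a*(a*p - p*c*a)
      - b*(p - (b*c*a - 1))*c*a*c*a*c*a
      - b*(a*p - p*c*a)*c*a*c*a
      - b*a*(a*p - p*c*a)*c*a
      - b*a*a*(a*p - p*c*a)
      + b*b*(p - (b*c*a - 1))
      + b*b*b*(p - (b*c*a - 1))*c*a
      + b*b*b*(a*p - p*c*a)
      + b*c*(p - (b*c*a - 1))*b*c*a*c*a*c*a*c*a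
      + b*c*(p*b - b*c*p)
      + b*c*a*(p - (b*c*a - 1))*c*a*c*a
      + b*c*a*(a*p - p*c*a)*c*a
      + b*c*a*a*(a*p - p*c*a)
      + b*c*a*b*(p - (b*c*a - 1))*c*a*c*a*c*a
      + b*c*a*b*(a*p - p*c*a)*c*a*c*a
      + b*c*a*b*a*(a*p - p*c*a)*c*a
      + b*c*a*b*a*a*(a*p - p*c*a)
      - b*c*a*b*b*(p - (b*c*a - 1))
      - b*c*a*b*b*b*(p - (b*c*a - 1))*c*a
      - b*c*a*b*b*b*(a*p - p*c*a)
      - b*c*b*c*a*(p - (b*c*a - 1))*c*a*c*a*c*a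
      - b*c*b*c*a*(a*p - p*c*a)*c*a*c*a
      - b*c*b*c*a*a*(a*p - p*c*a)*c*a
      - b*c*b*c*a*a*a*(a*p - p*c*a) := by noncomm_ring
      _ = 0 := by rw [z0, z6, z8]; noncomm_ring
  have zT4 : (p*(a*a)*p + p*(1+b^4)*(c*a*c*a) + p*(b*(a*a*a))*p)
      - (p*(b*b)*p + (b*c*b*c)*(1+a^4)*p + p*(b*b*b*a)*p) = 0 := sub_eq_zero.mpr T4
  have T3 : (p*(a*a + (1+b^4)*(c*a*c*a)*pi + b*(a*a*a)))*p
      = (p*(b*b + pi*(b*c*b*c)*(1+a^4) + b*b*b*a))*p := by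
    refine sub_eq_zero.mp ?_
    calc (p*(a*a + (1+b^4)*(c*a*c*a)*pi + b*(a*a*a)))*p
        - (p*(b*b + pi*(b*c*b*c)*(1+a^4) + b*b*b*a))*p
        = ((p*(a*a)*p + p*(1+b^4)*(c*a*c*a) + p*(b*(a*a*a))*p)
            - (p*(b*b)*p + (b*c*b*c)*(1+a^4)*p + p*(b*b*b*a)*p))
          + p*((1+b^4)*(c*a*c*a))*(pi*p - 1)
          - (p*pi - 1)*((b*c*b*c)*(1+a^4)*p) := by noncomm_ring
      _ = 0 := by rw [zT4, zp1, zp2]; noncomm_ring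
  have T2 : a*a + (1+b^4)*(c*a*c*a)*pi + b*(a*a*a)
      = b*b + pi*(b*c*b*c)*(1+a^4) + b*b*b*a :=
    mul_left_cancel₀ hp0 (mul_right_cancel₀ hp0 T3)
  have zT2 : (a*a + (1+b^4)*(c*a*c*a)*pi + b*(a*a*a))
      - (b*b + pi*(b*c*b*c)*(1+a^4) + b*b*b*a) = 0 := sub_eq_zero.mpr T2
  have zS5 : q*c - (pi + b^4*pi) = 0 := sub_eq_zero.mpr S5
  have zS6 : c*r - (pi + pi*a^4) = 0 := sub_eq_zero.mpr S6
  have zS7 : pi*(a*a) - c*a*c*a*pi = 0 := sub_eq_zero.mpr S7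
  have zS8 : (b*b)*pi - pi*(b*c*b*c) = 0 := sub_eq_zero.mpr S8
  have T : a*a + q*c*(a*a) + b*(a*a*a) = b*b + (b*b)*(c*r) + (b*b*b)*a := by
    refine sub_eq_zero.mp ?_
    calc a*a + q*c*(a*a) + b*(a*a*a) - (b*b + (b*b)*(c*r) + (b*b*b)*a)
        = ((a*a + (1+b^4)*(c*a*c*a)*pi + b*(a*a*a))
            - (b*b + pi*(b*c*b*c)*(1+a^4) + b*b*b*a))
          + (q*c - (pi + b^4*pi))*(a*a)
          + (pi*(a*a) - c*a*c*a*pi) + b^4*(pi*(a*a) - c*a*c*a*pi)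
          - (b*b)*(c*r - (pi + pi*a^4))
          - ((b*b)*pi - pi*(b*c*b*c)) - ((b*b)*pi - pi*(b*c*b*c))*(a^4) := by noncomm_ring
      _ = 0 := by rw [zT2, zS5, zS6, zS7, zS8]; noncomm_ring
  have zT : (a*a + q*c*(a*a) + b*(a*a*a)) - (b*b + (b*b)*(c*r) + (b*b*b)*a) = 0 :=
    sub_eq_zero.mpr T
  have zS1 : b*(e*c) - (1 + q*c) = 0 := sub_eq_zero.mpr S1
  have zS2 : c*m*a - (1 + c*r) = 0 := sub_eq_zero.mpr S2
  have TT : (b*(e*c*a + a*a))*a = (b*(b*c*m + b*b))*a := by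
    refine sub_eq_zero.mp ?_
    calc (b*(e*c*a + a*a))*a - (b*(b*c*m + b*b))*a
        = ((a*a + q*c*(a*a) + b*(a*a*a)) - (b*b + (b*b)*(c*r) + (b*b*b)*a))
          + (b*(e*c) - (1 + q*c))*(a*a) - (b*b)*(c*m*a - (1 + c*r)) := by noncomm_ring
      _ = 0 := by rw [zT, zS1, zS2]; noncomm_ring
  exact mul_left_cancel₀ hb (mul_right_cancel₀ ha TT)

set_option maxHeartbeats 3200000 in
/-- Path model for the `(1,4)`-system in the `(X,Y)` initial data: with transfer matrix
`T' = !![y₁', 1; y₂', y₃']` on the barbell graph, `u_{n+1} = (T'^n)_{0,0} · Y`; moreover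
`y₃' = C u₀ u₁⁻¹`, `y₁' = K − y₃'`, `y₂' = y₃' y₁' − C`. -/
theorem onefour_path_model_XY {D : Type*} [DivisionRing D] (X Y : Dˣ) (R : ℤ → Dˣ)
    (C : Dˣ) (h : IsOneFourSolution R C)
    (hC : C = X * Y * X⁻¹ * Y⁻¹) (hR1 : R 1 = Y * X * Y⁻¹) (hR2 : R 2 = Y) :
    let y₁' : D := ((Y : D) ^ 3 + (1 + (X : D)) * ((Y⁻¹ : Dˣ) : D)) * ((X⁻¹ : Dˣ) : D) *
      ((Y⁻¹ : Dˣ) : D)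
    let y₂' : D := ((Y : D) + (1 + (X : D)) * ((Y⁻¹ : Dˣ) : D) ^ 2 * (1 + (X : D)) *
      ((Y⁻¹ : Dˣ) : D)) * ((X⁻¹ : Dˣ) : D) * ((Y⁻¹ : Dˣ) : D)
    let y₃' : D := (1 + (X : D)) * ((Y⁻¹ : Dˣ) : D) ^ 2
    let K : D := ((Y : D) ^ 2 + ((1 + (X : D)) * ((Y⁻¹ : Dˣ) : D)) ^ 2) * (Y : D) *
      ((X⁻¹ : Dˣ) : D) * ((Y⁻¹ : Dˣ) : D)
    (∀ n : ℕ,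
      (R (2 * ((n : ℤ) + 1)) : D) =
        ((!![y₁', 1; y₂', y₃'] : Matrix (Fin 2) (Fin 2) D) ^ n) 0 0 * (Y : D)) ∧
    y₃' = (C : D) * (R 0 : D) * (((R 2)⁻¹ : Dˣ) : D) ∧
    y₁' = K - y₃' ∧
    y₂' = y₃' * y₁' - (C : D) := by
  intro y₁' y₂' y₃' K
  obtain ⟨hh1, hh2, hh3⟩ := h
  set x : D := (X : D) with hxd
  set y : D := (Y : D) with hyd
  set xi : D := ((X⁻¹ : Dˣ) : D) with hxid
  set yi : D := ((Y⁻¹ : Dˣ) : D) with hyid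
  set cc : D := (C : D) with hccd
  have hy1d : y₁' = (y^3 + (1+x)*yi)*xi*yi := rfl
  have hy2d : y₂' = (y + (1+x)*yi^2*(1+x)*yi)*xi*yi := rfl
  have hy3d : y₃' = (1+x)*yi^2 := rfl
  have hKd : K = (y^2 + ((1+x)*yi)^2)*y*xi*yi := rfl
  -- unit relations
  have hxxi : x*xi - 1 = 0 := by rw [hxd, hxid]; rw [Units.mul_inv]; noncomm_ring
  have hxix : xi*x - 1 = 0 := by rw [hxd, hxid]; rw [Units.inv_mul]; noncomm_ring
  have hyyi : y*yi - 1 = 0 := by rw [hyd, hyid]; rw [Units.mul_inv]; noncomm_ring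
  have hyiy : yi*y - 1 = 0 := by rw [hyd, hyid]; rw [Units.inv_mul]; noncomm_ring
  have zcc : cc - x*y*xi*yi = 0 := by
    rw [hccd, hC, hxd, hyd, hxid, hyid]; push_cast; noncomm_ring
  have zR1 : (R 1 : D) - y*x*yi = 0 := by
    rw [hR1, hyd, hxd, hyid]; push_cast; noncomm_ring
  have zR2 : (R 2 : D) - y = 0 := by rw [hR2, hyd]; noncomm_ring
  have zR2i : (((R 2)⁻¹ : Dˣ) : D) - yi = 0 := by rw [hR2, hyid]; noncomm_ring
  -- commutation relation
  have hcomm : ∀ k : ℤ, (R (k+1) : D) * cc * (R k : D) = (R k : D) * (R (k+1) : D) := by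
    intro k
    have z : cc - (((R (k+1))⁻¹ : Dˣ) : D) * (R k : D) * (R (k+1) : D) * (((R k)⁻¹ : Dˣ) : D)
        = 0 := sub_eq_zero.mpr (hh1 k)
    have z1 : (R (k+1) : D) * (((R (k+1))⁻¹ : Dˣ) : D) - 1 = 0 :=
      sub_eq_zero.mpr (Units.mul_inv _)
    have z2 : (((R k)⁻¹ : Dˣ) : D) * (R k : D) - 1 = 0 := sub_eq_zero.mpr (Units.inv_mul _)
    refine sub_eq_zero.mp ?_
    calc (R (k+1) : D) * cc * (R k : D) - (R k : D) * (R (k+1) : D)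
        = (R (k+1) : D) * (cc - (((R (k+1))⁻¹ : Dˣ) : D) * (R k : D) * (R (k+1) : D) *
            (((R k)⁻¹ : Dˣ) : D)) * (R k : D)
          + ((R (k+1) : D) * (((R (k+1))⁻¹ : Dˣ) : D) - 1) *
            ((R k : D) * (R (k+1) : D) * (((R k)⁻¹ : Dˣ) : D) * (R k : D))
          + ((R k : D) * (R (k+1) : D)) * ((((R k)⁻¹ : Dˣ) : D) * (R k : D) - 1) := by
            noncomm_ring
      _ = 0 := by rw [z, z1, z2]; noncomm_ring
  -- index-shifted system relations
  have L1 : ∀ k : ℤ, (R (2*k+2) : D) * cc * (R (2*k) : D) = 1 + (R (2*k+1) : D) := by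
    intro k
    have e := hh2 (k+1)
    rw [show 2*(k+1)-2 = 2*k by ring, show 2*(k+1)-1 = 2*k+1 by ring,
        show 2*(k+1) = 2*k+2 by ring] at e
    exact e
  have L2 : ∀ k : ℤ, (R (2*k+3) : D) * cc * (R (2*k+1) : D) = 1 + (R (2*k+2) : D)^4 := by
    intro k
    have e := hh3 (k+1)
    rw [show 2*(k+1)-1 = 2*k+1 by ring, show 2*(k+1)+1 = 2*k+3 by ring,
        show 2*(k+1) = 2*k+2 by ring] at e
    exact e
  have L1' : ∀ k : ℤ, (R (2*k+4) : D) * cc * (R (2*k+2) : D) = 1 + (R (2*k+3) : D) := by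
    intro k
    have e := L1 (k+1)
    rw [show 2*(k+1)+2 = 2*k+4 by ring, show 2*(k+1)+1 = 2*k+3 by ring,
        show 2*(k+1) = 2*k+2 by ring] at e
    exact e
  have L1'' : ∀ k : ℤ, (R (2*k) : D) * cc * (R (2*k-2) : D) = 1 + (R (2*k-1) : D) := by
    intro k
    have e := L1 (k-1)
    rw [show 2*(k-1)+2 = 2*k by ring, show 2*(k-1)+1 = 2*k-1 by ring,
        show 2*(k-1) = 2*k-2 by ring] at e
    exact e
  have L2'' : ∀ k : ℤ, (R (2*k+1) : D) * cc * (R (2*k-1) : D) = 1 + (R (2*k) : D)^4 := by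
    intro k
    have e := L2 (k-1)
    rw [show 2*(k-1)+3 = 2*k+1 by ring, show 2*(k-1)+1 = 2*k-1 by ring,
        show 2*(k-1)+2 = 2*k by ring] at e
    exact e
  have c6 : ∀ k : ℤ, (R (2*k) : D) * (R (2*k+1) : D) = (R (2*k+1) : D) * cc * (R (2*k) : D) :=
    fun k => (hcomm (2*k)).symm
  have c8 : ∀ k : ℤ, (R (2*k+1) : D) * (R (2*k+2) : D)
      = (R (2*k+2) : D) * cc * (R (2*k+1) : D) := by
    intro k
    have e := (hcomm (2*k+1)).symm
    rw [show 2*k+1+1 = 2*k+2 by ring] at e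
    exact e
  have c7 : ∀ k : ℤ, (R (2*k+2) : D) * (R (2*k+3) : D)
      = (R (2*k+3) : D) * cc * (R (2*k+2) : D) := by
    intro k
    have e := (hcomm (2*k+2)).symm
    rw [show 2*k+2+1 = 2*k+3 by ring] at e
    exact e
  have c9 : ∀ k : ℤ, (R (2*k-1) : D) * (R (2*k) : D)
      = (R (2*k) : D) * cc * (R (2*k-1) : D) := by
    intro k
    have e := (hcomm (2*k-1)).symm
    rw [show 2*k-1+1 = 2*k by ring] at e
    exact e
  have Hlem : ∀ k : ℤ, (R (2*k+4) : D) * cc * (R (2*k) : D) * (R (2*k+2) : D)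
      = (R (2*k+2) : D)^3 + (R (2*k+4) : D) + cc * (R (2*k) : D) :=
    fun k => lemH (R (2*k) : D) (R (2*k+2) : D) cc (R (2*k+4) : D) (R (2*k+1) : D)
      (R (2*k+3) : D) (Units.ne_zero _) (L1 k) (L1' k) (L2 k) (c8 k) (c7 k)
  have Alem : ∀ k : ℤ, (R (2*k+4) : D) * cc * (R (2*k) : D) + (R (2*k) : D) * (R (2*k) : D)
      = (R (2*k+2) : D) * cc * (R (2*k-2) : D) + (R (2*k+2) : D) * (R (2*k+2) : D) :=
    fun k => lemA (R (2*k-2) : D) (R (2*k) : D) (R (2*k+2) : D) cc (R (2*k+4) : D)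
      (R (2*k+1) : D) (R (2*k+3) : D) (R (2*k-1) : D) (((R (2*k+1))⁻¹ : Dˣ) : D)
      (Units.ne_zero _) (Units.ne_zero _) (Units.ne_zero _)
      (Units.mul_inv _) (Units.inv_mul _)
      (L1 k) (L1'' k) (L1' k) (L2 k) (L2'' k) (c6 k) (c8 k) (c7 k) (c9 k)
  -- small-index data
  have L10 : (R 2 : D) * cc * (R 0 : D) = 1 + (R 1 : D) := by
    have e := L1 0; norm_num at e; exact e
  have hCR0 : cc * (R 0 : D) = (1+x)*yi := by
    refine mul_left_cancel₀ (Units.ne_zero Y) ?_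
    have zL10 : (R 2 : D) * cc * (R 0 : D) - (1 + (R 1 : D)) = 0 := sub_eq_zero.mpr L10
    refine sub_eq_zero.mp ?_
    calc (Y:D) * (cc * (R 0 : D)) - (Y:D) * ((1+x)*yi)
        = ((R 2 : D) * cc * (R 0 : D) - (1 + (R 1 : D)))
          + ((R 1 : D) - y*x*yi)
          - ((R 2 : D) - y) * (cc * (R 0 : D))
          - (y*yi - 1) + ((Y:D) - y) * (cc * (R 0 : D) - (1+x)*yi) := by
            rw [hyd]; noncomm_ring
      _ = 0 := by rw [zL10, zR1, zR2, hyyi, hyd]; noncomm_ring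
  have zCR0 : cc * (R 0 : D) - (1+x)*yi = 0 := sub_eq_zero.mpr hCR0
  have L20 : (R 3 : D) * cc * (R 1 : D) = 1 + (R 2 : D)^4 := by
    have e := L2 0; norm_num at e; exact e
  have hCR1 : cc * (R 1 : D) = x := by
    refine sub_eq_zero.mp ?_
    calc cc * (R 1 : D) - x
        = cc*((R 1 : D) - y*x*yi) + (cc - x*y*xi*yi)*(y*x*yi)
          + x*y*xi*(yi*y - 1)*(x*yi) + x*y*(xi*x - 1)*yi + x*(y*yi - 1) := by noncomm_ring
      _ = 0 := by rw [zR1, zcc, hyiy, hxix, hyyi]; noncomm_ring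
  have zCR1 : cc * (R 1 : D) - x = 0 := sub_eq_zero.mpr hCR1
  have zR3 : (R 3 : D) - (1+y^4)*xi = 0 := by
    have zL20 : (R 3 : D) * cc * (R 1 : D) - (1 + (R 2 : D)^4) = 0 := sub_eq_zero.mpr L20
    calc (R 3 : D) - (1+y^4)*xi
        = ((R 3 : D) * cc * (R 1 : D) - (1 + (R 2 : D)^4))*xi
          - (R 3 : D)*(cc * (R 1 : D) - x)*xi
          - (R 3 : D)*(x*xi - 1)
          + ((R 2 : D)^3*((R 2 : D) - y) + (R 2 : D)^2*((R 2 : D) - y)*y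
             + (R 2 : D)*((R 2 : D) - y)*y^2 + ((R 2 : D) - y)*y^3)*xi := by noncomm_ring
      _ = 0 := by rw [zL20, zCR1, hxxi, zR2]; noncomm_ring
  have L11 : (R 4 : D) * cc * (R 2 : D) = 1 + (R 3 : D) := by
    have e := L1 1; norm_num at e; exact e
  have zCR2 : cc * (R 2 : D) - x*y*xi = 0 := by
    calc cc * (R 2 : D) - x*y*xi
        = cc*((R 2 : D) - y) + (cc - x*y*xi*yi)*y + x*y*xi*(yi*y - 1) := by noncomm_ring
      _ = 0 := by rw [zR2, zcc, hyiy]; noncomm_ring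
  have zR4 : (R 4 : D) - (x+1+y^4)*yi*xi = 0 := by
    have zL11 : (R 4 : D) * cc * (R 2 : D) - (1 + (R 3 : D)) = 0 := sub_eq_zero.mpr L11
    calc (R 4 : D) - (x+1+y^4)*yi*xi
        = ((R 4 : D) * cc * (R 2 : D) - (1 + (R 3 : D)))*(x*yi*xi)
          - (R 4 : D)*(cc * (R 2 : D) - x*y*xi)*(x*yi*xi)
          - ((R 4 : D)*x*y*(xi*x - 1)*(yi*xi) + (R 4 : D)*x*(y*yi - 1)*xi
             + (R 4 : D)*(x*xi - 1))
          + ((R 3 : D) - (1+y^4)*xi)*(x*yi*xi)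
          + (1+y^4)*(xi*x - 1)*(yi*xi) := by noncomm_ring
      _ = 0 := by rw [zL11, zCR2, hxix, hyyi, hxxi, zR3]; noncomm_ring
  -- conserved quantity recursion
  have Q : ∀ n : ℕ, (R (2*(n:ℤ)+4) : D) * cc * (R (2*(n:ℤ)) : D)
      = (R (2*(n:ℤ)+2) : D) * (R (2*(n:ℤ)+2) : D) + K := by
    intro n
    induction n with
    | zero =>
      norm_num
      refine sub_eq_zero.mp ?_
      calc (R 4 : D) * cc * (R 0 : D) - ((R 2 : D) * (R 2 : D) + K)
          = (R 4 : D)*(cc * (R 0 : D) - (1+x)*yi)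
            + ((R 4 : D) - (x+1+y^4)*yi*xi)*((1+x)*yi)
            + (x+1+y^4)*yi*(xi*x - 1)*yi
            + y^3*(y*yi - 1)*(xi*yi)
            + y^2*(y*yi - 1)
            - (1+x)*yi*(1+x)*(yi*y - 1)*(xi*yi)
            - (1+x)*yi*(x*xi - 1)*yi
            + y^3*(y*yi - 1)*yi
            - (R 2 : D)*((R 2 : D) - y)
            - ((R 2 : D) - y)*y
            - (K - (y^2 + ((1+x)*yi)^2)*y*xi*yi) := by rw [hKd]; noncomm_ring
        _ = 0 := by
            rw [zCR0, zR4, hxix, hyyi, hyiy, hxxi, zR2, show K - (y^2 + ((1+x)*yi)^2)*y*xi*yi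
              = 0 from by rw [hKd]; noncomm_ring]
            noncomm_ring
    | succ k ih =>
      have e := Alem ((k:ℤ)+1)
      rw [show 2*((k:ℤ)+1)+4 = 2*(k:ℤ)+6 by ring, show 2*((k:ℤ)+1)+2 = 2*(k:ℤ)+4 by ring,
          show 2*((k:ℤ)+1)-2 = 2*(k:ℤ) by ring, show 2*((k:ℤ)+1) = 2*(k:ℤ)+2 by ring] at e
      have ze : ((R (2*(k:ℤ)+6) : D) * cc * (R (2*(k:ℤ)+2) : D)
          + (R (2*(k:ℤ)+2) : D) * (R (2*(k:ℤ)+2) : D))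
          - ((R (2*(k:ℤ)+4) : D) * cc * (R (2*(k:ℤ) ) : D)
            + (R (2*(k:ℤ)+4) : D) * (R (2*(k:ℤ)+4) : D)) = 0 := sub_eq_zero.mpr e
      have zih : (R (2*(k:ℤ)+4) : D) * cc * (R (2*(k:ℤ)) : D)
          - ((R (2*(k:ℤ)+2) : D) * (R (2*(k:ℤ)+2) : D) + K) = 0 := sub_eq_zero.mpr ih
      push_cast
      rw [show 2*((k:ℤ)+1)+4 = 2*(k:ℤ)+6 by ring, show 2*((k:ℤ)+1)+2 = 2*(k:ℤ)+4 by ring,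
          show 2*((k:ℤ)+1) = 2*(k:ℤ)+2 by ring]
      refine sub_eq_zero.mp ?_
      calc (R (2*(k:ℤ)+6) : D) * cc * (R (2*(k:ℤ)+2) : D)
            - ((R (2*(k:ℤ)+4) : D) * (R (2*(k:ℤ)+4) : D) + K)
          = (((R (2*(k:ℤ)+6) : D) * cc * (R (2*(k:ℤ)+2) : D)
              + (R (2*(k:ℤ)+2) : D) * (R (2*(k:ℤ)+2) : D))
              - ((R (2*(k:ℤ)+4) : D) * cc * (R (2*(k:ℤ)) : D)
                + (R (2*(k:ℤ)+4) : D) * (R (2*(k:ℤ)+4) : D)))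
            + ((R (2*(k:ℤ)+4) : D) * cc * (R (2*(k:ℤ)) : D)
              - ((R (2*(k:ℤ)+2) : D) * (R (2*(k:ℤ)+2) : D) + K)) := by noncomm_ring
        _ = 0 := by rw [ze, zih]; simp
  have Krec : ∀ n : ℕ, K * (R (2*(n:ℤ)+2) : D)
      = (R (2*(n:ℤ)+4) : D) + cc * (R (2*(n:ℤ)) : D) := by
    intro n
    have zH : (R (2*(n:ℤ)+4) : D) * cc * (R (2*(n:ℤ)) : D) * (R (2*(n:ℤ)+2) : D)
        - ((R (2*(n:ℤ)+2) : D)^3 + (R (2*(n:ℤ)+4) : D) + cc * (R (2*(n:ℤ)) : D)) = 0 :=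
      sub_eq_zero.mpr (Hlem (n:ℤ))
    have zQ : (R (2*(n:ℤ)+4) : D) * cc * (R (2*(n:ℤ)) : D)
        - ((R (2*(n:ℤ)+2) : D) * (R (2*(n:ℤ)+2) : D) + K) = 0 := sub_eq_zero.mpr (Q n)
    refine sub_eq_zero.mp ?_
    calc K * (R (2*(n:ℤ)+2) : D) - ((R (2*(n:ℤ)+4) : D) + cc * (R (2*(n:ℤ)) : D))
        = ((R (2*(n:ℤ)+4) : D) * cc * (R (2*(n:ℤ)) : D) * (R (2*(n:ℤ)+2) : D)
            - ((R (2*(n:ℤ)+2) : D)^3 + (R (2*(n:ℤ)+4) : D) + cc * (R (2*(n:ℤ)) : D)))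
          - ((R (2*(n:ℤ)+4) : D) * cc * (R (2*(n:ℤ)) : D)
            - ((R (2*(n:ℤ)+2) : D) * (R (2*(n:ℤ)+2) : D) + K)) * (R (2*(n:ℤ)+2) : D) := by
            noncomm_ring
      _ = 0 := by rw [zH, zQ]; noncomm_ring
  -- the three y-identities
  have zy1 : y₁' - (y^3 + (1+x)*yi)*xi*yi = 0 := by rw [hy1d]; noncomm_ring
  have zy2 : y₂' - (y + (1+x)*yi^2*(1+x)*yi)*xi*yi = 0 := by rw [hy2d]; noncomm_ring
  have zy3 : y₃' - (1+x)*yi^2 = 0 := by rw [hy3d]; noncomm_ring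
  have zK : K - (y^2 + ((1+x)*yi)^2)*y*xi*yi = 0 := by rw [hKd]; noncomm_ring
  have idY1 : y₁' = K - y₃' := by
    refine sub_eq_zero.mp ?_
    calc y₁' - (K - y₃')
        = (y₁' - (y^3 + (1+x)*yi)*xi*yi)
          - (K - (y^2 + ((1+x)*yi)^2)*y*xi*yi)
          + (y₃' - (1+x)*yi^2)
          - (1+x)*yi*(1+x)*(yi*y - 1)*(xi*yi)
          - (1+x)*yi*(x*xi - 1)*yi := by noncomm_ring
      _ = 0 := by rw [zy1, zK, zy3, hyiy, hxxi]; noncomm_ring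
  have idY2 : y₂' = y₃' * y₁' - cc := by
    refine sub_eq_zero.mp ?_
    calc y₂' - (y₃' * y₁' - cc)
        = (y₂' - (y + (1+x)*yi^2*(1+x)*yi)*xi*yi)
          - (y₃' - (1+x)*yi^2)*y₁'
          - (1+x)*yi^2*(y₁' - (y^3 + (1+x)*yi)*xi*yi)
          - (1+x)*(yi*(yi*y - 1)*y^2 + (yi*y - 1)*y)*(xi*yi)
          + (cc - x*y*xi*yi) := by noncomm_ring
      _ = 0 := by rw [zy2, zy3, zy1, hyiy, zcc]; noncomm_ring
  have y3conj : y₃' = cc * (R 0 : D) * (((R 2)⁻¹ : Dˣ) : D) := by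
    refine sub_eq_zero.mp ?_
    calc y₃' - cc * (R 0 : D) * (((R 2)⁻¹ : Dˣ) : D)
        = (y₃' - (1+x)*yi^2)
          - (cc * (R 0 : D) - (1+x)*yi)*(((R 2)⁻¹ : Dˣ) : D)
          - (1+x)*yi*((((R 2)⁻¹ : Dˣ) : D) - yi) := by noncomm_ring
      _ = 0 := by rw [zy3, zCR0, zR2i]; noncomm_ring
  -- matrix part
  set T : Matrix (Fin 2) (Fin 2) D := !![y₁', 1; y₂', y₃'] with hT
  have hT00 : T 0 0 = y₁' := rfl
  have hT01 : T 0 1 = 1 := rfl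
  have hT10 : T 1 0 = y₂' := rfl
  have hT11 : T 1 1 = y₃' := rfl
  have hstep00 : ∀ n : ℕ, (T^(n+1)) 0 0 = y₁' * ((T^n) 0 0) + ((T^n) 1 0) := by
    intro n
    rw [pow_succ', Matrix.mul_apply, Fin.sum_univ_two, hT00, hT01, one_mul]
  have hstep10 : ∀ n : ℕ, (T^(n+1)) 1 0 = y₂' * ((T^n) 0 0) + y₃' * ((T^n) 1 0) := by
    intro n
    rw [pow_succ', Matrix.mul_apply, Fin.sum_univ_two, hT10, hT11]
  have main : ∀ n : ℕ, ((T^n) 0 0) * y = (R (2*(n:ℤ)+2) : D) ∧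
      ((T^n) 1 0) * y = y₃' * (R (2*(n:ℤ)+2) : D) - cc * (R (2*(n:ℤ)) : D) := by
    intro n
    induction n with
    | zero =>
      constructor
      · have h1' : (T^(0:ℕ)) 0 0 = 1 := by rw [pow_zero]; exact Matrix.one_apply_eq 0
        rw [h1', one_mul]
        norm_num
        exact (sub_eq_zero.mp (by rw [zR2] : (R 2 : D) - y = 0)).symm
      · have h0' : (T^(0:ℕ)) 1 0 = 0 := by
          rw [pow_zero]; exact Matrix.one_apply_ne (by decide)
        rw [h0', zero_mul]
        norm_num
        refine Eq.symm ?_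
        calc y₃' * (R 2 : D) - cc * (R 0 : D)
            = (y₃' - (1+x)*yi^2)*(R 2 : D) + (1+x)*yi^2*((R 2 : D) - y)
              + (1+x)*yi*(yi*y - 1) - (cc * (R 0 : D) - (1+x)*yi) := by noncomm_ring
          _ = 0 := by rw [zy3, zR2, hyiy, zCR0]; noncomm_ring
    | succ k ih =>
      obtain ⟨ih1, ih2⟩ := ih
      have zih1 : ((T^k) 0 0) * y - (R (2*(k:ℤ)+2) : D) = 0 := sub_eq_zero.mpr ih1
      have zih2 : ((T^k) 1 0) * y
          - (y₃' * (R (2*(k:ℤ)+2) : D) - cc * (R (2*(k:ℤ)) : D)) = 0 := sub_eq_zero.mpr ih2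
      have zY1 : y₁' - (K - y₃') = 0 := sub_eq_zero.mpr idY1
      have zY2 : y₂' - (y₃' * y₁' - cc) = 0 := sub_eq_zero.mpr idY2
      have zKr : K * (R (2*(k:ℤ)+2) : D)
          - ((R (2*(k:ℤ)+4) : D) + cc * (R (2*(k:ℤ)) : D)) = 0 := sub_eq_zero.mpr (Krec k)
      constructor
      · push_cast
        rw [show 2*((k:ℤ)+1)+2 = 2*(k:ℤ)+4 by ring, hstep00 k]
        refine sub_eq_zero.mp ?_
        calc (y₁' * ((T^k) 0 0) + ((T^k) 1 0)) * y - (R (2*(k:ℤ)+4) : D)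
            = y₁' * (((T^k) 0 0) * y - (R (2*(k:ℤ)+2) : D))
              + (((T^k) 1 0) * y - (y₃' * (R (2*(k:ℤ)+2) : D) - cc * (R (2*(k:ℤ)) : D)))
              + (y₁' - (K - y₃')) * (R (2*(k:ℤ)+2) : D)
              + (K * (R (2*(k:ℤ)+2) : D)
                - ((R (2*(k:ℤ)+4) : D) + cc * (R (2*(k:ℤ)) : D))) := by noncomm_ring
          _ = 0 := by rw [zih1, zih2, zY1, zKr]; noncomm_ring
      · push_cast
        rw [show 2*((k:ℤ)+1)+2 = 2*(k:ℤ)+4 by ring, show 2*((k:ℤ)+1) = 2*(k:ℤ)+2 by ring,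
            hstep10 k]
        refine sub_eq_zero.mp ?_
        calc (y₂' * ((T^k) 0 0) + y₃' * ((T^k) 1 0)) * y
              - (y₃' * (R (2*(k:ℤ)+4) : D) - cc * (R (2*(k:ℤ)+2) : D))
            = y₂' * (((T^k) 0 0) * y - (R (2*(k:ℤ)+2) : D))
              + y₃' * (((T^k) 1 0) * y
                - (y₃' * (R (2*(k:ℤ)+2) : D) - cc * (R (2*(k:ℤ)) : D)))
              + (y₂' - (y₃' * y₁' - cc)) * (R (2*(k:ℤ)+2) : D)
              + (y₃' * (y₁' - (K - y₃'))) * (R (2*(k:ℤ)+2) : D)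
              + y₃' * (K * (R (2*(k:ℤ)+2) : D)
                - ((R (2*(k:ℤ)+4) : D) + cc * (R (2*(k:ℤ)) : D))) := by noncomm_ring
          _ = 0 := by rw [zih1, zih2, zY2, zY1, zKr]; noncomm_ring
  refine ⟨?_, y3conj, idY1, idY2⟩
  intro n
  have e := (main n).1
  rw [show 2*((n:ℤ)+1) = 2*(n:ℤ)+2 by ring]
  exact e.symm
end
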